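/- arXiv:1906.03342 — 8 statements merged into one kernel-verified Lean document; each statement's English description precedes it below -/
import Mathlib

section
/- It is impossible for all three of b - a, b' - a, and b - a' to be powers of 2 when a, a', b', b are integers with a < a' < b' < b, b - a = (b - a') + (a' - a), and specifically: if a < a' < b' < b are integers, then b - a, b' - a, and b - a' cannot all be powers of 2. -/
/-- A power of 2: an integer of the form 2^t with t ≥ 0. -/
def IsPow2Z (m : ℤ) : Prop := ∃ t : ℕ, m = 2 ^ t

/-! Two powers of 2 below a third one are each at most half of it, so their sum is at most
that power of 2. But `(b' - a) + (b - a') = (b - a) + (b' - a')` exceeds `b - a`. -/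

namespace IsPow2Z

theorem two_mul_le_of_lt {x z : ℤ} (hx : IsPow2Z x) (hz : IsPow2Z z) (hxz : x < z) :
    2 * x ≤ z := by
  obtain ⟨u, rfl⟩ := hx
  obtain ⟨t, rfl⟩ := hz
  have hut : u < t := (pow_lt_pow_iff_right₀ one_lt_two).mp hxz
  calc 2 * 2 ^ u = (2 : ℤ) ^ (u + 1) := (pow_succ' 2 u).symm
    _ ≤ 2 ^ t := pow_le_pow_right₀ one_le_two hut

theorem add_le_of_lt {x y z : ℤ} (hx : IsPow2Z x) (hy : IsPow2Z y) (hz : IsPow2Z z)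
    (hxz : x < z) (hyz : y < z) : x + y ≤ z := by
  linarith [hx.two_mul_le_of_lt hz hxz, hy.two_mul_le_of_lt hz hyz]

end IsPow2Z

/-- If a < a' < b' < b are integers, then b - a, b' - a, and b - a'
cannot all be powers of 2. -/
theorem no_three_pow2_differences (a a' b' b : ℤ)
    (h1 : a < a') (h2 : a' < b') (h3 : b' < b) :
    ¬ (IsPow2Z (b - a) ∧ IsPow2Z (b' - a) ∧ IsPow2Z (b - a')) := by
  rintro ⟨hba, hb'a, hba'⟩
  have := hb'a.add_le_of_lt hba' hba (by linarith) (by linarith)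
  linarith
end

section
/- Let n₁, n₂ be positive integers and let H be the bipartite graph with parts A = {1, …, n₁} and B = {n₁+1, …, n₁+n₂}, where i ∈ A and j ∈ B are adjacent if and only if j - i is a power of 2. Then for every A' ⊆ A and B' ⊆ B, the number of edges of H between A' and B' is at most 2(|A'| + |B'|). -/
/-!
Charge an edge `(i, j)`, `d = j - i`, to `j` if `d < 2 (j - n₁)` and to `i` otherwise. Since
`i ≤ n₁ < j`, in the first case `d ∈ [j - n₁, 2 (j - n₁))` and in the second
`d ∈ (n₁ - i, 2 (n₁ - i)]`. Either window contains at most one power of 2, so each vertex is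
charged at most once and there are even at most `|A'| + |B'|` edges.
-/

lemma eq_of_two_pow_lt_two_mul_two_pow {s t : ℕ} (hst : 2 ^ s < 2 * 2 ^ t)
    (hts : 2 ^ t < 2 * 2 ^ s) : s = t := by
  rw [← pow_succ'] at hst hts
  have := (Nat.pow_lt_pow_iff_right one_lt_two).mp hst
  have := (Nat.pow_lt_pow_iff_right one_lt_two).mp hts
  omega

def edgeCharge (n : ℕ) (p : ℕ × ℕ) : ℕ ⊕ ℕ :=
  if p.2 - p.1 < 2 * (p.2 - n) then .inr p.2 else .inl p.1

lemma edgeCharge_injOn (n : ℕ) :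
    Set.InjOn (edgeCharge n) {p | p.1 ≤ n ∧ n < p.2 ∧ ∃ t, p.2 - p.1 = 2 ^ t} := by
  rintro ⟨i, j⟩ ⟨hi, hj, s, hs⟩ ⟨i', j'⟩ ⟨hi', hj', t, ht⟩ hcharge
  dsimp only at *
  unfold edgeCharge at hcharge
  split_ifs at hcharge <;>
    simp only [Sum.inl.injEq, Sum.inr.injEq] at hcharge <;> subst hcharge
  · obtain rfl : s = t := eq_of_two_pow_lt_two_mul_two_pow (by omega) (by omega)
    simp only [Prod.mk.injEq, and_true]
    omega
  · obtain rfl : s = t := eq_of_two_pow_lt_two_mul_two_pow (by omega) (by omega)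
    simp only [Prod.mk.injEq, true_and]
    omega

open Classical in
lemma card_filter_two_pow_sub_le {n : ℕ} {A B : Finset ℕ} (hA : ∀ i ∈ A, i ≤ n)
    (hB : ∀ j ∈ B, n < j) :
    ((A ×ˢ B).filter (fun p => ∃ t : ℕ, p.2 - p.1 = 2 ^ t)).card ≤ A.card + B.card := by
  rw [← Finset.card_disjSum]
  refine Finset.card_le_card_of_injOn (edgeCharge n) ?_ ?_
  · intro p hp
    simp only [Finset.coe_filter, Finset.mem_product, Set.mem_ofPred_eq] at hp
    unfold edgeCharge
    split_ifs <;> simp [hp.1.1, hp.1.2]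
  · refine (edgeCharge_injOn n).mono ?_
    intro p hp
    simp only [Finset.coe_filter, Finset.mem_product, Set.mem_ofPred_eq] at hp
    exact ⟨hA _ hp.1.1, hB _ hp.1.2, hp.2⟩

open Classical in
theorem pow2_bipartite_sparse_general (n₁ n₂ : ℕ)
    (A' B' : Finset ℕ) (hA : A' ⊆ Finset.Icc 1 n₁)
    (hB : B' ⊆ Finset.Icc (n₁ + 1) (n₁ + n₂)) :
    ((A' ×ˢ B').filter (fun p => ∃ t : ℕ, p.2 - p.1 = 2 ^ t)).card
      ≤ 2 * (A'.card + B'.card) := by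
  have hle := card_filter_two_pow_sub_le (n := n₁) (A := A') (B := B')
    (fun i hi => (Finset.mem_Icc.mp (hA hi)).2)
    (fun j hj => (Finset.mem_Icc.mp (hB hj)).1)
  exact hle.trans (Nat.le_mul_of_pos_left _ two_pos)

open Classical in
/-- In the bipartite graph with parts A = {1,…,n₁}, B = {n₁+1,…,n₁+n₂}, where
i ∈ A is adjacent to j ∈ B iff j - i is a power of 2, every pair of subsets
A' ⊆ A, B' ⊆ B spans at most 2(|A'| + |B'|) edges. -/
theorem pow2_bipartite_sparse (n₁ n₂ : ℕ) (hn₁ : 0 < n₁) (hn₂ : 0 < n₂)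
    (A' B' : Finset ℕ) (hA : A' ⊆ Finset.Icc 1 n₁)
    (hB : B' ⊆ Finset.Icc (n₁ + 1) (n₁ + n₂)) :
    ((A' ×ˢ B').filter (fun p => ∃ t : ℕ, p.2 - p.1 = 2 ^ t)).card
      ≤ 2 * (A'.card + B'.card) :=
  pow2_bipartite_sparse_general n₁ n₂ A' B' hA hB
end

section
/- Let 2 ≤ k ≤ r ≤ n be integers. Every ordered r-graph H on vertex set [n] is the union of edge-disjoint ordered r-graphs H_i for 0 ≤ i ≤ ⌊log₂ n⌋, such that each H_i is a union of at most (1/(k-1)!)·(Σ_{j=k}^{r} C(2k-2, j))·2^{i(k-1)} interval k-partite r-graphs whose parts each have size at most ⌈n/2^i⌉. -/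
/-- An interval in ℕ: a set of consecutive integers. -/
def IsIntervalN (I : Finset ℕ) : Prop := ∃ a b : ℕ, I = Finset.Icc a b

/-- Every element of `I` is smaller than every element of `J`. -/
def Precedes (I J : Finset ℕ) : Prop := ∀ x ∈ I, ∀ y ∈ J, x < y

/-- An ordered hypergraph `H` is interval k-partite with parts of size at most `m`:
there are ℓ ≥ k disjoint intervals I₀ < I₁ < ⋯ < I_{ℓ-1}, each of size at most `m`,
such that every edge of `H` is contained in their union and intersects each of them. -/
def IntervalKPartiteB (k m : ℕ) (H : Finset (Finset ℕ)) : Prop :=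
  ∃ ℓ, k ≤ ℓ ∧ ∃ I : ℕ → Finset ℕ,
    (∀ j < ℓ, IsIntervalN (I j)) ∧
    (∀ j < ℓ, (I j).card ≤ m) ∧
    (∀ j j', j < j' → j' < ℓ → Precedes (I j) (I j')) ∧
    ∀ e ∈ H, (∀ x ∈ e, ∃ j < ℓ, x ∈ I j) ∧ (∀ j < ℓ, (e ∩ I j).Nonempty)

/-- An ordered hypergraph `H` is interval k-partite: there are ℓ ≥ k disjoint
intervals I₀ < I₁ < ⋯ < I_{ℓ-1} such that every edge of `H` is contained in
their union and intersects each of them. -/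
def IntervalKPartite (k : ℕ) (H : Finset (Finset ℕ)) : Prop :=
  ∃ ℓ, k ≤ ℓ ∧ ∃ I : ℕ → Finset ℕ,
    (∀ j < ℓ, IsIntervalN (I j)) ∧
    (∀ j j', j < j' → j' < ℓ → Precedes (I j) (I j')) ∧
    ∀ e ∈ H, (∀ x ∈ e, ∃ j < ℓ, x ∈ I j) ∧ (∀ j < ℓ, (e ∩ I j).Nonempty)

/-- An ordered hypergraph `H` is interval r-partite in the exact sense: there are
intervals I₀ < I₁ < ⋯ < I_{r-1} such that every edge of `H` has exactly one
vertex in each of them (and is contained in their union). -/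
def IntervalPartiteExact (r : ℕ) (H : Finset (Finset ℕ)) : Prop :=
  ∃ I : ℕ → Finset ℕ,
    (∀ j < r, IsIntervalN (I j)) ∧
    (∀ j j', j < j' → j' < r → Precedes (I j) (I j')) ∧
    ∀ e ∈ H, (∀ x ∈ e, ∃ j < r, x ∈ I j) ∧ (∀ j < r, (e ∩ I j).card = 1)


namespace SplitAux

/-- left endpoint of dyadic block `s` at level `i` -/
def bl (n i s : ℕ) : ℕ := s * n / 2 ^ i

/-- dyadic block `s` at level `i` -/
def Bk (n i s : ℕ) : Finset ℕ := Finset.Icc (bl n i s + 1) (bl n i (s + 1))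

/-- the set of blocks at level `i` met by `e` -/
def Se (n i : ℕ) (e : Finset ℕ) : Finset ℕ :=
  (Finset.range (2 ^ i)).filter fun s => (e ∩ Bk n i s).Nonempty

lemma bl_mono (n i : ℕ) {s s' : ℕ} (h : s ≤ s') : bl n i s ≤ bl n i s' :=
  Nat.div_le_div_right (Nat.mul_le_mul_right n h)

lemma bl_zero (n i : ℕ) : bl n i 0 = 0 := by simp [bl]

lemma bl_top (n i : ℕ) : bl n i (2 ^ i) = n := by
  simp [bl, Nat.mul_div_cancel_left n (Nat.two_pow_pos i : 0 < 2 ^ i)]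

lemma bl_double (n i s : ℕ) : bl n (i + 1) (2 * s) = bl n i s := by
  unfold bl
  rw [pow_succ, Nat.mul_comm (2 ^ i) 2, Nat.mul_assoc, Nat.mul_div_mul_left _ _ (by norm_num)]

lemma Bk_subset_parent (n i t : ℕ) : Bk n (i + 1) t ⊆ Bk n i (t / 2) := by
  apply Finset.Icc_subset_Icc
  · have h1 : bl n i (t / 2) = bl n (i + 1) (2 * (t / 2)) := (bl_double n i (t / 2)).symm
    have := bl_mono n (i + 1) (show 2 * (t / 2) ≤ t by omega)
    omega
  · have h1 : bl n i (t / 2 + 1) = bl n (i + 1) (2 * (t / 2 + 1)) := (bl_double n i _).symm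
    have := bl_mono n (i + 1) (show t + 1 ≤ 2 * (t / 2 + 1) by omega)
    omega

lemma div_add_le (a c q : ℕ) (hq : 0 < q) : (a + c) / q ≤ a / q + (c + q - 1) / q := by
  conv_lhs => rw [← Nat.div_add_mod a q]
  rw [Nat.add_assoc, Nat.mul_add_div hq]
  have h1 : (a % q + c) / q ≤ (c + q - 1) / q := by
    apply Nat.div_le_div_right
    have := Nat.mod_lt a hq
    omega
  omega

lemma Bk_card_le (n i s : ℕ) : (Bk n i s).card ≤ (n + 2 ^ i - 1) / 2 ^ i := by
  have hq : 0 < 2 ^ i := Nat.two_pow_pos i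
  have hcard : (Bk n i s).card = bl n i (s + 1) - bl n i s := by
    rw [Bk, Nat.card_Icc]; omega
  have key : bl n i (s + 1) ≤ bl n i s + (n + 2 ^ i - 1) / 2 ^ i := by
    have h2 : bl n i (s + 1) = (s * n + n) / 2 ^ i := by
      unfold bl; congr 1; ring
    rw [h2]
    exact div_add_le (s * n) n (2 ^ i) hq
  rw [hcard, Nat.sub_le_iff_le_add]
  rw [Nat.add_comm (bl n i s) _] at key
  exact key

lemma ceil_div_mono (n q : ℕ) (hq : 0 < q) :
    (n + 2 * q - 1) / (2 * q) ≤ (n + q - 1) / q := by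
  set c := (n + q - 1) / q with hc
  have h1 : q * c + (n + q - 1) % q = n + q - 1 := by rw [hc]; exact Nat.div_add_mod _ _
  have h2 := Nat.mod_lt (n + q - 1) hq
  set m := q * c with hm
  have hn : n ≤ m := by omega
  have : (n + 2 * q - 1) / (2 * q) < c + 1 := by
    rw [Nat.div_lt_iff_lt_mul (by omega : 0 < 2 * q)]
    have h3 : (c + 1) * (2 * q) = 2 * m + 2 * q := by rw [hm]; ring
    omega
  omega

lemma Bk_nonmem_exists (n i : ℕ) {x : ℕ} (h1 : 1 ≤ x) (h2 : x ≤ n) :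
    ∃ s < 2 ^ i, x ∈ Bk n i s := by
  have hq : 0 < 2 ^ i := Nat.two_pow_pos i
  set s := Nat.findGreatest (fun t => bl n i t < x) (2 ^ i - 1) with hs
  have hP0 : bl n i 0 < x := by rw [bl_zero]; omega
  have hPs : bl n i s < x := Nat.findGreatest_spec (P := fun t => bl n i t < x) (Nat.zero_le _) hP0
  have hsle : s ≤ 2 ^ i - 1 := Nat.findGreatest_le _
  refine ⟨s, by omega, ?_⟩
  rw [Bk, Finset.mem_Icc]
  constructor
  · omega
  · by_cases hcase : s + 1 ≤ 2 ^ i - 1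
    · have := Nat.findGreatest_is_greatest (show s < s + 1 by omega) hcase
      omega
    · have : s + 1 = 2 ^ i := by omega
      rw [this, bl_top]; exact h2

lemma Bk_inj (n i : ℕ) {x s s' : ℕ} (h : x ∈ Bk n i s) (h' : x ∈ Bk n i s') : s = s' := by
  rw [Bk, Finset.mem_Icc] at h h'
  by_contra hne
  rcases Nat.lt_or_ge s s' with hlt | hge
  · have := bl_mono n i (show s + 1 ≤ s' by omega); omega
  · have hlt : s' < s := by omega
    have := bl_mono n i (show s' + 1 ≤ s by omega); omega



lemma Se_parent (n i : ℕ) (e : Finset ℕ) :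
    Se n i e = (Se n (i + 1) e).image (fun t => t / 2) := by
  have h2 : (2 : ℕ) ^ (i + 1) = 2 * 2 ^ i := by rw [pow_succ]; ring
  ext s
  simp only [Se, Finset.mem_image, Finset.mem_filter, Finset.mem_range]
  constructor
  · rintro ⟨hs, x, hx⟩
    rw [Finset.mem_inter] at hx
    obtain ⟨hxe, hxB⟩ := hx
    rw [Bk, Finset.mem_Icc] at hxB
    have hmid : bl n i s ≤ bl n (i + 1) (2 * s + 1) := by
      have := bl_mono n (i + 1) (show 2 * s ≤ 2 * s + 1 by omega)
      rw [bl_double] at this; exact this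
    have hmid2 : bl n (i + 1) (2 * s + 1) ≤ bl n i (s + 1) := by
      have := bl_mono n (i + 1) (show 2 * s + 1 ≤ 2 * (s + 1) by omega)
      rw [bl_double] at this; exact this
    by_cases hc : x ≤ bl n (i + 1) (2 * s + 1)
    · refine ⟨2 * s, ⟨by omega, x, ?_⟩, by omega⟩
      rw [Finset.mem_inter, Bk, Finset.mem_Icc, bl_double]
      exact ⟨hxe, by omega⟩
    · refine ⟨2 * s + 1, ⟨by omega, x, ?_⟩, by omega⟩
      rw [Finset.mem_inter, Bk, Finset.mem_Icc]
      have : bl n (i + 1) (2 * s + 1 + 1) = bl n i (s + 1) := by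
        have : 2 * s + 1 + 1 = 2 * (s + 1) := by ring
        rw [this, bl_double]
      exact ⟨hxe, by omega⟩
  · rintro ⟨t, ⟨ht, x, hx⟩, rfl⟩
    refine ⟨by omega, x, ?_⟩
    rw [Finset.mem_inter] at hx ⊢
    exact ⟨hx.1, Bk_subset_parent n i t hx.2⟩

lemma card_Se_le (n i : ℕ) (e : Finset ℕ) : (Se n i e).card ≤ e.card := by
  classical
  apply Finset.card_le_card_of_injOn
    (fun s => if h : (e ∩ Bk n i s).Nonempty then (e ∩ Bk n i s).min' h else 0)
  · intro s hs
    simp only [Se, Finset.mem_coe, Finset.mem_filter] at hs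
    simp only [dif_pos hs.2]
    have := (e ∩ Bk n i s).min'_mem hs.2
    exact (Finset.mem_inter.mp this).1
  · intro s hs s' hs' heq
    rw [Finset.mem_coe] at hs hs'
    simp only [Se, Finset.mem_filter] at hs hs'
    simp only [dif_pos hs.2, dif_pos hs'.2] at heq
    have h1 := (e ∩ Bk n i s).min'_mem hs.2
    have h2 := (e ∩ Bk n i s').min'_mem hs'.2
    rw [Finset.mem_inter] at h1 h2
    rw [heq] at h1
    exact Bk_inj n i h1.2 h2.2

lemma Se_zero (n : ℕ) (e : Finset ℕ) (hne : e.Nonempty) (hsub : e ⊆ Finset.Icc 1 n) :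
    Se n 0 e = {0} := by
  ext s
  simp only [Se, Finset.mem_filter, Finset.mem_range, pow_zero, Finset.mem_singleton]
  constructor
  · rintro ⟨hs, -⟩; omega
  · rintro rfl
    refine ⟨by omega, ?_⟩
    obtain ⟨x, hx⟩ := hne
    refine ⟨x, Finset.mem_inter.mpr ⟨hx, ?_⟩⟩
    have := hsub hx
    rw [Finset.mem_Icc] at this
    rw [Bk, Finset.mem_Icc, bl_zero]
    have hb : bl n 0 (0 + 1) = n := by
      have := bl_top n 0; simpa using this
    omega

lemma card_Se_top (n M : ℕ) (e : Finset ℕ) (hsub : e ⊆ Finset.Icc 1 n) (hn : n ≤ 2 ^ M) :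
    e.card ≤ (Se n M e).card := by
  classical
  have hcover : e ⊆ (Se n M e).biUnion (fun s => e ∩ Bk n M s) := by
    intro x hx
    have hx1 := hsub hx
    rw [Finset.mem_Icc] at hx1
    obtain ⟨s, hs, hxB⟩ := Bk_nonmem_exists n M hx1.1 hx1.2
    rw [Finset.mem_biUnion]
    refine ⟨s, ?_, Finset.mem_inter.mpr ⟨hx, hxB⟩⟩
    simp only [Se, Finset.mem_filter, Finset.mem_range]
    exact ⟨hs, x, Finset.mem_inter.mpr ⟨hx, hxB⟩⟩
  calc e.card ≤ ((Se n M e).biUnion (fun s => e ∩ Bk n M s)).card := Finset.card_le_card hcover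
    _ ≤ ∑ s ∈ Se n M e, (e ∩ Bk n M s).card := Finset.card_biUnion_le
    _ ≤ ∑ s ∈ Se n M e, 1 := by
        apply Finset.sum_le_sum
        intro s _
        have h1 : (e ∩ Bk n M s).card ≤ (Bk n M s).card :=
          Finset.card_le_card (Finset.inter_subset_right)
        have h2 := Bk_card_le n M s
        have h3 : (n + 2 ^ M - 1) / 2 ^ M ≤ 1 := by
          have h4 : 0 < 2 ^ M := Nat.two_pow_pos M
          have : (n + 2 ^ M - 1) / 2 ^ M < 2 := by
            rw [Nat.div_lt_iff_lt_mul h4]; omega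
          omega
        omega
    _ = (Se n M e).card := by simp



lemma cardim (T : Finset ℕ) : T.card ≤ 2 * (T.image (fun x => x / 2)).card := by
  classical
  rw [Finset.card_eq_sum_card_fiberwise
    (f := fun x => x / 2) (t := T.image (fun x => x / 2))
    (fun x hx => Finset.mem_image_of_mem _ hx)]
  calc ∑ s ∈ T.image (fun x => x / 2), (T.filter (fun x => x / 2 = s)).card
      ≤ ∑ _s ∈ T.image (fun x => x / 2), 2 := by
        apply Finset.sum_le_sum
        intro s _
        have hsub : T.filter (fun x => x / 2 = s) ⊆ {2 * s, 2 * s + 1} := by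
          intro x hx
          rw [Finset.mem_filter] at hx
          simp only [Finset.mem_insert, Finset.mem_singleton]
          omega
        calc (T.filter (fun x => x / 2 = s)).card ≤ ({2 * s, 2 * s + 1} : Finset ℕ).card :=
              Finset.card_le_card hsub
          _ ≤ 2 := Finset.card_insert_le _ _ |>.trans (by simp)
    _ = 2 * (T.image (fun x => x / 2)).card := by
        rw [Finset.sum_const, smul_eq_mul, Nat.mul_comm]

lemma factle (p : ℕ) : ∀ d : ℕ, d ≤ p → (p + d).factorial ≤ p.factorial * (2 * p) ^ d := by
  intro d
  induction d with
  | zero => simp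
  | succ d ih =>
    intro hd
    have h1 : (p + (d + 1)).factorial = (p + d + 1) * (p + d).factorial := by
      rw [show p + (d + 1) = (p + d) + 1 by ring, Nat.factorial_succ]
    rw [h1, pow_succ]
    calc (p + d + 1) * (p + d).factorial ≤ (2 * p) * (p.factorial * (2 * p) ^ d) :=
          Nat.mul_le_mul (by omega) (ih (by omega))
      _ = p.factorial * ((2 * p) ^ d * (2 * p)) := by ring

lemma choose_dec (n t : ℕ) (h : n ≤ 2 * t) : n.choose (t + 1) ≤ n.choose t := by
  by_cases hn : n < t + 1
  · rw [Nat.choose_eq_zero_of_lt hn]; exact Nat.zero_le _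
  push_neg at hn
  have h1 : n.choose (t + 1) = n.choose (n - (t + 1)) := (Nat.choose_symm hn).symm
  have h2 : n - (t + 1) < n / 2 ∨ n - (t + 1) ≥ n / 2 := by omega
  have hlt : n - (t + 1) < n / 2 ∨ n = 2 * t ∧ n - (t+1) = n/2 - 1 ∨ n - (t+1) + 1 = n - t := by omega
  have key : n - (t + 1) < n / 2 := by omega
  calc n.choose (t + 1) = n.choose (n - (t + 1)) := h1
    _ ≤ n.choose (n - (t + 1) + 1) := Nat.choose_le_succ_of_lt_half_left key
    _ = n.choose (n - t) := by congr 1; omega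
    _ = n.choose t := Nat.choose_symm (by omega : t ≤ n)

lemma four_choose (n j : ℕ) (hj : 2 ≤ j) (hnj : n + 4 ≤ 2 * j) :
    4 * n.choose j ≤ (n + 2).choose j := by
  by_cases hn : n < j
  · rw [Nat.choose_eq_zero_of_lt hn]; exact Nat.zero_le _
  push_neg at hn
  obtain ⟨j', rfl⟩ : ∃ j', j = j' + 2 := ⟨j - 2, by omega⟩
  have e1 : (n + 2).choose (j' + 2) = (n + 1).choose (j' + 1) + (n + 1).choose (j' + 2) :=
    Nat.choose_succ_succ (n + 1) (j' + 1)
  have e2 : (n + 1).choose (j' + 1) = n.choose j' + n.choose (j' + 1) :=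
    Nat.choose_succ_succ n j'
  have e3 : (n + 1).choose (j' + 2) = n.choose (j' + 1) + n.choose (j' + 2) :=
    Nat.choose_succ_succ n (j' + 1)
  have d1 : n.choose (j' + 1) ≤ n.choose j' := choose_dec n j' (by omega)
  have d2 : n.choose (j' + 2) ≤ n.choose (j' + 1) := choose_dec n (j' + 1) (by omega)
  omega

lemma four_iter (n j : ℕ) (hj : 2 ≤ j) :
    ∀ d : ℕ, n + 2 * d + 2 ≤ 2 * j → 4 ^ d * n.choose j ≤ (n + 2 * d).choose j := by
  intro d
  induction d generalizing n with
  | zero => simp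
  | succ d ih =>
    intro hd
    have step : 4 * n.choose j ≤ (n + 2).choose j := four_choose n j hj (by omega)
    calc 4 ^ (d + 1) * n.choose j = 4 ^ d * (4 * n.choose j) := by ring
      _ ≤ 4 ^ d * (n + 2).choose j := Nat.mul_le_mul_left _ step
      _ ≤ (n + 2 + 2 * d).choose j := ih (n + 2) (by omega)
      _ = (n + 2 * (d + 1)).choose j := by congr 1; ring

lemma sumdf (N : ℕ) : ∀ m : ℕ, ∑ p ∈ Finset.range (m + 1), N.descFactorial p * p ^ (m - p) ≤ N ^ m := by
  intro m
  induction m with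
  | zero => simp
  | succ m ih =>
    have hsplit : ∑ p ∈ Finset.range (m + 2), N.descFactorial p * p ^ (m + 1 - p)
        = (∑ p ∈ Finset.range (m + 1), N.descFactorial p * p ^ (m - p) * p)
          + N.descFactorial (m + 1) := by
      rw [Finset.sum_range_succ]
      congr 1
      · apply Finset.sum_congr rfl
        intro p hp
        rw [Finset.mem_range] at hp
        have : m + 1 - p = (m - p) + 1 := by omega
        rw [this, pow_succ]; ring
      · simp
    rw [hsplit]
    have hlast : N.descFactorial (m + 1) = (N - m) * N.descFactorial m := Nat.descFactorial_succ N m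
    -- split the sum at p = m
    rw [Finset.sum_range_succ]
    have hterm : ∀ p ∈ Finset.range m, N.descFactorial p * p ^ (m - p) * p
        ≤ N.descFactorial p * p ^ (m - p) * N := by
      intro p hp
      by_cases hpN : p ≤ N
      · exact Nat.mul_le_mul_left _ hpN
      · have : N.descFactorial p = 0 := Nat.descFactorial_eq_zero_iff_lt.mpr (by omega)
        simp [this]
    have hm : N.descFactorial m * m ^ (m - m) * m + N.descFactorial (m + 1)
        ≤ N.descFactorial m * m ^ (m - m) * N := by
      rw [hlast]
      simp only [Nat.sub_self, pow_zero, Nat.mul_one]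
      by_cases hmN : m ≤ N
      · have h5 : N.descFactorial m * m + (N - m) * N.descFactorial m
            = N.descFactorial m * N := by
          have h6 : N.descFactorial m * m + (N - m) * N.descFactorial m
              = N.descFactorial m * (m + (N - m)) := by ring
          rw [h6]; congr 1; omega
        exact le_of_eq h5
      · have : N.descFactorial m = 0 := Nat.descFactorial_eq_zero_iff_lt.mpr (by omega)
        simp [this, Nat.descFactorial_eq_zero_iff_lt.mpr (show N < m + 1 by omega)]
    calc (∑ p ∈ Finset.range m, N.descFactorial p * p ^ (m - p) * p)
          + N.descFactorial m * m ^ (m - m) * m + N.descFactorial (m + 1)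
        ≤ (∑ p ∈ Finset.range m, N.descFactorial p * p ^ (m - p) * N)
          + N.descFactorial m * m ^ (m - m) * N := by
          have := Finset.sum_le_sum hterm
          omega
      _ = (∑ p ∈ Finset.range (m + 1), N.descFactorial p * p ^ (m - p)) * N := by
          rw [Finset.sum_range_succ, add_mul, Finset.sum_mul]
      _ ≤ N ^ m * N := Nat.mul_le_mul_right _ ih
      _ = N ^ (m + 1) := (pow_succ N m).symm



lemma count_keys (k r N : ℕ) (hk : 2 ≤ k) (hkr : k ≤ r) :
    ((Finset.range (2 * N)).powerset.filter
       (fun T => k ≤ T.card ∧ T.card ≤ r ∧ (T.image (fun x => x / 2)).card ≤ k - 1)).card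
      * (k - 1).factorial
    ≤ (∑ j ∈ Finset.Icc k r, Nat.choose (2 * k - 2) j) * N ^ (k - 1) := by
  classical
  set Sig := ∑ j ∈ Finset.Icc k r, Nat.choose (2 * k - 2) j with hSig
  set K := (Finset.range (2 * N)).powerset.filter
       (fun T => k ≤ T.card ∧ T.card ≤ r ∧ (T.image (fun x => x / 2)).card ≤ k - 1) with hK
  have hfib : K.card = ∑ p ∈ Finset.range k,
      (K.filter (fun T => (T.image (fun x => x / 2)).card = p)).card := by
    apply Finset.card_eq_sum_card_fiberwise
    intro T hT
    rw [hK, Finset.mem_coe, Finset.mem_filter] at hT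
    rw [Finset.mem_coe, Finset.mem_range]
    show (T.image (fun x => x / 2)).card < k
    omega
  have hper : ∀ p ∈ Finset.range k,
      (K.filter (fun T => (T.image (fun x => x / 2)).card = p)).card * (k - 1).factorial
      ≤ N.descFactorial p * p ^ (k - 1 - p) * Sig := by
    intro p hp
    rw [Finset.mem_range] at hp
    by_cases h2p : k ≤ 2 * p
    · -- main case
      have hd : k - 1 - p ≤ p := by omega
      set d := k - 1 - p with hdd
      -- fiber is contained in a structured biUnion
      have hsub : K.filter (fun T => (T.image (fun x => x / 2)).card = p)
          ⊆ ((Finset.range N).powersetCard p).biUnion (fun P =>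
              (Finset.Icc k r).biUnion (fun j =>
                (P.biUnion (fun s' => {2 * s', 2 * s' + 1})).powersetCard j)) := by
        intro T hT
        rw [Finset.mem_filter] at hT
        obtain ⟨hTK, hTp⟩ := hT
        rw [hK, Finset.mem_filter, Finset.mem_powerset] at hTK
        obtain ⟨hTsub, hk1, hk2, hk3⟩ := hTK
        rw [Finset.mem_biUnion]
        refine ⟨T.image (fun x => x / 2), ?_, ?_⟩
        · rw [Finset.mem_powersetCard]
          refine ⟨?_, hTp⟩
          intro y hy
          rw [Finset.mem_image] at hy
          obtain ⟨x, hx, rfl⟩ := hy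
          have := hTsub hx
          rw [Finset.mem_range] at this ⊢
          omega
        · rw [Finset.mem_biUnion]
          refine ⟨T.card, by rw [Finset.mem_Icc]; exact ⟨hk1, hk2⟩, ?_⟩
          rw [Finset.mem_powersetCard]
          refine ⟨?_, rfl⟩
          intro x hx
          rw [Finset.mem_biUnion]
          refine ⟨x / 2, Finset.mem_image_of_mem _ hx, ?_⟩
          simp only [Finset.mem_insert, Finset.mem_singleton]
          omega
      have hchild : ∀ P : Finset ℕ, P.card = p →
          (P.biUnion (fun s' => ({2 * s', 2 * s' + 1} : Finset ℕ))).card = 2 * p := by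
        intro P hP
        have hdisj : ∀ x ∈ P, ∀ y ∈ P, x ≠ y →
            Disjoint ({2 * x, 2 * x + 1} : Finset ℕ) {2 * y, 2 * y + 1} := by
          intro a _ b _ hab
          rw [Finset.disjoint_left]
          intro x hx hx'
          simp only [Finset.mem_insert, Finset.mem_singleton] at hx hx'
          omega
        rw [Finset.card_biUnion hdisj]
        have hpair : ∀ s' ∈ P, ({2 * s', 2 * s' + 1} : Finset ℕ).card = 2 := by
          intro s' _
          rw [Finset.card_insert_of_notMem (by simp only [Finset.mem_singleton]; omega),
            Finset.card_singleton]
        rw [Finset.sum_congr rfl hpair, Finset.sum_const, smul_eq_mul, hP, Nat.mul_comm]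
      have hcardfi : (K.filter (fun T => (T.image (fun x => x / 2)).card = p)).card
          ≤ N.choose p * ∑ j ∈ Finset.Icc k r, Nat.choose (2 * p) j := by
        calc (K.filter (fun T => (T.image (fun x => x / 2)).card = p)).card
            ≤ (((Finset.range N).powersetCard p).biUnion (fun P =>
              (Finset.Icc k r).biUnion (fun j =>
                (P.biUnion (fun s' => {2 * s', 2 * s' + 1})).powersetCard j))).card :=
              Finset.card_le_card hsub
          _ ≤ ∑ P ∈ (Finset.range N).powersetCard p,
              ((Finset.Icc k r).biUnion (fun j =>
                (P.biUnion (fun s' => {2 * s', 2 * s' + 1})).powersetCard j)).card :=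
              Finset.card_biUnion_le
          _ ≤ ∑ P ∈ (Finset.range N).powersetCard p,
              ∑ j ∈ Finset.Icc k r,
                ((P.biUnion (fun s' => ({2 * s', 2 * s' + 1} : Finset ℕ))).powersetCard j).card := by
              exact Finset.sum_le_sum (fun P _ => Finset.card_biUnion_le)
          _ = ∑ P ∈ (Finset.range N).powersetCard p,
              ∑ j ∈ Finset.Icc k r, Nat.choose (2 * p) j := by
              apply Finset.sum_congr rfl
              intro P hP
              apply Finset.sum_congr rfl
              intro j _
              rw [Finset.mem_powersetCard] at hP
              rw [Finset.card_powersetCard, hchild P hP.2]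
          _ = N.choose p * ∑ j ∈ Finset.Icc k r, Nat.choose (2 * p) j := by
              rw [Finset.sum_const, smul_eq_mul, Finset.card_powersetCard, Finset.card_range]
      -- now the arithmetic chain
      have harith : N.choose p * (∑ j ∈ Finset.Icc k r, Nat.choose (2 * p) j) * (k - 1).factorial
          ≤ N.descFactorial p * p ^ d * Sig := by
        have hfac : (k - 1).factorial ≤ p.factorial * (2 * p) ^ d := by
          have : k - 1 = p + d := by omega
          rw [this]
          exact factle p d hd
        have hpat : ∀ j ∈ Finset.Icc k r,
            (2 * p) ^ d * Nat.choose (2 * p) j ≤ p ^ d * Nat.choose (2 * k - 2) j := by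
          intro j hj
          rw [Finset.mem_Icc] at hj
          have h4 : 4 ^ d * Nat.choose (2 * p) j ≤ (2 * p + 2 * d).choose j :=
            four_iter (2 * p) j (by omega) d (by omega)
          have h5 : 2 * p + 2 * d = 2 * k - 2 := by omega
          rw [h5] at h4
          calc (2 * p) ^ d * Nat.choose (2 * p) j = p ^ d * (2 ^ d * Nat.choose (2 * p) j) := by
                rw [mul_pow]; ring
            _ ≤ p ^ d * (4 ^ d * Nat.choose (2 * p) j) := by
                apply Nat.mul_le_mul_left
                exact Nat.mul_le_mul_right _ (Nat.pow_le_pow_left (by norm_num) d)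
            _ ≤ p ^ d * Nat.choose (2 * k - 2) j := Nat.mul_le_mul_left _ h4
        calc N.choose p * (∑ j ∈ Finset.Icc k r, Nat.choose (2 * p) j) * (k - 1).factorial
            ≤ N.choose p * (∑ j ∈ Finset.Icc k r, Nat.choose (2 * p) j)
                * (p.factorial * (2 * p) ^ d) := Nat.mul_le_mul_left _ hfac
          _ = (p.factorial * N.choose p) *
                ((2 * p) ^ d * ∑ j ∈ Finset.Icc k r, Nat.choose (2 * p) j) := by ring
          _ = N.descFactorial p *
                (∑ j ∈ Finset.Icc k r, (2 * p) ^ d * Nat.choose (2 * p) j) := by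
              rw [← Nat.descFactorial_eq_factorial_mul_choose, Finset.mul_sum]
          _ ≤ N.descFactorial p *
                (∑ j ∈ Finset.Icc k r, p ^ d * Nat.choose (2 * k - 2) j) :=
              Nat.mul_le_mul_left _ (Finset.sum_le_sum hpat)
          _ = N.descFactorial p * p ^ d * Sig := by
              rw [← Finset.mul_sum, hSig]; ring
      calc (K.filter (fun T => (T.image (fun x => x / 2)).card = p)).card * (k - 1).factorial
          ≤ (N.choose p * ∑ j ∈ Finset.Icc k r, Nat.choose (2 * p) j) * (k - 1).factorial :=
            Nat.mul_le_mul_right _ hcardfi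
        _ ≤ N.descFactorial p * p ^ d * Sig := harith
    · -- degenerate case: fiber is empty
      have : K.filter (fun T => (T.image (fun x => x / 2)).card = p) = ∅ := by
        rw [Finset.eq_empty_iff_forall_notMem]
        intro T hT
        rw [Finset.mem_filter] at hT
        obtain ⟨hTK, hTp⟩ := hT
        rw [hK, Finset.mem_filter] at hTK
        have h1 : k ≤ T.card := hTK.2.1
        have h2 := cardim T
        rw [hTp] at h2
        omega
      rw [this]
      simp
  calc K.card * (k - 1).factorial
      = ∑ p ∈ Finset.range k,
          (K.filter (fun T => (T.image (fun x => x / 2)).card = p)).card * (k - 1).factorial := by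
        rw [hfib, Finset.sum_mul]
    _ ≤ ∑ p ∈ Finset.range k, N.descFactorial p * p ^ (k - 1 - p) * Sig :=
        Finset.sum_le_sum hper
    _ = (∑ p ∈ Finset.range ((k - 1) + 1), N.descFactorial p * p ^ ((k - 1) - p)) * Sig := by
        rw [Finset.sum_mul]
        apply Finset.sum_congr
        · congr 1; omega
        · intro p _; rfl
    _ ≤ N ^ (k - 1) * Sig := Nat.mul_le_mul_right _ (sumdf N (k - 1))
    _ = Sig * N ^ (k - 1) := Nat.mul_comm _ _

end SplitAux

open SplitAux in
/-- Theorem 1 (splitting lemma): for 2 ≤ k ≤ r ≤ n, every ordered r-graph H on [n]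
is the union of edge-disjoint H_i, 0 ≤ i ≤ ⌊log₂ n⌋, where each H_i is the union of
at most (1/(k-1)!)·(Σ_{j=k}^r C(2k-2,j))·2^{i(k-1)} interval k-partite r-graphs
whose parts have size at most ⌈n/2^i⌉. -/
theorem splitting_lemma (k r n : ℕ) (hk : 2 ≤ k) (hkr : k ≤ r) (hrn : r ≤ n)
    (H : Finset (Finset ℕ)) (hH : ∀ e ∈ H, e ⊆ Finset.Icc 1 n ∧ e.card = r) :
    ∃ Hs : ℕ → Finset (Finset ℕ),
      (∀ i, Hs i ⊆ H) ∧
      (∀ i j, i ≠ j → Disjoint (Hs i) (Hs j)) ∧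
      H = (Finset.range (Nat.log 2 n + 1)).biUnion Hs ∧
      ∀ i ≤ Nat.log 2 n, ∃ t : ℕ,
        t * (k - 1).factorial
          ≤ (∑ j ∈ Finset.Icc k r, Nat.choose (2 * k - 2) j) * 2 ^ (i * (k - 1)) ∧
        ∃ P : Fin t → Finset (Finset ℕ),
          Hs i = Finset.univ.biUnion P ∧
          ∀ a : Fin t, IntervalKPartiteB k ((n + 2 ^ i - 1) / 2 ^ i) (P a) := by
  classical
  set L := Nat.log 2 n with hL
  set M := L + 1 with hM
  have hn2M : n < 2 ^ M := Nat.lt_pow_succ_log_self (by norm_num) n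
  have hex : ∀ e ∈ H, ∃ i, k ≤ (Se n i e).card := by
    intro e he
    refine ⟨M, ?_⟩
    have h1 := card_Se_top n M e (hH e he).1 (le_of_lt hn2M)
    rw [(hH e he).2] at h1
    omega
  set lev : Finset ℕ → ℕ :=
    fun e => if h : ∃ i, k ≤ (Se n i e).card then Nat.find h else 0 with hlevdef
  have hlev_eq : ∀ e (he : e ∈ H), lev e = Nat.find (hex e he) := by
    intro e he
    rw [hlevdef]
    exact dif_pos _
  have hlev_spec : ∀ e (he : e ∈ H), k ≤ (Se n (lev e) e).card := by
    intro e he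
    rw [hlev_eq e he]
    exact Nat.find_spec (hex e he)
  have hlev_min : ∀ e (he : e ∈ H), ∀ i, i < lev e → (Se n i e).card < k := by
    intro e he i hi
    rw [hlev_eq e he] at hi
    have := Nat.find_min (hex e he) hi
    omega
  have hlev_le : ∀ e (he : e ∈ H), lev e ≤ M := by
    intro e he
    rw [hlev_eq e he]
    apply Nat.find_min'
    have h1 := card_Se_top n M e (hH e he).1 (le_of_lt hn2M)
    rw [(hH e he).2] at h1
    omega
  have hlev_pos : ∀ e (he : e ∈ H), 1 ≤ lev e := by
    intro e he
    by_contra hcon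
    have h0 : lev e = 0 := by omega
    have h1 := hlev_spec e he
    rw [h0] at h1
    have hne : e.Nonempty := by
      rw [← Finset.card_pos, (hH e he).2]; omega
    rw [Se_zero n e hne (hH e he).1] at h1
    simp at h1
    omega
  -- the decomposition
  refine ⟨fun i => H.filter (fun e => lev e = i + 1), fun i => Finset.filter_subset _ _,
    ?_, ?_, ?_⟩
  · -- disjoint
    intro i j hij
    rw [Finset.disjoint_left]
    intro e hei hej
    rw [Finset.mem_filter] at hei hej
    omega
  · -- union
    ext e
    rw [Finset.mem_biUnion]
    constructor
    · intro he
      refine ⟨lev e - 1, ?_, ?_⟩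
      · rw [Finset.mem_range]
        have := hlev_le e he
        have := hlev_pos e he
        omega
      · rw [Finset.mem_filter]
        have := hlev_pos e he
        exact ⟨he, by omega⟩
    · rintro ⟨i, -, hei⟩
      exact (Finset.filter_subset _ _) hei
  · -- the per-level bound
    intro i hi
    set c := i + 1 with hc
    set Hsi := H.filter (fun e => lev e = i + 1) with hHsi
    set keys := Hsi.image (fun e => Se n c e) with hkeys
    refine ⟨keys.card, ?_, ?_⟩
    · -- counting
      have hsubK : keys ⊆ (Finset.range (2 * 2 ^ i)).powerset.filter
          (fun T => k ≤ T.card ∧ T.card ≤ r ∧ (T.image (fun x => x / 2)).card ≤ k - 1) := by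
        intro T hT
        rw [hkeys, Finset.mem_image] at hT
        obtain ⟨e, he, rfl⟩ := hT
        rw [hHsi, Finset.mem_filter] at he
        obtain ⟨heH, helev⟩ := he
        rw [Finset.mem_filter, Finset.mem_powerset]
        refine ⟨?_, ?_, ?_, ?_⟩
        · intro x hx
          rw [Se, Finset.mem_filter, Finset.mem_range] at hx
          rw [Finset.mem_range]
          have h2 : (2:ℕ) ^ c = 2 * 2 ^ i := by rw [hc, pow_succ]; ring
          omega
        · have := hlev_spec e heH
          rw [helev] at this
          exact this
        · have h1 := card_Se_le n c e
          rw [(hH e heH).2] at h1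
          exact h1
        · have h1 : (Se n c e).image (fun x => x / 2) = Se n i e := (Se_parent n i e).symm
          rw [h1]
          have h2 := hlev_min e heH i (by omega)
          omega
      have hcount := count_keys k r (2 ^ i) hk hkr
      have h1 : keys.card * (k - 1).factorial
          ≤ ((Finset.range (2 * 2 ^ i)).powerset.filter
          (fun T => k ≤ T.card ∧ T.card ≤ r ∧ (T.image (fun x => x / 2)).card ≤ k - 1)).card
          * (k - 1).factorial :=
        Nat.mul_le_mul_right _ (Finset.card_le_card hsubK)
      have h2 : (2:ℕ) ^ (i * (k - 1)) = (2 ^ i) ^ (k - 1) := pow_mul 2 i (k - 1)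
      rw [h2]
      exact le_trans h1 hcount
    · -- the partition into interval k-partite graphs
      set eqv := Fintype.equivFinOfCardEq (Fintype.card_coe keys) with heqv
      refine ⟨fun a => Hsi.filter (fun e => Se n c e = ((eqv.symm a : keys) : Finset ℕ)), ?_, ?_⟩
      · -- biUnion equality
        ext e
        rw [Finset.mem_biUnion]
        constructor
        · intro he
          have hkey : Se n c e ∈ keys := by
            rw [hkeys]
            exact Finset.mem_image_of_mem _ he
          refine ⟨eqv ⟨Se n c e, hkey⟩, Finset.mem_univ _, ?_⟩
          rw [Finset.mem_filter]
          refine ⟨he, ?_⟩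
          rw [Equiv.symm_apply_apply]
        · rintro ⟨a, -, hea⟩
          exact (Finset.filter_subset _ _) hea
      · -- each part is interval k-partite
        intro a
        set T := ((eqv.symm a : keys) : Finset ℕ) with hT
        have hTmem : T ∈ keys := (eqv.symm a).2
        rw [hkeys, Finset.mem_image] at hTmem
        obtain ⟨e₀, he₀, hTe₀⟩ := hTmem
        rw [hHsi, Finset.mem_filter] at he₀
        obtain ⟨he₀H, he₀lev⟩ := he₀
        have hkT : k ≤ T.card := by
          rw [← hTe₀]
          have := hlev_spec e₀ he₀H
          rw [he₀lev] at this
          exact this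
        set ℓ := T.card with hℓ
        have hcardT : T.card = ℓ := rfl
        set emb := T.orderEmbOfFin hcardT with hemb
        refine ⟨ℓ, hkT, fun j => if h : j < ℓ then Bk n c (emb ⟨j, h⟩) else ∅, ?_, ?_, ?_, ?_⟩
        · intro j hj
          dsimp only
          rw [dif_pos hj]
          exact ⟨_, _, rfl⟩
        · intro j hj
          dsimp only
          rw [dif_pos hj]
          have h1 := Bk_card_le n c (emb ⟨j, hj⟩)
          have h2 : (n + 2 ^ c - 1) / 2 ^ c ≤ (n + 2 ^ i - 1) / 2 ^ i := by
            have h3 : (2:ℕ) ^ c = 2 * 2 ^ i := by rw [hc, pow_succ]; ring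
            rw [h3]
            exact ceil_div_mono n (2 ^ i) (Nat.two_pow_pos i)
          omega
        · intro j j' hjj' hj'
          have hj : j < ℓ := by omega
          dsimp only
          rw [dif_pos hj, dif_pos hj']
          intro x hx y hy
          have hlt : emb ⟨j, hj⟩ < emb ⟨j', hj'⟩ := by
            apply (T.orderEmbOfFin hcardT).strictMono
            exact Fin.mk_lt_mk.mpr hjj'
          rw [Bk, Finset.mem_Icc] at hx hy
          have := bl_mono n c (show (emb ⟨j, hj⟩ : ℕ) + 1 ≤ emb ⟨j', hj'⟩ by omega)
          omega
        · intro e he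
          rw [Finset.mem_filter] at he
          obtain ⟨heHsi, heT⟩ := he
          have heH : e ∈ H := by
            rw [hHsi] at heHsi
            exact (Finset.filter_subset _ _) heHsi
          constructor
          · intro x hx
            have hx1 := (hH e heH).1 hx
            rw [Finset.mem_Icc] at hx1
            obtain ⟨s, hs, hxB⟩ := Bk_nonmem_exists n c hx1.1 hx1.2
            have hsT : s ∈ T := by
              rw [hT, ← heT, Se, Finset.mem_filter, Finset.mem_range]
              exact ⟨hs, x, Finset.mem_inter.mpr ⟨hx, hxB⟩⟩
            have hrange : s ∈ Set.range (T.orderEmbOfFin hcardT) := by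
              rw [Finset.range_orderEmbOfFin]
              exact hsT
            obtain ⟨jf, hjf⟩ := hrange
            refine ⟨jf.1, jf.2, ?_⟩
            dsimp only
            rw [dif_pos jf.2]
            have hfin : (⟨jf.1, jf.2⟩ : Fin ℓ) = jf := rfl
            rw [hfin, hemb, hjf]
            exact hxB
          · intro j hj
            dsimp only
            rw [dif_pos hj]
            have hsT : emb ⟨j, hj⟩ ∈ T := T.orderEmbOfFin_mem hcardT ⟨j, hj⟩
            rw [hT, ← heT, Se, Finset.mem_filter] at hsT
            exact hsT.2
end

section
/- Let 2 ≤ k ≤ r ≤ n be integers and let α be a real number with α > k - 1 and α ≤ r. There is a constant c = c(α,k,r) > 0 (one may take c = (k-1)!·(1 - 2^{k-1-α}) / Σ_{j=k}^{r} C(2k-2,j)) such that every ordered r-graph H on [n] with e(H) = d·n^α edges contains, for some m ∈ [n], an interval k-partite subgraph H' with parts of size at most m and e(H') ≥ c·d·m^α. -/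
/-!
Cut `[0, 2^t)`, where `n < 2^t ≤ 2n`, into dyadic blocks of width `2^j`. The *type* of an edge `e`
is the largest scale `j` at which `e` meets at least `k` blocks, together with the set `S` of
blocks met there. The edges of one type form an interval `k`-partite graph with parts the blocks
of `S`, each of size `2^j`. By maximality of `j`, the blocks of `S` lie in at most `k - 1`
sibling pairs. Label `k - 1` blocks of `S` meeting every pair: `S` is recovered from the parents
of the labelled blocks (among the `2^(t-1-j)` blocks of width `2^(j+1)`) and the set of labelled
children lying in `S`, and the `(k-1)!` relabellings give distinct codes, so there are at most
`2^((t-1-j)(k-1)) Σ_{i=k}^r C(2k-2, i) / (k-1)!` types at scale `j`. Because `α > k - 1`, the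
sum of `2^(jα)` over all types is a geometric series dominated by its top term, of order
`2^((t-1)α) / (1 - 2^(k-1-α)) ≤ n^α / (1 - 2^(k-1-α))`, so some type carries at least
`c d 2^(jα)` edges.
-/

open Finset
open scoped Nat

namespace IntervalSplitting

def block (w s : ℕ) : Finset ℕ := Icc (s * w) (s * w + w - 1)

def blocks (w : ℕ) (e : Finset ℕ) : Finset ℕ := e.image (· / w)

theorem mem_block {w s x : ℕ} (hw : 0 < w) : x ∈ block w s ↔ x / w = s := by
  rw [block, mem_Icc, Nat.div_eq_iff hw]

theorem card_block {w : ℕ} (hw : 0 < w) (s : ℕ) : (block w s).card = w := by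
  rw [block, Nat.card_Icc]
  generalize s * w = u
  omega

theorem blocks_one (e : Finset ℕ) : blocks 1 e = e := by
  simp [blocks]

theorem blocks_mul_two (w : ℕ) (e : Finset ℕ) :
    blocks (w * 2) e = (blocks w e).image (· / 2) := by
  simp only [blocks, image_image, Function.comp_def, Nat.div_div_eq_div_mul]

theorem blocks_subset_range {w t : ℕ} {e : Finset ℕ} (he : e ⊆ range (w * t)) :
    blocks w e ⊆ range t := by
  intro s hs
  obtain ⟨x, hx, rfl⟩ := mem_image.1 hs
  exact mem_range.2 (Nat.div_lt_of_lt_mul (mem_range.1 (he hx)))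

theorem intervalKPartiteB_of_blocks_eq {k w : ℕ} (hw : 0 < w) {S : Finset ℕ} (hS : k ≤ S.card)
    {H : Finset (Finset ℕ)} (hH : ∀ e ∈ H, blocks w e = S) : IntervalKPartiteB k w H := by
  set f := S.orderEmbOfFin rfl
  refine ⟨S.card, hS, fun a => if h : a < S.card then block w (f ⟨a, h⟩) else ∅,
    fun a ha => ?_, fun a ha => ?_, fun a a' haa' ha' => ?_,
    fun e he => ⟨fun x hx => ?_, fun a ha => ?_⟩⟩
  · simp only [dif_pos ha]
    exact ⟨_, _, rfl⟩
  · simp only [dif_pos ha, card_block hw, le_refl]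
  · simp only [dif_pos ha', dif_pos (haa'.trans ha')]
    intro x hx y hy
    rw [mem_block hw] at hx hy
    exact Nat.lt_of_div_lt_div (hx ▸ hy ▸ f.strictMono (Fin.mk_lt_mk.2 haa'))
  · have hxS : x / w ∈ (S : Set ℕ) := hH e he ▸ mem_image_of_mem _ hx
    rw [← S.range_orderEmbOfFin rfl] at hxS
    obtain ⟨a, ha⟩ := hxS
    exact ⟨a, a.2, by simpa [dif_pos a.2, mem_block hw] using ha.symm⟩
  · have haS : f ⟨a, ha⟩ ∈ blocks w e := by
      rw [hH e he]
      exact S.orderEmbOfFin_mem rfl _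
    obtain ⟨x, hx, hxa⟩ := mem_image.1 haS
    exact ⟨x, mem_inter.2 ⟨hx, by simpa [dif_pos ha, mem_block hw] using hxa⟩⟩

section SiblingLabelling

variable {m : ℕ}

/-- `2p` and `2p + 1` are siblings with parent `p`. -/
def IsSiblingLabelling (S : Finset ℕ) (ℓ : Fin m → ℕ) : Prop :=
  Function.Injective ℓ ∧ (∀ a, ℓ a ∈ S) ∧
    ∀ s ∈ S, s ∉ Set.range ℓ → s % 2 = 1 ∧ s - 1 ∈ Set.range ℓ

def child (g : Fin m → ℕ) (p : Fin m × Fin 2) : ℕ := 2 * g p.1 + p.2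

open Classical in
/-- Records each element of `S` as `(a, b)`: the child of parity `b` of the parent of `ℓ a`,
where `a` is its own label or, if it has none, the label of its sibling. -/
noncomputable def siblingPattern (S : Finset ℕ) (ℓ : Fin m → ℕ) : Finset (Fin m × Fin 2) :=
  {p | child (ℓ · / 2) p ∈ S ∧
    (child (ℓ · / 2) p = ℓ p.1 ∨ child (ℓ · / 2) p ∉ Set.range ℓ)}

theorem exists_isSiblingLabelling {S : Finset ℕ} (hS : (S.image (· / 2)).card ≤ m)
    (hm : m ≤ S.card) : ∃ ℓ : Fin m → ℕ, IsSiblingLabelling S ℓ := by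
  set W₀ := S.filter fun s => s % 2 = 0 ∨ s - 1 ∉ S
  have hW₀ : W₀.card ≤ m := by
    refine le_trans (card_le_card_of_injOn (· / 2) (fun s hs => ?_) fun s hs s' hs' h => ?_) hS
    · exact mem_image_of_mem _ (mem_filter.1 hs).1
    · simp only [W₀, coe_filter, Set.mem_ofPred_eq] at hs hs' h
      by_contra hne
      rcases Nat.lt_or_gt_of_ne hne with hlt | hlt
      · exact hs'.2.elim (by omega) fun h' => h' (by rw [show s' - 1 = s by omega]; exact hs.1)
      · exact hs.2.elim (by omega) fun h' => h' (by rw [show s - 1 = s' by omega]; exact hs'.1)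
  obtain ⟨W, hW₀W, hWS, hWm⟩ := exists_subsuperset_card_eq (filter_subset _ S) hW₀ hm
  refine ⟨W.orderEmbOfFin hWm, (W.orderEmbOfFin hWm).injective,
    fun a => hWS (W.orderEmbOfFin_mem hWm a), fun s hs hsW => ?_⟩
  simp only [range_orderEmbOfFin, mem_coe] at hsW ⊢
  have hsW₀ : ¬ (s % 2 = 0 ∨ s - 1 ∉ S) := fun h => hsW (hW₀W (mem_filter.2 ⟨hs, h⟩))
  push Not at hsW₀
  exact ⟨by omega, hW₀W (mem_filter.2 ⟨hsW₀.2, Or.inl (by omega)⟩)⟩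

variable {S : Finset ℕ} {ℓ : Fin m → ℕ}

theorem mem_siblingPattern {p : Fin m × Fin 2} :
    p ∈ siblingPattern S ℓ ↔ child (ℓ · / 2) p ∈ S ∧
      (child (ℓ · / 2) p = ℓ p.1 ∨ child (ℓ · / 2) p ∉ Set.range ℓ) := by
  simp [siblingPattern]

namespace IsSiblingLabelling

theorem comp_perm (h : IsSiblingLabelling S ℓ) (σ : Equiv.Perm (Fin m)) :
    IsSiblingLabelling S (ℓ ∘ σ) := by
  refine ⟨h.1.comp σ.injective, fun a => h.2.1 (σ a), ?_⟩
  rw [EquivLike.range_comp]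
  exact h.2.2

theorem image_child_siblingPattern (h : IsSiblingLabelling S ℓ) :
    (siblingPattern S ℓ).image (child (ℓ · / 2)) = S := by
  refine Subset.antisymm (fun s hs => ?_) fun s hs => ?_
  · obtain ⟨p, hp, rfl⟩ := mem_image.1 hs
    exact (mem_siblingPattern.1 hp).1
  · by_cases hsℓ : s ∈ Set.range ℓ
    · obtain ⟨a, rfl⟩ := hsℓ
      have hchild : child (ℓ · / 2) (a, ⟨ℓ a % 2, Nat.mod_lt _ two_pos⟩) = ℓ a := by
        simp only [child]
        omega
      exact mem_image.2
        ⟨_, mem_siblingPattern.2 ⟨by rw [hchild]; exact hs, Or.inl hchild⟩, hchild⟩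
    · obtain ⟨hodd, a, ha⟩ := h.2.2 s hs hsℓ
      have hchild : child (ℓ · / 2) (a, 1) = s := by
        simp only [child, ha, Fin.val_one]
        omega
      exact mem_image.2 ⟨_, mem_siblingPattern.2
        ⟨by rw [hchild]; exact hs, Or.inr (by rw [hchild]; exact hsℓ)⟩, hchild⟩

theorem injOn_child (h : IsSiblingLabelling S ℓ) :
    Set.InjOn (child (ℓ · / 2)) (siblingPattern S ℓ) := by
  intro p hp q hq hpq
  rw [mem_coe, mem_siblingPattern] at hp hq
  simp only [child] at hp hq hpq
  have hp₂ := p.2.2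
  have hq₂ := q.2.2
  suffices ℓ p.1 = ℓ q.1 from Prod.ext (h.1 this) (Fin.ext (by omega))
  rcases hp.2 with hp' | hp' <;> rcases hq.2 with hq' | hq'
  · omega
  · exact absurd ⟨p.1, by omega⟩ hq'
  · exact absurd ⟨q.1, by omega⟩ hp'
  · have hodd := (h.2.2 _ hp.1 hp').1
    have hpℓ : ℓ p.1 ≠ 2 * (ℓ p.1 / 2) + p.2 := fun e => hp' ⟨p.1, e⟩
    have hqℓ : ℓ q.1 ≠ 2 * (ℓ q.1 / 2) + q.2 := fun e => hq' ⟨q.1, e⟩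
    omega

theorem card_siblingPattern (h : IsSiblingLabelling S ℓ) :
    (siblingPattern S ℓ).card = S.card := by
  conv_rhs => rw [← h.image_child_siblingPattern, card_image_of_injOn h.injOn_child]

theorem eq_two_mul_div_two_add (h : IsSiblingLabelling S ℓ) (a : Fin m) :
    ℓ a = 2 * (ℓ a / 2) + if (a, 0) ∈ siblingPattern S ℓ then 0 else 1 := by
  have hchild : child (ℓ · / 2) (a, 0) = 2 * (ℓ a / 2) := rfl
  by_cases heven : ℓ a % 2 = 0
  · have hℓ : child (ℓ · / 2) (a, 0) = ℓ a := by omega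
    rw [if_pos (mem_siblingPattern.2 ⟨hℓ ▸ h.2.1 a, Or.inl hℓ⟩)]
    omega
  · rw [if_neg]
    · omega
    rw [mem_siblingPattern]
    rintro ⟨hS, hℓ | hℓ⟩
    · have : 2 * (ℓ a / 2) = ℓ a := hchild ▸ hℓ
      omega
    · have := (h.2.2 _ hS hℓ).1
      rw [hchild] at this
      omega

theorem eq_of_siblingPattern_eq {S' : Finset ℕ} {ℓ' : Fin m → ℕ}
    (h : IsSiblingLabelling S ℓ) (h' : IsSiblingLabelling S' ℓ')
    (hg : (ℓ · / 2) = (ℓ' · / 2)) (hT : siblingPattern S ℓ = siblingPattern S' ℓ') :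
    S = S' ∧ ℓ = ℓ' := by
  refine ⟨?_, funext fun a => ?_⟩
  · rw [← h.image_child_siblingPattern, ← h'.image_child_siblingPattern, hT, hg]
  · rw [h.eq_two_mul_div_two_add, h'.eq_two_mul_div_two_add, hT, congrFun hg a]

end IsSiblingLabelling

end SiblingLabelling

/-- `(S, σ)` is encoded by the parents and the sibling pattern of a sibling labelling of `S`
permuted by `σ`. -/
theorem card_mul_factorial_le_pow_mul_sum_choose {m M a b : ℕ} {V : Finset (Finset ℕ)}
    (hV : ∀ S ∈ V, S ⊆ range (2 * M) ∧ (S.image (· / 2)).card ≤ m ∧ m ≤ S.card ∧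
      S.card ∈ Icc a b) :
    V.card * m ! ≤ M ^ m * ∑ j ∈ Icc a b, (2 * m).choose j := by
  choose! ℓ hℓ using fun S hS => exists_isSiblingLabelling (hV S hS).2.1 (hV S hS).2.2.1
  have hℓσ (S) (hS : S ∈ V) (σ : Equiv.Perm (Fin m)) := (hℓ S hS).comp_perm σ
  calc V.card * m ! = (V ×ˢ (univ : Finset (Equiv.Perm (Fin m)))).card := by
        rw [card_product, card_univ, Fintype.card_perm, Fintype.card_fin]
    _ ≤ (Fintype.piFinset (fun _ : Fin m => range M) ×ˢ
          (Icc a b).biUnion fun j => powersetCard j (univ : Finset (Fin m × Fin 2))).card := by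
        refine card_le_card_of_injOn
          (fun p => (fun i => ℓ p.1 (p.2 i) / 2, siblingPattern p.1 (ℓ p.1 ∘ p.2))) ?_ ?_
        · rintro ⟨S, σ⟩ hp
          have hS := (mem_product.1 hp).1
          refine mem_product.2 ⟨Fintype.mem_piFinset.2 fun i => ?_, mem_biUnion.2
            ⟨_, (hℓσ S hS σ).card_siblingPattern ▸ (hV S hS).2.2.2,
              mem_powersetCard.2 ⟨subset_univ _, rfl⟩⟩⟩
          have := mem_range.1 ((hV S hS).1 ((hℓ S hS).2.1 (σ i)))
          exact mem_range.2 (Nat.div_lt_of_lt_mul this)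
        · rintro ⟨S, σ⟩ hp ⟨S', τ⟩ hp' h
          have hS := (mem_product.1 hp).1
          have hS' := (mem_product.1 hp').1
          obtain ⟨rfl, hστ⟩ := (hℓσ S hS σ).eq_of_siblingPattern_eq (hℓσ S' hS' τ)
            (Prod.ext_iff.1 h).1 (Prod.ext_iff.1 h).2
          exact Prod.ext rfl (Equiv.ext fun i => (hℓ S hS).1 (congrFun hστ i))
    _ ≤ M ^ m * ∑ j ∈ Icc a b, (2 * m).choose j := by
        rw [card_product, Fintype.card_piFinset, prod_const, card_range, card_univ,
          Fintype.card_fin]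
        refine Nat.mul_le_mul_left _ (card_biUnion_le.trans_eq (sum_congr rfl fun j _ => ?_))
        rw [card_powersetCard, card_univ, Fintype.card_prod, Fintype.card_fin, Fintype.card_fin,
          mul_comm]

def splitScale (k t : ℕ) (e : Finset ℕ) : ℕ :=
  Nat.findGreatest (fun j => k ≤ (blocks (2 ^ j) e).card) t

def splitType (k t : ℕ) (e : Finset ℕ) : ℕ × Finset ℕ :=
  (splitScale k t e, blocks (2 ^ splitScale k t e) e)

section
variable {k t : ℕ} {e : Finset ℕ}

theorem le_card_blocks_splitScale (hke : k ≤ e.card) :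
    k ≤ (blocks (2 ^ splitScale k t e) e).card :=
  Nat.findGreatest_spec (P := fun j => k ≤ (blocks (2 ^ j) e).card) (Nat.zero_le t)
    (by rwa [pow_zero, blocks_one])

theorem splitScale_lt (hk : 2 ≤ k) (he : e ⊆ range (2 ^ t)) (hke : k ≤ e.card) :
    splitScale k t e < t := by
  refine (Nat.findGreatest_le t).lt_of_ne fun h => ?_
  have hsmall : (blocks (2 ^ t) e).card ≤ 1 := by
    simpa using card_le_card (blocks_subset_range (t := 1) (by rwa [mul_one]))
  have hlarge := le_card_blocks_splitScale (t := t) hke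
  rw [show splitScale k t e = t from h] at hlarge
  omega

theorem card_blocks_splitScale_succ_lt (hk : 2 ≤ k) (he : e ⊆ range (2 ^ t))
    (hke : k ≤ e.card) : (blocks (2 ^ (splitScale k t e + 1)) e).card < k :=
  not_le.1 (Nat.findGreatest_is_greatest (P := fun j => k ≤ (blocks (2 ^ j) e).card)
    (Nat.lt_succ_self _) (splitScale_lt hk he hke))

theorem intervalKPartiteB_filter_splitType_eq {H : Finset (Finset ℕ)} (hke : k ≤ e.card) :
    IntervalKPartiteB k (2 ^ splitScale k t e) (H.filter (splitType k t · = splitType k t e)) :=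
  intervalKPartiteB_of_blocks_eq (by positivity) (le_card_blocks_splitScale hke) fun e' he' => by
    obtain ⟨hscale, hblocks⟩ := Prod.ext_iff.1 (mem_filter.1 he').2
    dsimp only [splitType] at hscale hblocks
    rwa [hscale] at hblocks

end

theorem card_filter_splitType_mul_factorial_le {k r t j : ℕ} (hk : 2 ≤ k) (hjt : j < t)
    {H : Finset (Finset ℕ)} (hH : ∀ e ∈ H, e ⊆ range (2 ^ t) ∧ e.card ∈ Icc k r) :
    ((H.image (splitType k t)).filter (·.1 = j)).card * (k - 1)! ≤
      (2 ^ (t - 1 - j)) ^ (k - 1) * ∑ i ∈ Icc k r, (2 * k - 2).choose i := by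
  rw [← Nat.mul_sub_one]
  set K := (H.image (splitType k t)).filter (·.1 = j)
  have hinj : Set.InjOn Prod.snd (K : Set (ℕ × Finset ℕ)) := fun κ hκ κ' hκ' h =>
    Prod.ext (((mem_filter.1 hκ).2).trans (mem_filter.1 hκ').2.symm) h
  rw [← card_image_of_injOn hinj]
  refine card_mul_factorial_le_pow_mul_sum_choose fun S hS => ?_
  obtain ⟨κ, hκ, rfl⟩ := mem_image.1 hS
  obtain ⟨hκH, rfl⟩ := mem_filter.1 hκ
  obtain ⟨e, he, rfl⟩ := mem_image.1 hκH
  obtain ⟨heR, hke, her⟩ := (hH e he).imp_right mem_Icc.1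
  dsimp only [splitType]
  have hk' := le_card_blocks_splitScale (t := t) hke
  refine ⟨blocks_subset_range ?_, ?_, by omega, mem_Icc.2 ⟨hk', card_image_le.trans her⟩⟩
  · have := splitScale_lt hk heR hke
    rwa [← pow_succ', ← pow_add, show splitScale k t e + (t - 1 - splitScale k t e + 1) = t by
      omega]
  · rw [← blocks_mul_two, ← pow_succ]
    have := card_blocks_splitScale_succ_lt hk heR hke
    omega

theorem sum_two_pow_rpow_mul_two_pow_rpow_le {β α : ℝ} (hβα : β < α) (t : ℕ) :
    ∑ j ∈ range t, ((2 : ℝ) ^ (t - 1 - j)) ^ β * ((2 : ℝ) ^ j) ^ α ≤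
      ((2 : ℝ) ^ (t - 1)) ^ α / (1 - 2 ^ (β - α)) := by
  set X := (2 : ℝ) ^ (β - α)
  have hX : X < 1 := Real.rpow_lt_one_of_one_lt_of_neg one_lt_two (by linarith)
  have hterm : ∀ j ∈ range t,
      ((2 : ℝ) ^ (t - 1 - j)) ^ β * ((2 : ℝ) ^ j) ^ α =
        ((2 : ℝ) ^ (t - 1)) ^ α * X ^ (t - 1 - j) := by
    intro j hj
    have hjt : ((t - 1 : ℕ) : ℝ) = (t - 1 - j : ℕ) + j := by
      rw [← Nat.cast_add, Nat.sub_add_cancel (by have := mem_range.1 hj; omega)]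
    simp only [X, ← Real.rpow_natCast_mul zero_le_two, ← Real.rpow_mul_natCast zero_le_two,
      ← Real.rpow_add two_pos, hjt]
    ring_nf
  rw [sum_congr rfl hterm, ← mul_sum, sum_range_reflect (X ^ ·), div_eq_mul_one_div]
  gcongr
  rw [range_eq_Ico, ← pow_zero X]
  exact geom_sum_Ico_le_of_lt_one (by positivity) hX

theorem factorial_mul_sum_splitType_le {k r t : ℕ} (hk : 2 ≤ k) {H : Finset (Finset ℕ)}
    (hH : ∀ e ∈ H, e ⊆ range (2 ^ t) ∧ e.card ∈ Icc k r) {g : ℕ → ℝ}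
    (hg : ∀ j, 0 ≤ g j) :
    ((k - 1)! : ℝ) * ∑ κ ∈ H.image (splitType k t), g κ.1 ≤
      (∑ i ∈ Icc k r, ((2 * k - 2).choose i : ℝ)) *
        ∑ j ∈ range t, ((2 : ℝ) ^ (t - 1 - j)) ^ (k - 1) * g j := by
  have hmaps : ∀ κ ∈ H.image (splitType k t), κ.1 ∈ range t := by
    simp only [mem_image]
    rintro _ ⟨e, he, rfl⟩
    exact mem_range.2 (splitScale_lt hk (hH e he).1 (mem_Icc.1 (hH e he).2).1)
  rw [← sum_fiberwise_of_maps_to hmaps, mul_sum, mul_sum]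
  refine sum_le_sum fun j hj => ?_
  rw [sum_congr rfl fun κ hκ => by rw [(mem_filter.1 hκ).2], sum_const, nsmul_eq_mul]
  have hcount : (((H.image (splitType k t)).filter (·.1 = j)).card : ℝ) * (k - 1)! ≤
      (2 ^ (t - 1 - j)) ^ (k - 1) * ∑ i ∈ Icc k r, ((2 * k - 2).choose i : ℝ) := by
    exact_mod_cast card_filter_splitType_mul_factorial_le hk (mem_range.1 hj) hH
  calc _ = (((H.image (splitType k t)).filter (·.1 = j)).card : ℝ) * (k - 1)! * g j := by ring
    _ ≤ (2 ^ (t - 1 - j)) ^ (k - 1) * (∑ i ∈ Icc k r, ((2 * k - 2).choose i : ℝ)) * g j :=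
      mul_le_mul_of_nonneg_right hcount (hg j)
    _ = _ := by ring

theorem factorial_mul_sum_splitType_rpow_le {k r t : ℕ} {α : ℝ} (hk : 2 ≤ k)
    (hα : (k : ℝ) - 1 < α) {H : Finset (Finset ℕ)}
    (hH : ∀ e ∈ H, e ⊆ range (2 ^ t) ∧ e.card ∈ Icc k r) :
    ((k - 1)! : ℝ) * ∑ κ ∈ H.image (splitType k t), ((2 : ℝ) ^ κ.1) ^ α ≤
      (∑ i ∈ Icc k r, ((2 * k - 2).choose i : ℝ)) * ((2 : ℝ) ^ (t - 1)) ^ α /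
        (1 - 2 ^ ((k : ℝ) - 1 - α)) := by
  refine (factorial_mul_sum_splitType_le (g := fun j => ((2 : ℝ) ^ j) ^ α) hk hH
    fun j => by positivity).trans ?_
  rw [mul_div_assoc]
  gcongr
  refine (sum_congr rfl fun j _ => ?_).trans_le (sum_two_pow_rpow_mul_two_pow_rpow_le hα t)
  rw [← Real.rpow_natCast, Nat.cast_sub (by omega : 1 ≤ k), Nat.cast_one]

noncomputable def splittingConstant (k r : ℕ) (α : ℝ) : ℝ :=
  (k - 1)! * (1 - 2 ^ ((k : ℝ) - 1 - α)) / ∑ j ∈ Icc k r, ((2 * k - 2).choose j : ℝ)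

theorem one_sub_two_rpow_pos {k : ℕ} {α : ℝ} (hα : (k : ℝ) - 1 < α) :
    0 < 1 - (2 : ℝ) ^ ((k : ℝ) - 1 - α) :=
  sub_pos.2 (Real.rpow_lt_one_of_one_lt_of_neg one_lt_two (by linarith))

theorem sum_choose_pos {k r : ℕ} (hk : 2 ≤ k) (hkr : k ≤ r) :
    0 < ∑ j ∈ Icc k r, ((2 * k - 2).choose j : ℝ) :=
  sum_pos' (fun _ _ => by positivity)
    ⟨k, mem_Icc.2 ⟨le_rfl, hkr⟩, by exact_mod_cast Nat.choose_pos (by omega)⟩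

theorem splittingConstant_pos {k r : ℕ} {α : ℝ} (hk : 2 ≤ k) (hkr : k ≤ r)
    (hα : (k : ℝ) - 1 < α) : 0 < splittingConstant k r α :=
  div_pos (mul_pos (by positivity) (one_sub_two_rpow_pos hα)) (sum_choose_pos hk hkr)

theorem exists_le_card_filter_splitType {k r t : ℕ} {α : ℝ} (hk : 2 ≤ k) (hkr : k ≤ r)
    (hα : (k : ℝ) - 1 < α) {H : Finset (Finset ℕ)} (hne : H.Nonempty)
    (hH : ∀ e ∈ H, e ⊆ range (2 ^ t) ∧ e.card ∈ Icc k r) :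
    ∃ e ∈ H, splittingConstant k r α * (H.card / ((2 : ℝ) ^ (t - 1)) ^ α) *
      ((2 ^ splitScale k t e : ℕ) : ℝ) ^ α ≤
        ((H.filter (splitType k t · = splitType k t e)).card : ℝ) := by
  set d := (H.card : ℝ) / ((2 : ℝ) ^ (t - 1)) ^ α
  have hsum : ∑ κ ∈ H.image (splitType k t), splittingConstant k r α * d *
      ((2 ^ κ.1 : ℕ) : ℝ) ^ α ≤
        ∑ κ ∈ H.image (splitType k t), ((H.filter (splitType k t · = κ)).card : ℝ) := by
    have hX := one_sub_two_rpow_pos hα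
    have hD := sum_choose_pos hk hkr
    unfold splittingConstant
    set X := (2 : ℝ) ^ ((k : ℝ) - 1 - α)
    set D := ∑ j ∈ Icc k r, ((2 * k - 2).choose j : ℝ)
    calc _ = d * (1 - X) / D *
          (((k - 1)! : ℝ) * ∑ κ ∈ H.image (splitType k t), ((2 : ℝ) ^ κ.1) ^ α) := by
          rw [mul_sum, mul_sum]
          push_cast
          ring_nf
      _ ≤ d * (1 - X) / D * (D * ((2 : ℝ) ^ (t - 1)) ^ α / (1 - X)) := by
          gcongr
          exact factorial_mul_sum_splitType_rpow_le hk hα hH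
      _ = H.card := by
          field_simp
          exact div_mul_cancel₀ _ (by positivity)
      _ = _ := by
          rw [card_eq_sum_card_image (splitType k t) H]
          push_cast
          rfl
  obtain ⟨κ, hκ, hle⟩ := exists_le_of_sum_le (hne.image _) hsum
  obtain ⟨e, he, rfl⟩ := mem_image.1 hκ
  exact ⟨e, he, hle⟩

end IntervalSplitting

open IntervalSplitting

theorem splitting_theorem_large_alpha_general (k r n : ℕ) (α : ℝ)
    (hk : 2 ≤ k) (hkr : k ≤ r) (hrn : r ≤ n)
    (hα₁ : (k : ℝ) - 1 < α)
    (d : ℝ) (hd : 0 < d)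
    (H : Finset (Finset ℕ)) (hH : ∀ e ∈ H, e ⊆ Finset.Icc 1 n ∧ e.card = r)
    (hcard : (H.card : ℝ) = d * (n : ℝ) ^ α) :
    0 < ((k - 1).factorial : ℝ) * (1 - (2 : ℝ) ^ ((k : ℝ) - 1 - α))
          / (∑ j ∈ Finset.Icc k r, (Nat.choose (2 * k - 2) j : ℝ)) ∧
    ∃ m : ℕ, 1 ≤ m ∧ m ≤ n ∧ ∃ H' ⊆ H, IntervalKPartiteB k m H' ∧
      ((k - 1).factorial : ℝ) * (1 - (2 : ℝ) ^ ((k : ℝ) - 1 - α))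
          / (∑ j ∈ Finset.Icc k r, (Nat.choose (2 * k - 2) j : ℝ))
        * d * (m : ℝ) ^ α ≤ (H'.card : ℝ) := by
  refine ⟨splittingConstant_pos hk hkr hα₁, ?_⟩
  have hα : 0 ≤ α := by
    have : (2 : ℝ) ≤ k := by exact_mod_cast hk
    linarith
  have hn : (0 : ℝ) < n := by exact_mod_cast (show 0 < n by omega)
  set t := Nat.log 2 n + 1
  have htn : 2 ^ (t - 1) ≤ n := Nat.pow_log_le_self 2 (by omega)
  have hH' : ∀ e ∈ H, e ⊆ range (2 ^ t) ∧ e.card ∈ Icc k r := fun e he =>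
    ⟨fun x hx => mem_range.2 ((mem_Icc.1 ((hH e he).1 hx)).2.trans_lt
      (Nat.lt_pow_succ_log_self one_lt_two n)),
      by rw [(hH e he).2]; exact mem_Icc.2 ⟨hkr, le_rfl⟩⟩
  have hne : H.Nonempty :=
    card_pos.1 (by exact_mod_cast hcard ▸ mul_pos hd (Real.rpow_pos_of_pos hn α))
  have hd' : d ≤ H.card / ((2 : ℝ) ^ (t - 1)) ^ α := by
    rw [le_div_iff₀ (by positivity), hcard]
    exact mul_le_mul_of_nonneg_left
      (Real.rpow_le_rpow (by positivity) (by exact_mod_cast htn) hα) hd.le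
  obtain ⟨e, he, hle⟩ := exists_le_card_filter_splitType hk hkr hα₁ hne hH'
  have hke := (mem_Icc.1 (hH' e he).2).1
  refine ⟨2 ^ splitScale k t e, Nat.one_le_two_pow,
    (Nat.pow_le_pow_right two_pos (by have := splitScale_lt hk (hH' e he).1 hke; omega)).trans htn,
    _, filter_subset _ _, intervalKPartiteB_filter_splitType_eq hke, le_trans ?_ hle⟩
  show splittingConstant k r α * d * _ ≤ _
  gcongr
  exact (splittingConstant_pos hk hkr hα₁).le

/-- Theorem 2 (splitting theorem, case α > k-1): with
c = (k-1)!·(1 - 2^{k-1-α}) / Σ_{j=k}^r C(2k-2,j) one has c > 0, and every ordered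
r-graph H on [n] with d·n^α edges contains, for some m ∈ [n], an interval k-partite
subgraph H' with parts of size at most m and e(H') ≥ c·d·m^α. -/
theorem splitting_theorem_large_alpha (k r n : ℕ) (α : ℝ)
    (hk : 2 ≤ k) (hkr : k ≤ r) (hrn : r ≤ n)
    (hα₁ : (k : ℝ) - 1 < α) (hα₂ : α ≤ r)
    (d : ℝ) (hd : 0 < d)
    (H : Finset (Finset ℕ)) (hH : ∀ e ∈ H, e ⊆ Finset.Icc 1 n ∧ e.card = r)
    (hcard : (H.card : ℝ) = d * (n : ℝ) ^ α) :
    0 < ((k - 1).factorial : ℝ) * (1 - (2 : ℝ) ^ ((k : ℝ) - 1 - α))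
          / (∑ j ∈ Finset.Icc k r, (Nat.choose (2 * k - 2) j : ℝ)) ∧
    ∃ m : ℕ, 1 ≤ m ∧ m ≤ n ∧ ∃ H' ⊆ H, IntervalKPartiteB k m H' ∧
      ((k - 1).factorial : ℝ) * (1 - (2 : ℝ) ^ ((k : ℝ) - 1 - α))
          / (∑ j ∈ Finset.Icc k r, (Nat.choose (2 * k - 2) j : ℝ))
        * d * (m : ℝ) ^ α ≤ (H'.card : ℝ) :=
  splitting_theorem_large_alpha_general k r n α hk hkr hrn hα₁ d hd H hH hcard
end

section
/- Let 2 ≤ k ≤ r ≤ n and α = k - 1. There is a constant c > 0 depending only on k and r such that every ordered r-graph H on [n] with e(H) = d·n^{k-1} edges contains, for some m ∈ [n], an interval k-partite subgraph H' with parts of size at most m and e(H') ≥ c·d·m^{k-1}/(1 + log₂ n). -/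
namespace SplitAux

/-- the j-th dyadic interval at level t (intervals of length 2^(T-t)). -/
def Iv (T t j : ℕ) : Finset ℕ := Finset.Icc (j * 2^(T-t) + 1) ((j+1) * 2^(T-t))

/-- set of indices of level-t intervals met by e -/
def SS (T t : ℕ) (e : Finset ℕ) : Finset ℕ :=
  (Finset.range (2^t)).filter fun j => (e ∩ Iv T t j).Nonempty

/-- first level at which e meets ≥ k intervals -/
noncomputable def lev (k T : ℕ) (e : Finset ℕ) : ℕ := sInf {t | k ≤ (SS T t e).card}

lemma Iv_card (T t j : ℕ) : (Iv T t j).card = 2^(T-t) := by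
  simp only [Iv, Nat.card_Icc, add_mul]; omega

lemma Iv_precedes {T t j j' : ℕ} (h : j < j') : Precedes (Iv T t j) (Iv T t j') := by
  intro x hx y hy
  simp only [Iv, Finset.mem_Icc] at hx hy
  have : (j+1) * 2^(T-t) ≤ j' * 2^(T-t) := Nat.mul_le_mul_right _ h
  omega

lemma Iv_cover {T t x : ℕ} (hx1 : 1 ≤ x) (hx2 : x ≤ 2^T) (htT : t ≤ T) :
    (x-1) / 2^(T-t) < 2^t ∧ x ∈ Iv T t ((x-1) / 2^(T-t)) := by
  have hs : 0 < 2^(T-t) := Nat.pow_pos (by norm_num)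
  have h2T : 2^t * 2^(T-t) = 2^T := by
    rw [← pow_add]; congr 1; omega
  constructor
  · rw [Nat.div_lt_iff_lt_mul hs]
    calc x - 1 < 2^T := by omega
    _ = 2^t * 2^(T-t) := h2T.symm
  · have h1 : (x-1)/2^(T-t) * 2^(T-t) ≤ x - 1 := Nat.div_mul_le_self _ _
    have h2 : x - 1 < ((x-1)/2^(T-t) + 1) * 2^(T-t) := by
      have h3 := Nat.lt_succ_self ((x-1)/2^(T-t))
      rwa [Nat.div_lt_iff_lt_mul hs] at h3
    simp only [Iv, Finset.mem_Icc]
    omega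

lemma Iv_coarse {T t j : ℕ} (ht : 1 ≤ t) (htT : t ≤ T) :
    Iv T t j ⊆ Iv T (t-1) (j/2) := by
  intro x hx
  have h2 : 2^(T-(t-1)) = 2 * 2^(T-t) := by
    rw [← pow_succ']; congr 1; omega
  simp only [Iv, Finset.mem_Icc] at hx ⊢
  rw [h2]
  have hj1 : j/2 * 2 ≤ j := Nat.div_mul_le_self _ _
  have hj2 : j + 1 ≤ (j/2 + 1) * 2 := by omega
  constructor
  · calc j/2 * (2 * 2^(T-t)) + 1 = (j/2 * 2) * 2^(T-t) + 1 := by ring_nf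
    _ ≤ j * 2^(T-t) + 1 := by
        have := Nat.mul_le_mul_right (2^(T-t)) hj1; omega
    _ ≤ x := hx.1
  · calc x ≤ (j+1) * 2^(T-t) := hx.2
    _ ≤ ((j/2+1) * 2) * 2^(T-t) := Nat.mul_le_mul_right _ hj2
    _ = (j/2+1) * (2 * 2^(T-t)) := by ring

lemma SS_coarse {T t : ℕ} (ht : 1 ≤ t) (htT : t ≤ T) (e : Finset ℕ) :
    (SS T t e).image (· / 2) ⊆ SS T (t-1) e := by
  intro c hc
  simp only [Finset.mem_image] at hc
  obtain ⟨j, hj, rfl⟩ := hc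
  simp only [SS, Finset.mem_filter, Finset.mem_range] at hj ⊢
  constructor
  · have h2 : 2^t = 2^(t-1) * 2 := by rw [← pow_succ]; congr 1; omega
    have := hj.1
    rw [h2] at this
    exact Nat.div_lt_of_lt_mul (by omega : j < 2 * 2^(t-1))
  · obtain ⟨x, hx⟩ := hj.2
    simp only [Finset.mem_inter] at hx
    exact ⟨x, Finset.mem_inter.2 ⟨hx.1, Iv_coarse ht htT hx.2⟩⟩

lemma SS_top {T n r k : ℕ} {e : Finset ℕ} (he : e ⊆ Finset.Icc 1 n) (hec : e.card = r)
    (hn : n ≤ 2^T) (hkr : k ≤ r) : k ≤ (SS T T e).card := by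
  have : e.card ≤ (SS T T e).card := by
    apply Finset.card_le_card_of_injOn (fun x => x - 1)
    · intro x hx
      have hx' := he hx
      simp only [Finset.mem_Icc] at hx'
      simp only [Finset.mem_coe, SS, Finset.mem_filter, Finset.mem_range]
      have hIv : Iv T T (x-1) = Finset.Icc x x := by
        simp only [Iv, Nat.sub_self, pow_zero, mul_one]
        congr 1 <;> omega
      refine ⟨by omega, ⟨x, ?_⟩⟩
      rw [hIv]
      simp [Finset.mem_inter, Finset.mem_Icc]
      exact hx
    · intro x hx y hy hxy
      have hx' := he hx; have hy' := he hy
      simp only [Finset.mem_Icc] at hx' hy'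
      simp only at hxy
      omega
  omega

lemma lev_spec {T n r k : ℕ} {e : Finset ℕ} (he : e ⊆ Finset.Icc 1 n) (hec : e.card = r)
    (hn : n ≤ 2^T) (hkr : k ≤ r) (hk : 2 ≤ k) :
    1 ≤ lev k T e ∧ lev k T e ≤ T ∧ k ≤ (SS T (lev k T e) e).card ∧
    (SS T (lev k T e - 1) e).card < k := by
  have hne : {t | k ≤ (SS T t e).card}.Nonempty := ⟨T, SS_top he hec hn hkr⟩
  have hmem : k ≤ (SS T (lev k T e) e).card := Nat.sInf_mem hne
  have hle : lev k T e ≤ T := Nat.sInf_le (SS_top he hec hn hkr)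
  have h0 : ¬ (k ≤ (SS T 0 e).card) := by
    have : SS T 0 e ⊆ {0} := by
      intro j hj
      simp only [SS, Finset.mem_filter, Finset.mem_range] at hj
      simp; omega
    have := Finset.card_le_card this
    simp at this; omega
  have h1 : 1 ≤ lev k T e := by
    by_contra h
    push_neg at h
    have h' : lev k T e = 0 := by omega
    exact h0 (h' ▸ hmem)
  refine ⟨h1, hle, hmem, ?_⟩
  have h4 : (lev k T e - 1) ∉ {t | k ≤ (SS T t e).card} :=
    Nat.notMem_of_lt_sInf (show lev k T e - 1 < lev k T e from by omega)
  simp only [Set.mem_setOf_eq, not_le] at h4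
  exact h4


lemma fiber_partite {k T t n : ℕ} (S : Finset ℕ) (hSk : k ≤ S.card) (hn : n ≤ 2^T)
    (htT : t ≤ T) (H' : Finset (Finset ℕ))
    (hH' : ∀ e ∈ H', e ⊆ Finset.Icc 1 n ∧ SS T t e = S) :
    IntervalKPartiteB k (2^(T-t)) H' := by
  classical
  set lst := S.sort (·≤·) with hlst
  have hlen : lst.length = S.card := Finset.length_sort _
  refine ⟨S.card, hSk, fun j => Iv T t (lst.getD j 0), ?_, ?_, ?_, ?_⟩
  · intro j _; exact ⟨_, _, rfl⟩
  · intro j _; rw [Iv_card]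
  · intro j j' hjj' hj'
    apply Iv_precedes
    have hj : j < lst.length := by omega
    have hj'2 : j' < lst.length := by omega
    rw [List.getD_eq_getElem lst 0 hj, List.getD_eq_getElem lst 0 hj'2]
    exact List.Pairwise.rel_get_of_lt (Finset.sortedLT_sort S).pairwise (by exact hjj')
  · intro e he
    obtain ⟨hsub, hSe⟩ := hH' e he
    constructor
    · intro x hx
      have hx' := hsub hx
      simp only [Finset.mem_Icc] at hx'
      obtain ⟨hj0, hxIv⟩ := Iv_cover hx'.1 (le_trans hx'.2 hn) htT
      set j0 := (x-1) / 2^(T-t) with hj0def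
      have hj0S : j0 ∈ S := by
        rw [← hSe]
        simp only [SS, Finset.mem_filter, Finset.mem_range]
        exact ⟨hj0, ⟨x, Finset.mem_inter.2 ⟨hx, hxIv⟩⟩⟩
      have hj0lst : j0 ∈ lst := (Finset.mem_sort _).2 hj0S
      have hidx : lst.idxOf j0 < lst.length := List.idxOf_lt_length_iff.2 hj0lst
      refine ⟨lst.idxOf j0, by omega, ?_⟩
      show x ∈ Iv T t (lst.getD (lst.idxOf j0) 0)
      rw [List.getD_eq_getElem lst 0 hidx, List.getElem_idxOf hidx]
      exact hxIv
    · intro j hj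
      have hjl : j < lst.length := by omega
      have hmem : lst.getD j 0 ∈ S := by
        rw [List.getD_eq_getElem lst 0 hjl]
        exact (Finset.mem_sort _).1 (List.getElem_mem hjl)
      rw [← hSe] at hmem
      simp only [SS, Finset.mem_filter] at hmem
      exact hmem.2

noncomputable def phi (k : ℕ) (S : Finset ℕ) : Fin (k-1) → ℕ × Bool × Bool := fun i =>
  let lst := (S.image (· / 2)).sort (·≤·)
  let c := lst.getD (min i (lst.length - 1)) 0
  (c, decide (2*c ∈ S), decide (2*c+1 ∈ S))

lemma phi_fst_mem {k : ℕ} (S : Finset ℕ) (hS : S.Nonempty) (i : Fin (k-1)) :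
    (phi k S i).1 ∈ S.image (· / 2) := by
  classical
  have hne : (S.image (· / 2)).Nonempty := hS.image _
  set lst := (S.image (· / 2)).sort (·≤·) with hlst
  have hlen : lst.length = (S.image (· / 2)).card := Finset.length_sort _
  have hlpos : 0 < lst.length := by
    rw [hlen]; exact Finset.card_pos.2 hne
  have hidx : min i.1 (lst.length - 1) < lst.length := by omega
  show lst.getD (min i.1 (lst.length - 1)) 0 ∈ S.image (· / 2)
  rw [List.getD_eq_getElem lst 0 hidx]
  exact (Finset.mem_sort _).1 (List.getElem_mem hidx)

lemma mem_iff_phi {k : ℕ} (hk : 2 ≤ k) (S : Finset ℕ) (hS : S.Nonempty)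
    (hc : (S.image (· / 2)).card ≤ k-1) (j : ℕ) :
    j ∈ S ↔ ∃ i : Fin (k-1), (phi k S i).1 = j/2 ∧
      (if j % 2 = 0 then (phi k S i).2.1 else (phi k S i).2.2) = true := by
  classical
  set lst := (S.image (· / 2)).sort (·≤·) with hlst
  have hlen : lst.length = (S.image (· / 2)).card := Finset.length_sort _
  constructor
  · intro hj
    have hcmem : j / 2 ∈ S.image (· / 2) := Finset.mem_image_of_mem _ hj
    have hclst : j / 2 ∈ lst := (Finset.mem_sort _).2 hcmem
    have hidx : lst.idxOf (j/2) < lst.length := List.idxOf_lt_length_iff.2 hclst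
    refine ⟨⟨lst.idxOf (j/2), by omega⟩, ?_, ?_⟩
    · show lst.getD (min (lst.idxOf (j/2)) (lst.length - 1)) 0 = j/2
      have : min (lst.idxOf (j/2)) (lst.length - 1) = lst.idxOf (j/2) := by omega
      rw [this, List.getD_eq_getElem lst 0 hidx, List.getElem_idxOf hidx]
    · set c := lst.getD (min (lst.idxOf (j/2)) (lst.length - 1)) 0 with hcdef
      have hcj : c = j/2 := by
        have : min (lst.idxOf (j/2)) (lst.length - 1) = lst.idxOf (j/2) := by omega
        rw [hcdef, this, List.getD_eq_getElem lst 0 hidx, List.getElem_idxOf hidx]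
      show (if j % 2 = 0 then decide (2*c ∈ S) else decide (2*c+1 ∈ S)) = true
      rcases Nat.even_or_odd j with he | ho
      · have : j % 2 = 0 := Nat.even_iff.1 he
        rw [if_pos this]
        have : 2 * c = j := by omega
        simp [this, hj]
      · have h1 : j % 2 = 1 := Nat.odd_iff.1 ho
        rw [if_neg (by omega)]
        have : 2 * c + 1 = j := by omega
        simp [this, hj]
  · rintro ⟨i, h1, h2⟩
    set c := (phi k S i).1 with hcdef
    rcases Nat.even_or_odd j with he | ho
    · have h0 : j % 2 = 0 := Nat.even_iff.1 he
      rw [if_pos h0] at h2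
      have : (phi k S i).2.1 = decide (2*c ∈ S) := rfl
      rw [this, decide_eq_true_iff] at h2
      have : 2 * c = j := by omega
      rwa [this] at h2
    · have h1' : j % 2 = 1 := Nat.odd_iff.1 ho
      rw [if_neg (by omega)] at h2
      have : (phi k S i).2.2 = decide (2*c+1 ∈ S) := rfl
      rw [this, decide_eq_true_iff] at h2
      have : 2 * c + 1 = j := by omega
      rwa [this] at h2

lemma family_card {k t : ℕ} (hk : 2 ≤ k) (ht : 1 ≤ t) (F : Finset (Finset ℕ))
    (hF : ∀ S ∈ F, S.Nonempty ∧ S ⊆ Finset.range (2^t) ∧ (S.image (· / 2)).card ≤ k-1) :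
    F.card ≤ 2^((t+1)*(k-1)) := by
  classical
  have hbound := Finset.card_le_card_of_injOn (phi k)
    (t := Fintype.piFinset fun _ : Fin (k-1) =>
      (Finset.range (2^(t-1)) ×ˢ (Finset.univ : Finset Bool) ×ˢ (Finset.univ : Finset Bool)))
    (fun S hS => by
      obtain ⟨hne, hsub, hcard⟩ := hF S hS
      rw [Finset.mem_coe, Fintype.mem_piFinset]
      intro i
      simp only [Finset.mem_product, Finset.mem_univ, and_true]
      have h1 := phi_fst_mem S hne i
      simp only [Finset.mem_image] at h1
      obtain ⟨a, ha, hae⟩ := h1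
      have := hsub ha
      simp only [Finset.mem_range] at this ⊢
      have h2t : 2^t = 2 * 2^(t-1) := by rw [← pow_succ']; congr 1; omega
      omega)
    (fun S1 h1 S2 h2 heq => by
      obtain ⟨hne1, _, hc1⟩ := hF S1 h1
      obtain ⟨hne2, _, hc2⟩ := hF S2 h2
      ext j
      rw [mem_iff_phi hk S1 hne1 hc1 j, mem_iff_phi hk S2 hne2 hc2 j, heq])
  calc F.card ≤ _ := hbound
  _ = ((Finset.range (2^(t-1)) ×ˢ (Finset.univ : Finset Bool) ×ˢ (Finset.univ : Finset Bool)).card)^(k-1) := by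
      rw [Fintype.card_piFinset]
      simp [Finset.prod_const]
  _ ≤ 2^((t+1)*(k-1)) := by
      have : (Finset.range (2^(t-1)) ×ˢ (Finset.univ : Finset Bool) ×ˢ (Finset.univ : Finset Bool)).card = 2^(t+1) := by
        simp [Finset.card_product]
        have h2t : 2^(t+1) = 2^(t-1) * 4 := by
          rw [show t+1 = (t-1) + 2 by omega, pow_add]; norm_num
        omega
      rw [this, ← pow_mul]

end SplitAux


/-- Theorem 2 (splitting theorem, case α = k-1): for 2 ≤ k ≤ r there is c > 0,
depending only on k and r, such that every ordered r-graph H on [n] (r ≤ n) with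
d·n^{k-1} edges contains, for some m ∈ [n], an interval k-partite subgraph H'
with parts of size at most m and e(H') ≥ c·d·m^{k-1}/(1 + log₂ n). -/
theorem splitting_theorem_critical_alpha (k r : ℕ) (hk : 2 ≤ k) (hkr : k ≤ r) :
    ∃ c : ℝ, 0 < c ∧ ∀ n : ℕ, r ≤ n → ∀ d : ℝ, 0 < d →
      ∀ H : Finset (Finset ℕ), (∀ e ∈ H, e ⊆ Finset.Icc 1 n ∧ e.card = r) →
      (H.card : ℝ) = d * (n : ℝ) ^ (k - 1) →
      ∃ m : ℕ, 1 ≤ m ∧ m ≤ n ∧ ∃ H' ⊆ H, IntervalKPartiteB k m H' ∧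
        c * d * (m : ℝ) ^ (k - 1) / (1 + Real.logb 2 n) ≤ (H'.card : ℝ) := by
  classical
  refine ⟨1 / (2 * 4^(k-1)), by positivity, ?_⟩
  intro n hn d hd H hH hcard
  by_contra hcon
  push_neg at hcon
  set cc : ℝ := 1 / (2 * 4^(k-1)) with hcc
  have hcc0 : 0 < cc := by rw [hcc]; positivity
  set T := Nat.clog 2 n with hTdef
  have hn2 : 2 ≤ n := le_trans (le_trans hk hkr) hn
  have hnT : n ≤ 2^T := Nat.le_pow_clog (by norm_num) n
  have hT1 : 1 ≤ T := Nat.clog_pos (by norm_num) hn2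
  have hTlt : 2^(T-1) < n := Nat.pow_pred_clog_lt_self (by norm_num) hn2
  have hL0 : (0:ℝ) < 1 + Real.logb 2 n := by
    have : (0:ℝ) ≤ Real.logb 2 n :=
      Real.logb_nonneg (by norm_num) (by exact_mod_cast (by omega : 1 ≤ n))
    linarith
  have hTL : (T : ℝ) ≤ 1 + Real.logb 2 n := by
    have h1 : ((2:ℝ))^(T-1) ≤ (n:ℝ) := by exact_mod_cast hTlt.le
    have h2 : Real.logb 2 ((2:ℝ)^(T-1)) ≤ Real.logb 2 n :=
      Real.logb_le_logb_of_le (by norm_num) (by positivity) h1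
    rw [Real.logb_pow, Real.logb_self_eq_one (by norm_num)] at h2
    rw [Nat.cast_sub hT1] at h2
    push_cast at h2
    linarith
  have hspec : ∀ e ∈ H, 1 ≤ SplitAux.lev k T e ∧ SplitAux.lev k T e ≤ T ∧
      k ≤ (SplitAux.SS T (SplitAux.lev k T e) e).card ∧
      (SplitAux.SS T (SplitAux.lev k T e - 1) e).card < k :=
    fun e he => SplitAux.lev_spec (hH e he).1 (hH e he).2 hnT hkr hk
  have hdec : H.card = ∑ t ∈ Finset.Icc 1 T, (H.filter fun e => SplitAux.lev k T e = t).card :=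
    Finset.card_eq_sum_card_fiberwise
      (fun e he => Finset.mem_Icc.2 ⟨(hspec e he).1, (hspec e he).2.1⟩)
  have hlev : ∀ t ∈ Finset.Icc 1 T,
      ((H.filter fun e => SplitAux.lev k T e = t).card : ℝ)
        ≤ (2:ℝ)^((t+1)*(k-1)) * (cc * d * ((2:ℝ)^(T-t))^(k-1) / (1 + Real.logb 2 n)) := by
    intro t ht
    rw [Finset.mem_Icc] at ht
    set Ht := H.filter fun e => SplitAux.lev k T e = t with hHt
    set F := Ht.image (SplitAux.SS T t) with hFdef
    have hdec2 : Ht.card = ∑ S ∈ F, (Ht.filter fun e => SplitAux.SS T t e = S).card :=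
      Finset.card_eq_sum_card_fiberwise (fun e he => Finset.mem_image_of_mem _ he)
    have hB0 : (0:ℝ) ≤ cc * d * ((2:ℝ)^(T-t))^(k-1) / (1 + Real.logb 2 n) :=
      div_nonneg (mul_nonneg (mul_nonneg hcc0.le hd.le) (by positivity)) hL0.le
    have hfib : ∀ S ∈ F, ((Ht.filter fun e => SplitAux.SS T t e = S).card : ℝ)
        ≤ cc * d * ((2:ℝ)^(T-t))^(k-1) / (1 + Real.logb 2 n) := by
      intro S hSF
      obtain ⟨e0, he0, hSe0⟩ := Finset.mem_image.1 hSF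
      have he0H : e0 ∈ H := (Finset.mem_filter.1 he0).1
      have hlev0 : SplitAux.lev k T e0 = t := (Finset.mem_filter.1 he0).2
      have hSk : k ≤ S.card := by
        rw [← hSe0]
        have := (hspec e0 he0H).2.2.1
        rwa [hlev0] at this
      have hpart : IntervalKPartiteB k (2^(T-t)) (Ht.filter fun e => SplitAux.SS T t e = S) :=
        SplitAux.fiber_partite S hSk hnT ht.2 _
          (fun e he => ⟨(hH e ((Finset.mem_filter.1 (Finset.mem_filter.1 he).1).1)).1,
            (Finset.mem_filter.1 he).2⟩)
      have hm1 : 1 ≤ 2^(T-t) := Nat.one_le_two_pow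
      have hm2 : 2^(T-t) ≤ n := by
        have : (2:ℕ)^(T-t) ≤ 2^(T-1) := Nat.pow_le_pow_right (by norm_num) (by omega)
        omega
      have hsub : (Ht.filter fun e => SplitAux.SS T t e = S) ⊆ H :=
        (Finset.filter_subset _ _).trans (Finset.filter_subset _ _)
      have hlt := hcon (2^(T-t)) hm1 hm2 _ hsub hpart
      push_cast at hlt
      linarith
    have hFcard : F.card ≤ 2^((t+1)*(k-1)) := by
      apply SplitAux.family_card hk ht.1
      intro S hSF
      obtain ⟨e0, he0, hSe0⟩ := Finset.mem_image.1 hSF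
      have he0H : e0 ∈ H := (Finset.mem_filter.1 he0).1
      have hlev0 : SplitAux.lev k T e0 = t := (Finset.mem_filter.1 he0).2
      have hSk : k ≤ S.card := by
        rw [← hSe0]
        have := (hspec e0 he0H).2.2.1
        rwa [hlev0] at this
      refine ⟨Finset.card_pos.1 (by omega), ?_, ?_⟩
      · rw [← hSe0]; exact Finset.filter_subset _ _
      · have hsub2 : S.image (· / 2) ⊆ SplitAux.SS T (t-1) e0 := by
          rw [← hSe0]; exact SplitAux.SS_coarse ht.1 ht.2 e0
        have hcard2 : (SplitAux.SS T (t-1) e0).card < k := by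
          have := (hspec e0 he0H).2.2.2
          rwa [hlev0] at this
        have := Finset.card_le_card hsub2
        omega
    calc ((Ht.card : ℕ) : ℝ)
        = ∑ S ∈ F, ((Ht.filter fun e => SplitAux.SS T t e = S).card : ℝ) := by
          rw [hdec2]; push_cast; ring
      _ ≤ ∑ _S ∈ F, (cc * d * ((2:ℝ)^(T-t))^(k-1) / (1 + Real.logb 2 n)) :=
          Finset.sum_le_sum hfib
      _ = F.card * (cc * d * ((2:ℝ)^(T-t))^(k-1) / (1 + Real.logb 2 n)) := by
          rw [Finset.sum_const, nsmul_eq_mul]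
      _ ≤ (2:ℝ)^((t+1)*(k-1)) * (cc * d * ((2:ℝ)^(T-t))^(k-1) / (1 + Real.logb 2 n)) := by
          apply mul_le_mul_of_nonneg_right _ hB0
          calc (F.card:ℝ) ≤ ((2^((t+1)*(k-1)) : ℕ):ℝ) := by exact_mod_cast hFcard
            _ = (2:ℝ)^((t+1)*(k-1)) := by push_cast; ring
  have htot : (H.card : ℝ) ≤ (T:ℝ) * (cc * d * ((2:ℝ)^(T+1))^(k-1) / (1 + Real.logb 2 n)) := by
    calc (H.card : ℝ)
        = ∑ t ∈ Finset.Icc 1 T, ((H.filter fun e => SplitAux.lev k T e = t).card:ℝ) := by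
          rw [hdec]; push_cast; ring
      _ ≤ ∑ t ∈ Finset.Icc 1 T,
            (2:ℝ)^((t+1)*(k-1)) * (cc * d * ((2:ℝ)^(T-t))^(k-1) / (1 + Real.logb 2 n)) :=
          Finset.sum_le_sum hlev
      _ = ∑ _t ∈ Finset.Icc 1 T, (cc * d * ((2:ℝ)^(T+1))^(k-1) / (1 + Real.logb 2 n)) := by
          apply Finset.sum_congr rfl
          intro t ht
          rw [Finset.mem_Icc] at ht
          have he : (2:ℝ)^((t+1)*(k-1)) * ((2:ℝ)^(T-t))^(k-1) = ((2:ℝ)^(T+1))^(k-1) := by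
            rw [pow_mul, ← mul_pow, ← pow_add]
            congr 2
            omega
          calc (2:ℝ)^((t+1)*(k-1)) * (cc * d * ((2:ℝ)^(T-t))^(k-1) / (1 + Real.logb 2 n))
              = ((2:ℝ)^((t+1)*(k-1)) * ((2:ℝ)^(T-t))^(k-1)) * (cc * d / (1 + Real.logb 2 n)) := by
                ring
            _ = ((2:ℝ)^(T+1))^(k-1) * (cc * d / (1 + Real.logb 2 n)) := by rw [he]
            _ = cc * d * ((2:ℝ)^(T+1))^(k-1) / (1 + Real.logb 2 n) := by ring
      _ = (T:ℝ) * (cc * d * ((2:ℝ)^(T+1))^(k-1) / (1 + Real.logb 2 n)) := by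
          rw [Finset.sum_const, Nat.card_Icc, nsmul_eq_mul]
          norm_num
  have h4n : ((2:ℝ)^(T+1))^(k-1) ≤ (4*(n:ℝ))^(k-1) := by
    apply pow_le_pow_left₀ (by positivity)
    have h1 : (2:ℝ)^(T-1) ≤ (n:ℝ) := by exact_mod_cast hTlt.le
    have h2 : (2:ℝ)^(T+1) = 4 * (2:ℝ)^(T-1) := by
      rw [show T+1 = (T-1)+2 by omega, pow_add]; ring
    rw [h2]; linarith
  have hpos : (0:ℝ) < (H.card:ℝ) := by
    rw [hcard]
    have : (0:ℝ) < (n:ℝ) := by exact_mod_cast (by omega : 0 < n)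
    positivity
  have hB0' : (0:ℝ) ≤ cc * d / (1 + Real.logb 2 n) :=
    div_nonneg (mul_nonneg hcc0.le hd.le) hL0.le
  have hfin : (H.card:ℝ) ≤ (H.card:ℝ)/2 := by
    calc (H.card:ℝ) ≤ (T:ℝ) * (cc * d * ((2:ℝ)^(T+1))^(k-1) / (1 + Real.logb 2 n)) := htot
      _ ≤ (1 + Real.logb 2 n) * (cc * d * ((2:ℝ)^(T+1))^(k-1) / (1 + Real.logb 2 n)) := by
          apply mul_le_mul_of_nonneg_right hTL
          exact div_nonneg (mul_nonneg (mul_nonneg hcc0.le hd.le) (by positivity)) hL0.le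
      _ = cc * d * ((2:ℝ)^(T+1))^(k-1) := by field_simp
      _ ≤ cc * d * (4*(n:ℝ))^(k-1) := by
          apply mul_le_mul_of_nonneg_left h4n (mul_nonneg hcc0.le hd.le)
      _ = d * (n:ℝ)^(k-1) / 2 := by
          rw [hcc, mul_pow]
          have h4 : ((4:ℝ))^(k-1) ≠ 0 := by positivity
          field_simp
      _ = (H.card:ℝ)/2 := by rw [hcard]
  linarith
end

section
/- Let H be the ordered r-graph with vertex set [n] (with the usual order) whose edges are the sets {v₁ < v₂ < ⋯ < v_r} such that v_{i+1} - v_i is a power of 2 for all 1 ≤ i ≤ r - k + 1, where 2 ≤ k ≤ r. Then e(H) = Θ(n^{k-1}(log n)^{r-k+1}); in particular there are constants c₁, c₂ > 0 such that c₁ n^{k-1}(log₂ n)^{r-k+1} ≤ e(H) ≤ c₂ n^{k-1}(log₂ n)^{r-k+1} for all n sufficiently large. -/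
open Classical in
/-- The ordered r-graph on [n] whose edges are the r-sets
{v₁ < v₂ < ⋯ < v_r} ⊆ [n] with v_{i+1} - v_i a power of 2 for 1 ≤ i ≤ r-k+1. -/
noncomputable def pow2chain (r k n : ℕ) : Finset (Finset ℕ) :=
  ((Finset.Icc 1 n).powersetCard r).filter (fun e =>
    ∀ i < r - k + 1, ∃ t : ℕ,
      (Finset.sort e (· ≤ ·)).getD (i + 1) 0 - (Finset.sort e (· ≤ ·)).getD i 0 = 2 ^ t)

namespace P2C


/-- the i-th smallest element -/
noncomputable def w (e : Finset ℕ) (i : ℕ) : ℕ := (Finset.sort e (· ≤ ·)).getD i 0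

lemma w_mem {e : Finset ℕ} {i : ℕ} (h : i < e.card) : w e i ∈ e := by
  rw [w, List.getD_eq_getElem _ _ (by simpa using h)]
  exact (Finset.mem_sort _).mp (List.getElem_mem _)

lemma w_lt_w {e : Finset ℕ} {i j : ℕ} (hij : i < j) (h : j < e.card) : w e i < w e j := by
  have hl : (Finset.sort e (· ≤ ·)).length = e.card := Finset.length_sort _
  rw [w, w, List.getD_eq_getElem _ _ (by omega), List.getD_eq_getElem _ _ (by omega)]
  have := (List.sortedLT_iff_pairwise.mp (Finset.sortedLT_sort e))
  rw [List.pairwise_iff_getElem] at this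
  exact this _ _ _ _ hij

lemma mem_pow2chain {r k n : ℕ} {e : Finset ℕ} :
    e ∈ pow2chain r k n ↔ (e ⊆ Finset.Icc 1 n ∧ e.card = r) ∧
      ∀ i < r - k + 1, ∃ t : ℕ, w e (i+1) - w e i = 2 ^ t := by
  simp [pow2chain, Finset.mem_filter, Finset.mem_powersetCard, w]

lemma upper (r k n : ℕ) (hk : 2 ≤ k) (hkr : k ≤ r) (hn : 1 ≤ n) :
    (pow2chain r k n).card ≤ n * (Nat.log 2 n + 1) ^ (r - k + 1) * n ^ (k - 2) := by
  set m := r - k + 1 with hm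
  set L := Nat.log 2 n with hL
  set T : Finset (ℕ × (Fin m → ℕ) × Finset ℕ) :=
    (Finset.Icc 1 n) ×ˢ (Fintype.piFinset fun _ : Fin m => Finset.range (L+1)) ×ˢ
      ((Finset.Icc 1 n).powersetCard (k-2)) with hT
  have hcardT : T.card = n * (L+1) ^ m * (n.choose (k-2)) := by
    rw [hT, Finset.card_product, Finset.card_product, Fintype.card_piFinset]
    simp [Nat.card_Icc, mul_assoc]
  have key : (pow2chain r k n).card ≤ T.card := by
    apply Finset.card_le_card_of_injOn
      (fun e => (w e 0, fun i : Fin m => Nat.log 2 (w e (i+1) - w e i),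
        e \ (Finset.range (m+1)).image (w e)))
    · -- maps to T
      intro e he
      obtain ⟨⟨hsub, hcard⟩, hgap⟩ := mem_pow2chain.mp he
      have hm1r : m + 1 ≤ r := by omega
      have hchain_sub : (Finset.range (m+1)).image (w e) ⊆ e := by
        intro x hx
        obtain ⟨i, hi, rfl⟩ := Finset.mem_image.mp hx
        exact w_mem (by rw [hcard]; exact lt_of_lt_of_le (Finset.mem_range.mp hi) hm1r)
      have hchain_card : ((Finset.range (m+1)).image (w e)).card = m + 1 := by
        rw [Finset.card_image_of_injOn, Finset.card_range]
        intro a ha b hb hab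
        by_contra hne
        rcases lt_or_gt_of_ne hne with h | h
        · exact absurd hab (Nat.ne_of_lt (w_lt_w h (by rw [hcard]; exact lt_of_lt_of_le (Finset.mem_range.mp hb) hm1r)))
        · exact absurd hab.symm (Nat.ne_of_lt (w_lt_w h (by rw [hcard]; exact lt_of_lt_of_le (Finset.mem_range.mp ha) hm1r)))
      simp only [hT, Finset.mem_coe, Finset.mem_product, Finset.mem_powersetCard]
      refine ⟨?_, ?_, ?_, ?_⟩
      · exact hsub (w_mem (by omega))
      · simp only [Fintype.mem_piFinset, Finset.mem_range]
        intro i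
        have hi : (i : ℕ) < m := i.2
        have hwn : w e (i+1) ≤ n := by
          have := hsub (w_mem (i := (i:ℕ)+1) (by omega))
          exact (Finset.mem_Icc.mp this).2
        have : w e (i+1) - w e i ≤ n := le_trans (Nat.sub_le _ _) hwn
        exact lt_of_le_of_lt (Nat.log_mono_right this) (Nat.lt_succ_self _)
      · exact le_trans (Finset.sdiff_subset) hsub
      · rw [Finset.card_sdiff_of_subset hchain_sub, hcard, hchain_card]; omega
    · -- injective
      intro e he e' he' heq
      obtain ⟨⟨hsub, hcard⟩, hgap⟩ := mem_pow2chain.mp he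
      obtain ⟨⟨hsub', hcard'⟩, hgap'⟩ := mem_pow2chain.mp he'
      simp only [Prod.mk.injEq, funext_iff] at heq
      obtain ⟨h0, ht, hs⟩ := heq
      have hstep : ∀ i < m, w e (i+1) = w e i + 2 ^ Nat.log 2 (w e (i+1) - w e i) := by
        intro i hi
        obtain ⟨t, htt⟩ := hgap i hi
        have hlt : w e i < w e (i+1) := w_lt_w (Nat.lt_succ_self i) (by omega)
        rw [htt, Nat.log_pow (by norm_num), ← htt]
        omega
      have hstep' : ∀ i < m, w e' (i+1) = w e' i + 2 ^ Nat.log 2 (w e' (i+1) - w e' i) := by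
        intro i hi
        obtain ⟨t, htt⟩ := hgap' i hi
        have hlt : w e' i < w e' (i+1) := w_lt_w (Nat.lt_succ_self i) (by omega)
        rw [htt, Nat.log_pow (by norm_num), ← htt]
        omega
      have hweq : ∀ i < m + 1, w e i = w e' i := by
        intro i hi
        induction i with
        | zero => exact h0
        | succ i ih =>
          have hi' : i < m := by omega
          have htt := ht ⟨i, hi'⟩
          simp only [Fin.val_mk] at htt
          rw [hstep i hi', hstep' i hi', htt, ih (by omega)]
      have hchain_eq : (Finset.range (m+1)).image (w e) = (Finset.range (m+1)).image (w e') :=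
        Finset.image_congr fun i hi => hweq i (Finset.mem_range.mp hi)
      have hchain_sub : (Finset.range (m+1)).image (w e) ⊆ e := by
        intro x hx
        obtain ⟨i, hi, rfl⟩ := Finset.mem_image.mp hx
        exact w_mem (by rw [hcard]; have := Finset.mem_range.mp hi; omega)
      have hchain_sub' : (Finset.range (m+1)).image (w e') ⊆ e' := by
        intro x hx
        obtain ⟨i, hi, rfl⟩ := Finset.mem_image.mp hx
        exact w_mem (by rw [hcard']; have := Finset.mem_range.mp hi; omega)
      calc e = (Finset.range (m+1)).image (w e) ∪ (e \ (Finset.range (m+1)).image (w e)) :=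
              (Finset.union_sdiff_of_subset hchain_sub).symm
        _ = (Finset.range (m+1)).image (w e') ∪ (e' \ (Finset.range (m+1)).image (w e')) := by
              rw [hs, hchain_eq]
        _ = e' := Finset.union_sdiff_of_subset hchain_sub'
  calc (pow2chain r k n).card ≤ T.card := key
    _ = n * (L+1) ^ m * (n.choose (k-2)) := hcardT
    _ ≤ n * (L+1) ^ m * n ^ (k-2) := by
        exact Nat.mul_le_mul_left _ (Nat.choose_le_pow n (k-2))



def chainv (v0 : ℕ) (t : ℕ → ℕ) : ℕ → ℕ
  | 0 => v0
  | i+1 => chainv v0 t i + 2 ^ t i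

lemma chainv_strictMono (v0 : ℕ) (t : ℕ → ℕ) : StrictMono (chainv v0 t) :=
  strictMono_nat_of_lt_succ fun i => by
    simp [chainv]

lemma chainv_le {v0 B : ℕ} {t : ℕ → ℕ} {m : ℕ} (ht : ∀ i < m, t i ≤ B) :
    ∀ i ≤ m, chainv v0 t i ≤ v0 + i * 2 ^ B := by
  intro i hi
  induction i with
  | zero => simp [chainv]
  | succ i ih =>
    have h1 : chainv v0 t i ≤ v0 + i * 2 ^ B := ih (by omega)
    have h2 : 2 ^ t i ≤ 2 ^ B := Nat.pow_le_pow_right (by norm_num) (ht i (by omega))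
    calc chainv v0 t (i+1) = chainv v0 t i + 2 ^ t i := rfl
      _ ≤ v0 + i * 2 ^ B + 2 ^ B := Nat.add_le_add h1 h2
      _ = v0 + (i+1) * 2 ^ B := by ring

def tx (m : ℕ) (t : Fin m → ℕ) (i : ℕ) : ℕ := if h : i < m then t ⟨i, h⟩ else 0

lemma getD_map_range (f : ℕ → ℕ) {i n : ℕ} (h : i < n) :
    ((List.range n).map f).getD i 0 = f i := by
  rw [List.getD_eq_getElem _ _ (by simpa using h)]
  simp

lemma sorted_map_range (f : ℕ → ℕ) (hf : StrictMono f) (n : ℕ) :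
    ((List.range n).map f).Pairwise (· < ·) := by
  rw [List.pairwise_map]
  exact (List.pairwise_lt_range (n := n)).imp fun h => hf h

lemma lower (r k n : ℕ) (hk : 2 ≤ k) (hkr : k ≤ r)
    (hlog : Nat.log 2 (4 * (r - k + 1)) + 1 ≤ Nat.log 2 n) :
    (n/4) * ((Nat.log 2 n - (Nat.log 2 (4 * (r - k + 1)) + 1)) + 1) ^ (r - k + 1)
      * ((n - n/2).choose (k - 2)) ≤ (pow2chain r k n).card := by
  set m := r - k + 1 with hm
  set c₀ := Nat.log 2 (4 * m) + 1 with hc₀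
  set B := Nat.log 2 n - c₀ with hB
  have hm1 : 1 ≤ m := by omega
  have hn2 : 2 ≤ n := by
    by_contra h
    have : Nat.log 2 n = 0 := Nat.log_eq_zero_iff.mpr (Or.inl (by omega))
    omega
  -- key numeric fact : m * 2^B ≤ n/4
  have h4m : 4 * m < 2 ^ c₀ := Nat.lt_pow_succ_log_self (by norm_num) (4 * m)
  have hpow : 2 ^ (c₀ + B) ≤ n := by
    have : c₀ + B = Nat.log 2 n := by omega
    rw [this]
    exact Nat.pow_log_le_self 2 (by omega)
  have hm2B : m * 2 ^ B ≤ n / 4 := by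
    rw [Nat.le_div_iff_mul_le (by norm_num)]
    calc m * 2 ^ B * 4 = (4 * m) * 2 ^ B := by ring
      _ ≤ 2 ^ c₀ * 2 ^ B := Nat.mul_le_mul_right _ (le_of_lt h4m)
      _ = 2 ^ (c₀ + B) := (pow_add 2 c₀ B).symm
      _ ≤ n := hpow
  -- upper bound on chain values
  have hub : ∀ (v0 : ℕ) (t : Fin m → ℕ), v0 ≤ n/4 → (∀ i : Fin m, t i ≤ B) →
      ∀ i ≤ m, chainv v0 (tx m t) i ≤ n / 2 := by
    intro v0 t hv0 ht i hi
    have htx : ∀ j < m, tx m t j ≤ B := by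
      intro j hj; rw [tx, dif_pos hj]; exact ht _
    have h1 : chainv v0 (tx m t) i ≤ v0 + i * 2 ^ B := chainv_le htx i hi
    have h2 : i * 2 ^ B ≤ m * 2 ^ B := Nat.mul_le_mul_right _ hi
    have : n / 4 + n / 4 ≤ n / 2 := by omega
    omega
  -- the sort identity
  have hsortE : ∀ (v0 : ℕ) (t : Fin m → ℕ) (S : Finset ℕ),
      1 ≤ v0 → v0 ≤ n/4 → (∀ i : Fin m, t i ≤ B) → S ⊆ Finset.Ioc (n/2) n →
      Finset.sort (((List.range (m+1)).map (chainv v0 (tx m t))).toFinset ∪ S) (· ≤ ·)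
        = (List.range (m+1)).map (chainv v0 (tx m t)) ++ Finset.sort S (· ≤ ·) := by
    intro v0 t S hv0 hv0n ht hS
    set l₁ := (List.range (m+1)).map (chainv v0 (tx m t)) with hl₁
    have hsort1 : l₁.Pairwise (· < ·) := sorted_map_range _ (chainv_strictMono _ _) _
    have hcross : ∀ x ∈ l₁, ∀ y ∈ Finset.sort S (· ≤ ·), x < y := by
      intro x hx y hy
      obtain ⟨i, hi, rfl⟩ := List.mem_map.mp hx
      have hi' : i < m + 1 := List.mem_range.mp hi
      have h1 : chainv v0 (tx m t) i ≤ n / 2 := hub v0 t hv0n ht i (by omega)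
      have h2 : n / 2 < y := (Finset.mem_Ioc.mp (hS ((Finset.mem_sort _).mp hy))).1
      omega
    have hsorted : (l₁ ++ Finset.sort S (· ≤ ·)).Pairwise (· < ·) := by
      rw [List.pairwise_append]
      exact ⟨hsort1, (List.sortedLT_iff_pairwise.mp (Finset.sortedLT_sort S)), hcross⟩
    have h2 : (l₁ ++ Finset.sort S (· ≤ ·)).toFinset = l₁.toFinset ∪ S := by
      simp
    rw [← h2]
    exact (List.toFinset_sort _ hsorted.nodup).mpr (hsorted.imp fun h => le_of_lt h)
  -- domain
  set D : Finset (ℕ × (Fin m → ℕ) × Finset ℕ) :=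
    (Finset.Icc 1 (n/4)) ×ˢ (Fintype.piFinset fun _ : Fin m => Finset.range (B+1)) ×ˢ
      ((Finset.Ioc (n/2) n).powersetCard (k-2)) with hD
  have hcardD : D.card = (n/4) * (B+1) ^ m * ((n - n/2).choose (k-2)) := by
    rw [hD, Finset.card_product, Finset.card_product, Fintype.card_piFinset]
    simp [Nat.card_Icc, Nat.card_Ioc, mul_assoc]
  rw [show (Nat.log 2 n - (Nat.log 2 (4 * m) + 1)) + 1 = B + 1 from rfl, ← hcardD]
  apply Finset.card_le_card_of_injOn
    (fun p => ((List.range (m+1)).map (chainv p.1 (tx m p.2.1))).toFinset ∪ p.2.2)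
  · -- membership
    rintro ⟨v0, t, S⟩ hp
    simp only [hD, Finset.mem_coe, Finset.mem_product, Finset.mem_Icc, Fintype.mem_piFinset,
      Finset.mem_range, Finset.mem_powersetCard] at hp
    obtain ⟨⟨hv01, hv0n⟩, htB, hSsub, hScard⟩ := hp
    have htB' : ∀ i : Fin m, t i ≤ B := fun i => by have := htB i; omega
    set l₁ := (List.range (m+1)).map (chainv v0 (tx m t)) with hl₁
    have hsort1 : l₁.Pairwise (· < ·) := sorted_map_range _ (chainv_strictMono _ _) _
    have hsE := hsortE v0 t S hv01 hv0n htB' hSsub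
    have hgetD : ∀ i ≤ m, w (l₁.toFinset ∪ S) i = chainv v0 (tx m t) i := by
      intro i hi
      rw [w, hsE, List.getD_append _ _ _ _
        (by simp only [List.length_map, List.length_range]; omega)]
      exact getD_map_range _ (by omega)
    refine mem_pow2chain.mpr ⟨⟨?_, ?_⟩, ?_⟩
    · intro x hx
      rcases Finset.mem_union.mp hx with hx | hx
      · simp only [List.mem_toFinset] at hx
        obtain ⟨i, hi, rfl⟩ := List.mem_map.mp hx
        have hi' : i < m + 1 := List.mem_range.mp hi
        have h1 : chainv v0 (tx m t) i ≤ n / 2 := hub v0 t hv0n htB' i (by omega)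
        have h2 : v0 ≤ chainv v0 (tx m t) i := (chainv_strictMono v0 _).monotone (Nat.zero_le i)
        rw [Finset.mem_Icc]
        constructor
        · omega
        · have := Nat.div_le_self n 2; omega
      · have := Finset.mem_Ioc.mp (hSsub hx)
        rw [Finset.mem_Icc]; omega
    · have hdisj : Disjoint l₁.toFinset S := by
        rw [Finset.disjoint_left]
        intro x hx hxS
        rw [List.mem_toFinset, hl₁] at hx
        obtain ⟨i, hi, rfl⟩ := List.mem_map.mp hx
        have hi' : i < m + 1 := List.mem_range.mp hi
        have h1 : chainv v0 (tx m t) i ≤ n / 2 := hub v0 t hv0n htB' i (by omega)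
        have h2 := Finset.mem_Ioc.mp (hSsub hxS)
        omega
      rw [Finset.card_union_of_disjoint hdisj, List.toFinset_card_of_nodup hsort1.nodup, hScard]
      simp only [hl₁, List.length_map, List.length_range]
      omega
    · intro i hi
      refine ⟨tx m t i, ?_⟩
      rw [hgetD (i+1) (by omega), hgetD i (by omega)]
      simp [chainv]
  · -- injectivity
    rintro ⟨v0, t, S⟩ hp ⟨v0', t', S'⟩ hp' heq
    simp only [hD, Finset.coe_product, Set.mem_prod, Finset.mem_coe, Finset.mem_Icc,
      Fintype.mem_piFinset, Finset.mem_range, Finset.mem_powersetCard] at hp hp'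
    obtain ⟨⟨hv01, hv0n⟩, htB, hSsub, hScard⟩ := hp
    obtain ⟨⟨hv01', hv0n'⟩, htB', hSsub', hScard'⟩ := hp'
    have htBa : ∀ i : Fin m, t i ≤ B := fun i => by have := htB i; omega
    have htBa' : ∀ i : Fin m, t' i ≤ B := fun i => by have := htB' i; omega
    have hs1 := hsortE v0 t S hv01 hv0n htBa hSsub
    have hs2 := hsortE v0' t' S' hv01' hv0n' htBa' hSsub'
    simp only at heq
    have hsorteq : (List.range (m+1)).map (chainv v0 (tx m t)) ++ Finset.sort S (· ≤ ·)
        = (List.range (m+1)).map (chainv v0' (tx m t')) ++ Finset.sort S' (· ≤ ·) := by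
      rw [← hs1, ← hs2, heq]
    have hlen : ((List.range (m+1)).map (chainv v0 (tx m t))).length
        = ((List.range (m+1)).map (chainv v0' (tx m t'))).length := by simp
    obtain ⟨hl, hr⟩ := List.append_inj hsorteq hlen
    have hchain : ∀ i < m + 1, chainv v0 (tx m t) i = chainv v0' (tx m t') i := by
      intro i hi
      have h := congrArg (fun l => l.getD i 0) hl
      rwa [getD_map_range _ hi, getD_map_range _ hi] at h
    have hv : v0 = v0' := hchain 0 (by omega)
    have hSeq : S = S' := by
      have := congrArg List.toFinset hr
      simpa [Finset.sort_toFinset] using this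
    have hteq : t = t' := by
      funext i
      have h1 := hchain (i + 1) (by omega)
      have h2 := hchain i (by omega)
      have : 2 ^ tx m t i = 2 ^ tx m t' i := by
        have e1 : chainv v0 (tx m t) (i+1) = chainv v0 (tx m t) i + 2 ^ tx m t i := rfl
        have e2 : chainv v0' (tx m t') (i+1) = chainv v0' (tx m t') i + 2 ^ tx m t' i := rfl
        omega
      have h4 := Nat.pow_right_injective (le_refl 2) this
      simpa [tx, i.isLt] using h4
    simp [hv, hSeq, hteq]
end P2C

/-- e(pow2chain r k n) = Θ(n^{k-1}·(log₂ n)^{r-k+1}). -/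
theorem pow2chain_edge_count (r k : ℕ) (hk : 2 ≤ k) (hkr : k ≤ r) :
    ∃ c₁ c₂ : ℝ, 0 < c₁ ∧ 0 < c₂ ∧ ∃ N : ℕ, ∀ n : ℕ, N ≤ n →
      c₁ * (n : ℝ) ^ (k - 1) * (Real.logb 2 n) ^ (r - k + 1)
          ≤ ((pow2chain r k n).card : ℝ) ∧
      ((pow2chain r k n).card : ℝ)
          ≤ c₂ * (n : ℝ) ^ (k - 1) * (Real.logb 2 n) ^ (r - k + 1) := by
  set m := r - k + 1 with hm
  set j := k - 2 with hj
  set c₀ := Nat.log 2 (4 * m) + 1 with hc₀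
  refine ⟨((1/8) * (1/2)^m * (1/8)^j) / (Nat.factorial j : ℝ), 2^m, by positivity, by positivity,
    2^(2*c₀) + 4*k + 8, ?_⟩
  intro n hn
  have hc₀1 : 1 ≤ c₀ := by omega
  have h2c₀ : (2:ℕ)^(2*c₀) ≤ n := by omega
  have h2le : (2:ℕ) ≤ 2^(2*c₀) := by
    calc (2:ℕ) = 2^1 := by norm_num
      _ ≤ 2^(2*c₀) := Nat.pow_le_pow_right (by norm_num) (by omega)
  have hn2 : 2 ≤ n := le_trans h2le h2c₀
  have hn0 : (0:ℝ) < n := by positivity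
  set L := Nat.log 2 n with hL
  have hc₀L : c₀ ≤ L := by
    rw [hL]
    refine (Nat.le_log_iff_pow_le (by norm_num) (by omega)).mpr ?_
    exact le_trans (Nat.pow_le_pow_right (by norm_num) (by omega)) h2c₀
  have hlogb_ge : (2*(c₀:ℝ)) ≤ Real.logb 2 n := by
    have h1 : ((2:ℝ))^(2*c₀) ≤ n := by exact_mod_cast h2c₀
    calc (2*(c₀:ℝ)) = Real.logb 2 ((2:ℝ)^(2*c₀)) := by
          rw [Real.logb_pow, Real.logb_self_eq_one (by norm_num)]; push_cast; ring
      _ ≤ Real.logb 2 n := Real.logb_le_logb_of_le (by norm_num) (by positivity) h1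
  have hlogb1 : 1 ≤ Real.logb 2 n := by
    calc (1:ℝ) = Real.logb 2 2 := (Real.logb_self_eq_one (by norm_num)).symm
      _ ≤ Real.logb 2 n := Real.logb_le_logb_of_le (by norm_num) (by norm_num)
          (by exact_mod_cast hn2)
  have hlogb0 : 0 ≤ Real.logb 2 n := le_trans zero_le_one hlogb1
  have hLle : (L:ℝ) ≤ Real.logb 2 n := by
    have h1 : ((2:ℝ))^L ≤ n := by exact_mod_cast Nat.pow_log_le_self 2 (by omega)
    calc (L:ℝ) = Real.logb 2 ((2:ℝ)^L) := by
          rw [Real.logb_pow, Real.logb_self_eq_one (by norm_num)]; ring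
      _ ≤ _ := Real.logb_le_logb_of_le (by norm_num) (by positivity) h1
  have hLge : Real.logb 2 n ≤ (L:ℝ) + 1 := by
    have h1 : (n:ℝ) ≤ ((2:ℝ))^(L+1) := by
      exact_mod_cast (Nat.lt_pow_succ_log_self (by norm_num) n).le
    calc Real.logb 2 n ≤ Real.logb 2 ((2:ℝ)^(L+1)) :=
          Real.logb_le_logb_of_le (by norm_num) hn0 h1
      _ = (L:ℝ) + 1 := by rw [Real.logb_pow, Real.logb_self_eq_one (by norm_num)]; push_cast; ring
  have hk1 : k - 1 = j + 1 := by omega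
  constructor
  · -- lower bound
    have hyp : Nat.log 2 (4 * (r - k + 1)) + 1 ≤ Nat.log 2 n := by
      rw [show 4 * (r - k + 1) = 4 * m by omega]
      rw [hc₀, hL] at hc₀L
      exact hc₀L
    have hlow := P2C.lower r k n hk hkr hyp
    set B := L - c₀ with hB
    have hA : (n:ℝ)/8 ≤ ((n/4 : ℕ):ℝ) := by
      have h1 : n ≤ 8 * (n/4) := by omega
      have h2 := (Nat.cast_le (α := ℝ)).mpr h1
      push_cast at h2
      linarith
    have hBreal : (1/2 : ℝ) * Real.logb 2 n ≤ ((B+1 : ℕ):ℝ) := by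
      have hcast : ((B+1:ℕ):ℝ) = (L:ℝ) + 1 - c₀ := by
        rw [hB]
        push_cast [Nat.cast_sub hc₀L]
        ring
      rw [hcast]
      linarith
    have hchoice : ((n:ℝ)/8)^j / (Nat.factorial j : ℝ) ≤ (((n - n/2).choose j : ℕ):ℝ) := by
      have h8 : n ≤ 8 * (n - n/2 + 1 - j) := by omega
      have hc : (n:ℝ)/8 ≤ ((n - n/2 + 1 - j : ℕ):ℝ) := by
        have h2 := (Nat.cast_le (α := ℝ)).mpr h8
        push_cast at h2
        linarith
      calc ((n:ℝ)/8)^j / (Nat.factorial j : ℝ)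
          ≤ (((n - n/2 + 1 - j : ℕ):ℝ))^j / (Nat.factorial j : ℝ) := by
            gcongr
        _ ≤ _ := Nat.pow_le_choose j (n - n/2)
    have hprod : (n:ℝ)/8 * ((1/2 * Real.logb 2 n))^m * (((n:ℝ)/8)^j / (Nat.factorial j : ℝ))
        ≤ ((n/4 : ℕ):ℝ) * ((B+1:ℕ):ℝ)^m * (((n - n/2).choose j : ℕ):ℝ) := by
      have h1 : (0:ℝ) ≤ (n:ℝ)/8 := by positivity
      have h2 : (0:ℝ) ≤ (1/2 * Real.logb 2 n)^m := by positivity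
      have h3 : (0:ℝ) ≤ ((n:ℝ)/8)^j / (Nat.factorial j : ℝ) := by positivity
      gcongr
    calc ((1/8) * (1/2)^m * (1/8)^j) / (Nat.factorial j : ℝ) * (n:ℝ)^(k-1) * Real.logb 2 n ^ m
        = (n:ℝ)/8 * ((1/2 * Real.logb 2 n))^m * (((n:ℝ)/8)^j / (Nat.factorial j : ℝ)) := by
          rw [hk1]; ring
      _ ≤ ((n/4 : ℕ):ℝ) * ((B+1:ℕ):ℝ)^m * (((n - n/2).choose j : ℕ):ℝ) := hprod
      _ = (((n/4) * (B+1)^m * ((n - n/2).choose j) : ℕ):ℝ) := by push_cast; ring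
      _ ≤ ((pow2chain r k n).card : ℝ) := Nat.cast_le.mpr hlow
  · -- upper bound
    have hup := P2C.upper r k n hk hkr (by omega)
    have hL2 : ((L:ℝ)+1) ≤ 2 * Real.logb 2 n := by linarith
    calc ((pow2chain r k n).card : ℝ)
        ≤ ((n * (L+1)^m * n^j : ℕ):ℝ) := Nat.cast_le.mpr hup
      _ = (n:ℝ) * ((L:ℝ)+1)^m * (n:ℝ)^j := by push_cast; ring
      _ ≤ (n:ℝ) * (2*Real.logb 2 n)^m * (n:ℝ)^j := by
          exact mul_le_mul_of_nonneg_right (mul_le_mul_of_nonneg_left (pow_le_pow_left₀ (by positivity) hL2 m) hn0.le) (by positivity)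
      _ = 2^m * (n:ℝ)^(k-1) * (Real.logb 2 n)^m := by rw [hk1]; ring
end

section
/- Fix 2 ≤ k ≤ r and let H be the ordered r-graph on [n] whose edges are the sets {v₁ < v₂ < ⋯ < v_r} with v_{i+1} - v_i a power of 2 for 1 ≤ i ≤ r - k + 1. Then every interval k-partite subgraph H' of H with all parts of size at most m satisfies e(H') = O(m^{k-1}(log₂ n)^{r-k}), with the implied constant depending only on r and k. -/
/-! ### Auxiliary machinery -/

lemma sum_doubling (f : ℕ → ℕ) (s : ℕ) (h : ∀ t, s ≤ t → 2 * f t ≤ f (t + 1)) :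
    ∀ J, ∑ j ∈ Finset.range (J + 1), f (s + j) ≤ 2 * f (s + J) := by
  intro J
  induction J with
  | zero => simp; omega
  | succ J ih =>
      rw [Finset.sum_range_succ]
      have h2 := h (s + J) (by omega)
      have h3 : s + (J + 1) = s + J + 1 := by omega
      rw [h3]
      omega

/-- Key fact: at most `2(|X|+|Y|)` pairs with a power-of-2 difference between
two separated intervals. -/
lemma pair_count (p q p' q' : ℕ) (hgap : q < p')
    [DecidablePred fun z : ℕ × ℕ => ∃ t : ℕ, z.2 - z.1 = 2 ^ t] :
    ((Finset.Icc p q ×ˢ Finset.Icc p' q').filter (fun z => ∃ t : ℕ, z.2 - z.1 = 2 ^ t)).card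
      ≤ 2 * ((Finset.Icc p q).card + (Finset.Icc p' q').card) := by
  classical
  set S := ((Finset.Icc p q ×ˢ Finset.Icc p' q').filter
    (fun z => ∃ t : ℕ, z.2 - z.1 = 2 ^ t)) with hSdef
  rcases S.eq_empty_or_nonempty with hS | ⟨z₀, hz₀⟩
  · rw [hS]; simp
  have hmem : ∀ z ∈ S, z.1 ∈ Finset.Icc p q ∧ z.2 ∈ Finset.Icc p' q' ∧
      ∃ t : ℕ, z.2 - z.1 = 2 ^ t := by
    intro z hz
    rw [hSdef, Finset.mem_filter, Finset.mem_product] at hz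
    exact ⟨hz.1.1, hz.1.2, hz.2⟩
  obtain ⟨hz₀1, hz₀2, _⟩ := hmem z₀ hz₀
  rw [Finset.mem_Icc] at hz₀1 hz₀2
  set g := p' - q with hgdef
  set s := Nat.clog 2 g with hsdef
  set T := Nat.log 2 (q' - p) with hTdef
  have hg1 : 1 ≤ g := by omega
  have hgs : g ≤ 2 ^ s := Nat.le_pow_clog one_lt_two g
  have hmemt : ∀ z ∈ S, ∀ t : ℕ, z.2 - z.1 = 2 ^ t → s ≤ t ∧ t ≤ T := by
    intro z hz t ht
    obtain ⟨h1, h2, _⟩ := hmem z hz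
    rw [Finset.mem_Icc] at h1 h2
    constructor
    · rw [hsdef]
      rw [Nat.clog_le_iff_le_pow one_lt_two]
      omega
    · rw [hTdef, Nat.le_log_iff_pow_le one_lt_two (by omega)]
      omega
  have hsub : S ⊆ (Finset.Icc s T).biUnion
      (fun t => S.filter (fun z => z.2 - z.1 = 2 ^ t)) := by
    intro z hz
    obtain ⟨_, _, t, ht⟩ := hmem z hz
    rw [Finset.mem_biUnion]
    exact ⟨t, Finset.mem_Icc.2 (hmemt z hz t ht), Finset.mem_filter.2 ⟨hz, ht⟩⟩
  have hcard_t : ∀ t : ℕ, (S.filter (fun z => z.2 - z.1 = 2 ^ t)).card ≤ 2 ^ t + 1 - g := by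
    intro t
    have hc : (S.filter (fun z => z.2 - z.1 = 2 ^ t)).card
        ≤ (Finset.Icc (p' - 2 ^ t) q).card := by
      apply Finset.card_le_card_of_injOn (fun z => z.1)
      · intro z hz
        rw [Finset.mem_coe, Finset.mem_filter] at hz
        obtain ⟨h1, h2, _⟩ := hmem z hz.1
        rw [Finset.mem_Icc] at h1 h2
        have := hz.2
        rw [Finset.mem_coe, Finset.mem_Icc]
        beta_reduce
        omega
      · intro z hz w hw hzw
        rw [Finset.mem_coe, Finset.mem_filter] at hz hw
        obtain ⟨h1, h2, _⟩ := hmem z hz.1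
        obtain ⟨h1', h2', _⟩ := hmem w hw.1
        rw [Finset.mem_Icc] at h1 h2 h1' h2'
        have hzw' : z.1 = w.1 := hzw
        have e1 := hz.2
        have e2 := hw.2
        have : z.2 = w.2 := by omega
        exact Prod.ext hzw' this
    rw [Nat.card_Icc] at hc
    omega
  have hdoub : ∀ t, s ≤ t → 2 * (2 ^ t + 1 - g) ≤ 2 ^ (t + 1) + 1 - g := by
    intro t ht
    have h1 : 2 ^ s ≤ 2 ^ t := Nat.pow_le_pow_right (by norm_num) ht
    have h2 : 2 ^ (t + 1) = 2 * 2 ^ t := by ring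
    omega
  obtain ⟨_, _, t₀, ht₀⟩ := hmem z₀ hz₀
  have hsT : s ≤ T ∧ t₀ ≤ T := by
    have := hmemt z₀ hz₀ t₀ ht₀
    omega
  have hT2 : 2 ^ T ≤ q' - p := by
    rw [hTdef]; exact Nat.pow_log_le_self 2 (by omega)
  calc S.card ≤ ((Finset.Icc s T).biUnion
      (fun t => S.filter (fun z => z.2 - z.1 = 2 ^ t))).card := Finset.card_le_card hsub
    _ ≤ ∑ t ∈ Finset.Icc s T, (S.filter (fun z => z.2 - z.1 = 2 ^ t)).card :=
        Finset.card_biUnion_le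
    _ ≤ ∑ t ∈ Finset.Icc s T, (2 ^ t + 1 - g) :=
        Finset.sum_le_sum (fun t _ => hcard_t t)
    _ ≤ 2 * (2 ^ T + 1 - g) := by
        have heq : Finset.Icc s T = Finset.Ico s (T + 1) := (Finset.Ico_add_one_right_eq_Icc s T).symm
        rw [heq, Finset.sum_Ico_eq_sum_range]
        have hTs : T + 1 - s = (T - s) + 1 := by omega
        rw [hTs]
        have h5 := sum_doubling (fun t => 2 ^ t + 1 - g) s hdoub (T - s)
        have hst : s + (T - s) = T := by omega
        rw [hst] at h5
        exact h5
    _ ≤ 2 * ((Finset.Icc p q).card + (Finset.Icc p' q').card) := by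
        rw [Nat.card_Icc, Nat.card_Icc]
        omega

/-- The `i`-th smallest element of a finset of naturals. -/
def vts (e : Finset ℕ) (i : ℕ) : ℕ := (Finset.sort e (· ≤ ·)).getD i 0

lemma vts_eq (e : Finset ℕ) (i : ℕ) (hi : i < e.card) :
    vts e i = (Finset.sort e (· ≤ ·))[i]'(by rwa [Finset.length_sort]) := by
  unfold vts
  exact List.getD_eq_getElem _ _ (by rwa [Finset.length_sort])

lemma vts_mem (e : Finset ℕ) (i : ℕ) (hi : i < e.card) : vts e i ∈ e := by
  rw [vts_eq e i hi]
  rw [← Finset.mem_sort (· ≤ ·)]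
  exact List.getElem_mem _

lemma vts_lt (e : Finset ℕ) {i j : ℕ} (hij : i < j) (hj : j < e.card) :
    vts e i < vts e j := by
  rw [vts_eq e i (lt_trans hij hj), vts_eq e j hj]
  have hs : (Finset.sort e (· ≤ ·)).Pairwise (· < ·) := e.sortedLT_sort.pairwise
  exact (List.pairwise_iff_getElem.1 hs) i j _ _ hij

lemma vts_surj (e : Finset ℕ) {x : ℕ} (hx : x ∈ e) : ∃ i < e.card, vts e i = x := by
  have hx2 : x ∈ Finset.sort e (· ≤ ·) := (Finset.mem_sort _).2 hx
  obtain ⟨i, hi, hix⟩ := List.mem_iff_getElem.1 hx2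
  rw [Finset.length_sort] at hi
  exact ⟨i, hi, by rw [vts_eq e i hi]; exact hix⟩

lemma vts_inj {e e' : Finset ℕ} (h : e.card = e'.card)
    (hall : ∀ i < e.card, vts e i = vts e' i) : e = e' := by
  have hl : Finset.sort e (· ≤ ·) = Finset.sort e' (· ≤ ·) := by
    apply List.ext_getElem
    · rw [Finset.length_sort, Finset.length_sort, h]
    · intro i h1 h2
      rw [Finset.length_sort] at h1 h2
      rw [← vts_eq e i h1, ← vts_eq e' i h2]
      exact hall i h1
  have := congrArg List.toFinset hl
  rwa [Finset.sort_toFinset, Finset.sort_toFinset] at this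

lemma mem_pow2chain {r k n : ℕ} {e : Finset ℕ} (he : e ∈ pow2chain r k n) :
    e ⊆ Finset.Icc 1 n ∧ e.card = r ∧
      ∀ i < r - k + 1, ∃ t : ℕ, vts e (i + 1) - vts e i = 2 ^ t := by
  classical
  unfold pow2chain at he
  rw [Finset.mem_filter, Finset.mem_powersetCard] at he
  exact ⟨he.1.1, he.1.2, fun i hi => he.2 i hi⟩

/-- Choice of an interval index containing `x`. -/
noncomputable def cdxF (ℓ : ℕ) (I : ℕ → Finset ℕ) (x : ℕ) : ℕ :=
  if h : ∃ j, j < ℓ ∧ x ∈ I j then h.choose else 0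

lemma cdxF_spec {ℓ : ℕ} {I : ℕ → Finset ℕ} {x : ℕ} (h : ∃ j, j < ℓ ∧ x ∈ I j) :
    cdxF ℓ I x < ℓ ∧ x ∈ I (cdxF ℓ I x) := by
  unfold cdxF
  rw [dif_pos h]
  exact ⟨h.choose_spec.1, h.choose_spec.2⟩

/-- Choice of the first "crossing" step of an edge. -/
noncomputable def istarF (rk : ℕ) (c : ℕ → ℕ) (e : Finset ℕ) : ℕ :=
  if h : ∃ i, i < rk ∧ c (vts e i) < c (vts e (i + 1)) then h.choose else 0

lemma istarF_spec {rk : ℕ} {c : ℕ → ℕ} {e : Finset ℕ}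
    (h : ∃ i, i < rk ∧ c (vts e i) < c (vts e (i + 1))) :
    istarF rk c e < rk ∧ c (vts e (istarF rk c e)) < c (vts e (istarF rk c e + 1)) := by
  unfold istarF
  rw [dif_pos h]
  exact ⟨h.choose_spec.1, h.choose_spec.2⟩

/-- Choice of an element of `e ∩ I j`. -/
noncomputable def pickF (e : Finset ℕ) (I : ℕ → Finset ℕ) (j : ℕ) : ℕ :=
  if h : (e ∩ I j).Nonempty then h.choose else 0

lemma pickF_spec {e : Finset ℕ} {I : ℕ → Finset ℕ} {j : ℕ} (h : (e ∩ I j).Nonempty) :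
    pickF e I j ∈ e ∧ pickF e I j ∈ I j := by
  unfold pickF
  rw [dif_pos h]
  have := h.choose_spec
  rw [Finset.mem_inter] at this
  exact this


lemma pow2chain_core (r k : ℕ) (hk : 2 ≤ k) (hkr : k ≤ r) (n m : ℕ)
    (H' : Finset (Finset ℕ)) (hH : H' ⊆ pow2chain r k n)
    (hpart : IntervalKPartiteB k m H') :
    H'.card ≤ (r - k + 1) * (r * r * (4 * m)) * (Nat.log 2 n + 1) ^ (r - k)
      * (r * m) ^ (k - 2) := by
  classical
  obtain ⟨ℓ, hkℓ, I, hInt, hIm, hPrec, hEdge⟩ := hpart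
  rcases H'.eq_empty_or_nonempty with hempty | ⟨e₀, he₀⟩
  · simp [hempty]
  have hcard : ∀ e ∈ H', e.card = r := fun e he => (mem_pow2chain (hH he)).2.1
  have hsubn : ∀ e ∈ H', ∀ i, i < r → 1 ≤ vts e i ∧ vts e i ≤ n := by
    intro e he i hi
    have h1 := (mem_pow2chain (hH he)).1
    have h2 := vts_mem e i (by rw [hcard e he]; exact hi)
    have h3 := h1 h2
    rw [Finset.mem_Icc] at h3
    exact h3
  have hdiff : ∀ e ∈ H', ∀ i, i < r - k + 1 → ∃ t : ℕ, vts e (i + 1) - vts e i = 2 ^ t :=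
    fun e he => (mem_pow2chain (hH he)).2.2
  have hdisj : ∀ x : ℕ, ∀ j j', j < ℓ → j' < ℓ → x ∈ I j → x ∈ I j' → j = j' := by
    intro x j j' hj hj' hx hx'
    by_contra hne
    rcases Nat.lt_or_ge j j' with h | h
    · exact lt_irrefl x (hPrec j j' h hj' x hx x hx')
    · exact lt_irrefl x (hPrec j' j (by omega) hj x hx' x hx)
  have hmono : ∀ x y jx jy, jx < ℓ → jy < ℓ → x ∈ I jx → y ∈ I jy → x < y → jx ≤ jy := by
    intro x y jx jy hjx hjy hx hy hxy
    by_contra hlt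
    have := hPrec jy jx (by omega) hjx y hy x hx
    omega
  set cdx : ℕ → ℕ := cdxF ℓ I with hcdxdef
  have hcdxe : ∀ e ∈ H', ∀ x ∈ e, cdx x < ℓ ∧ x ∈ I (cdx x) := by
    intro e he x hx
    apply cdxF_spec
    obtain ⟨j, hj, hjx⟩ := (hEdge e he).1 x hx
    exact ⟨j, hj, hjx⟩
  have hcdx_eq : ∀ e ∈ H', ∀ x ∈ e, ∀ j, j < ℓ → x ∈ I j → cdx x = j := by
    intro e he x hx j hj hxj
    obtain ⟨h1, h2⟩ := hcdxe e he x hx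
    exact hdisj x _ j h1 hj h2 hxj
  have hℓr : ℓ ≤ r := by
    have hc : (Finset.range ℓ).card ≤ e₀.card := by
      apply Finset.card_le_card_of_injOn (pickF e₀ I)
      · intro j hj
        exact (pickF_spec ((hEdge e₀ he₀).2 j (Finset.mem_range.1 hj))).1
      · intro j hj j' hj' hjj'
        rw [Finset.mem_coe, Finset.mem_range] at hj hj'
        have s1 := (pickF_spec ((hEdge e₀ he₀).2 j hj)).2
        have s2 := (pickF_spec ((hEdge e₀ he₀).2 j' hj')).2
        rw [hjj'] at s1
        exact hdisj _ j j' hj hj' (hjj' ▸ (pickF_spec ((hEdge e₀ he₀).2 j hj)).2) s2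
    rw [Finset.card_range, hcard e₀ he₀] at hc
    exact hc
  have hcross : ∀ e ∈ H', ∃ i, i < r - k + 1 ∧ cdx (vts e i) < cdx (vts e (i + 1)) := by
    intro e he
    by_contra hno
    push_neg at hno
    have hle : ∀ i, i < r - k + 1 → cdx (vts e i) = cdx (vts e (i + 1)) := by
      intro i hi
      have hv1 : i + 1 < r := by omega
      have hlt := vts_lt e (Nat.lt_succ_self i) (by rw [hcard e he]; exact hv1)
      have hm1 := hcdxe e he _ (vts_mem e i (by rw [hcard e he]; omega))
      have hm2 := hcdxe e he _ (vts_mem e (i + 1) (by rw [hcard e he]; omega))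
      have h4 := hmono _ _ _ _ hm1.1 hm2.1 hm1.2 hm2.2 hlt
      have h5 := hno i hi
      omega
    have hconst : ∀ i, i ≤ r - k + 1 → cdx (vts e i) = cdx (vts e 0) := by
      intro i
      induction i with
      | zero => intro _; rfl
      | succ i ih =>
          intro hi
          rw [← hle i (by omega)]
          exact ih (by omega)
    have hsub1 : Finset.range ℓ ⊆ (Finset.range r).image (fun i => cdx (vts e i)) := by
      intro j hj
      rw [Finset.mem_range] at hj
      obtain ⟨x, hx⟩ := (hEdge e he).2 j hj
      rw [Finset.mem_inter] at hx
      obtain ⟨i, hi, hix⟩ := vts_surj e hx.1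
      rw [hcard e he] at hi
      rw [Finset.mem_image]
      exact ⟨i, Finset.mem_range.2 hi, by rw [hix]; exact hcdx_eq e he x hx.1 j hj hx.2⟩
    have hsub2 : (Finset.range r).image (fun i => cdx (vts e i)) ⊆
        insert (cdx (vts e 0)) ((Finset.Ico (r - k + 2) r).image (fun i => cdx (vts e i))) := by
      intro y hy
      rw [Finset.mem_image] at hy
      obtain ⟨i, hi, hiy⟩ := hy
      rw [Finset.mem_range] at hi
      rcases Nat.lt_or_ge i (r - k + 2) with h | h
      · rw [Finset.mem_insert]
        left
        rw [← hiy]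
        exact hconst i (by omega)
      · rw [Finset.mem_insert]
        right
        rw [Finset.mem_image]
        exact ⟨i, Finset.mem_Ico.2 ⟨h, hi⟩, hiy⟩
    have c1 := Finset.card_le_card (hsub1.trans hsub2)
    rw [Finset.card_range] at c1
    have c2 := Finset.card_insert_le (cdx (vts e 0))
      ((Finset.Ico (r - k + 2) r).image (fun i => cdx (vts e i)))
    have c3 := Finset.card_image_le (s := Finset.Ico (r - k + 2) r)
      (f := fun i => cdx (vts e i))
    rw [Nat.card_Ico] at c3
    omega
  set istar : Finset ℕ → ℕ := istarF (r - k + 1) cdx with histardef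
  have histar : ∀ e ∈ H', istar e < r - k + 1 ∧
      cdx (vts e (istar e)) < cdx (vts e (istar e + 1)) := by
    intro e he
    exact istarF_spec (hcross e he)
  set P : Finset (ℕ × ℕ) :=
    ((Finset.range ℓ ×ˢ Finset.range ℓ).filter (fun ab => ab.1 < ab.2)).biUnion
      (fun ab => (I ab.1 ×ˢ I ab.2).filter (fun z : ℕ × ℕ => ∃ t : ℕ, z.2 - z.1 = 2 ^ t))
    with hPdef
  set E := Fintype.piFinset (fun _ : Fin (r - k) => Finset.range (Nat.log 2 n + 1)) with hEdef
  set F := Fintype.piFinset (fun _ : Fin (k - 2) => (Finset.range ℓ).biUnion I) with hFdef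
  set S := (Finset.range (r - k + 1)) ×ˢ (P ×ˢ (E ×ˢ F)) with hSdef
  set f : Finset ℕ → ℕ × ((ℕ × ℕ) × ((Fin (r - k) → ℕ) × (Fin (k - 2) → ℕ))) :=
    fun e => (istar e,
      ((vts e (istar e), vts e (istar e + 1)),
       ((fun j => Nat.log 2 (vts e ((if (j : ℕ) < istar e then (j : ℕ) else (j : ℕ) + 1) + 1)
            - vts e (if (j : ℕ) < istar e then (j : ℕ) else (j : ℕ) + 1))),
        fun j => vts e (r - k + 2 + (j : ℕ))))) with hfdef
  have hmaps : ∀ e ∈ H', f e ∈ S := by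
    intro e he
    obtain ⟨hi1, hi2⟩ := histar e he
    rw [hSdef, hfdef]
    simp only [Finset.mem_product]
    refine ⟨Finset.mem_range.2 hi1, ?_, ?_, ?_⟩
    · rw [hPdef, Finset.mem_biUnion]
      have ha := hcdxe e he _ (vts_mem e (istar e) (by rw [hcard e he]; omega))
      have hb := hcdxe e he _ (vts_mem e (istar e + 1) (by rw [hcard e he]; omega))
      refine ⟨(cdx (vts e (istar e)), cdx (vts e (istar e + 1))), ?_, ?_⟩
      · rw [Finset.mem_filter, Finset.mem_product]
        exact ⟨⟨Finset.mem_range.2 ha.1, Finset.mem_range.2 hb.1⟩, hi2⟩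
      · rw [Finset.mem_filter, Finset.mem_product]
        exact ⟨⟨ha.2, hb.2⟩, hdiff e he (istar e) hi1⟩
    · rw [hEdef, Fintype.mem_piFinset]
      intro j
      have hj2 := j.2
      set i := if (j : ℕ) < istar e then (j : ℕ) else (j : ℕ) + 1 with hidef
      have hji : i < r - k + 1 := by
        rw [hidef]
        split <;> omega
      have hd := (hsubn e he (i + 1) (by omega)).2
      rw [Finset.mem_range]
      have h6 : Nat.log 2 (vts e (i + 1) - vts e i) ≤ Nat.log 2 n :=
        Nat.log_mono_right (by omega)
      omega
    · rw [hFdef, Fintype.mem_piFinset]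
      intro j
      have hj2 := j.2
      have hir : r - k + 2 + (j : ℕ) < r := by omega
      have hmem := vts_mem e (r - k + 2 + (j : ℕ)) (by rw [hcard e he]; exact hir)
      have h7 := hcdxe e he _ hmem
      rw [Finset.mem_biUnion]
      exact ⟨cdx (vts e (r - k + 2 + (j : ℕ))), Finset.mem_range.2 h7.1, h7.2⟩
  have hinj : Set.InjOn f H' := by
    intro e he e' he' hfe
    rw [hfdef] at hfe
    simp only [Prod.mk.injEq] at hfe
    obtain ⟨h0, ⟨hx, hy⟩, hexp, hfree⟩ := hfe
    rw [← h0] at hx hy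
    simp only [← h0] at hexp
    obtain ⟨hi1, _⟩ := histar e he
    set i₀ := istar e with hi₀def
    have hrec : ∀ i, i < r - k + 1 → i ≠ i₀ →
        vts e (i + 1) - vts e i = vts e' (i + 1) - vts e' i := by
      intro i hir hne
      have hlog : Nat.log 2 (vts e (i + 1) - vts e i)
          = Nat.log 2 (vts e' (i + 1) - vts e' i) := by
        rcases Nat.lt_or_ge i i₀ with hlt | hge
        · have hjlt : i < r - k := by omega
          have hc := congrFun hexp ⟨i, hjlt⟩
          simp only [] at hc
          rw [if_pos (show ((⟨i, hjlt⟩ : Fin (r - k)) : ℕ) < i₀ from hlt)] at hc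
          exact hc
        · have hige : i₀ + 1 ≤ i := by omega
          have hjlt : i - 1 < r - k := by omega
          have hc := congrFun hexp ⟨i - 1, hjlt⟩
          simp only [] at hc
          rw [if_neg (show ¬ ((⟨i - 1, hjlt⟩ : Fin (r - k)) : ℕ) < i₀ by
            simp only [Fin.val_mk]; omega)] at hc
          have h9 : ((⟨i - 1, hjlt⟩ : Fin (r - k)) : ℕ) + 1 = i := by
            simp only [Fin.val_mk]; omega
          rw [h9] at hc
          exact hc
      obtain ⟨t, ht⟩ := hdiff e he i hir
      obtain ⟨t', ht'⟩ := hdiff e' he' i hir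
      rw [ht, ht', Nat.log_pow one_lt_two, Nat.log_pow one_lt_two] at hlog
      rw [ht, ht', hlog]
    have hup : ∀ i, i₀ + 1 ≤ i → i ≤ r - k + 1 → vts e i = vts e' i := by
      intro i hia hib
      induction i, hia using Nat.le_induction with
      | base => exact hy
      | succ i hii ih =>
          have hir : i < r - k + 1 := by omega
          have hvi := ih (by omega)
          have hd := hrec i hir (by omega)
          have hlt1 : vts e i < vts e (i + 1) :=
            vts_lt e (Nat.lt_succ_self i) (by rw [hcard e he]; omega)
          have hlt2 : vts e' i < vts e' (i + 1) :=
            vts_lt e' (Nat.lt_succ_self i) (by rw [hcard e' he']; omega)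
          omega
    have hdown : ∀ dd, dd ≤ i₀ → vts e (i₀ - dd) = vts e' (i₀ - dd) := by
      intro dd
      induction dd with
      | zero => intro _; exact hx
      | succ dd ih =>
          intro hdd
          have ih' := ih (by omega)
          set i := i₀ - (dd + 1) with hidef2
          have heq : i + 1 = i₀ - dd := by omega
          have hd := hrec i (by omega) (by omega)
          have hlt1 : vts e i < vts e (i + 1) :=
            vts_lt e (Nat.lt_succ_self i) (by rw [hcard e he]; omega)
          have hlt2 : vts e' i < vts e' (i + 1) :=
            vts_lt e' (Nat.lt_succ_self i) (by rw [hcard e' he']; omega)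
          rw [heq] at hd hlt1 hlt2
          omega
    have hall : ∀ i, i < r → vts e i = vts e' i := by
      intro i hi
      rcases Nat.lt_or_ge i (r - k + 2) with h | h
      · rcases le_or_gt i i₀ with h2 | h2
        · have h3 := hdown (i₀ - i) (by omega)
          have heq : i₀ - (i₀ - i) = i := by omega
          rwa [heq] at h3
        · exact hup i (by omega) (by omega)
      · have hj : i - (r - k + 2) < k - 2 := by omega
        have hc := congrFun hfree ⟨i - (r - k + 2), hj⟩
        simp only [Fin.val_mk] at hc
        have heq : r - k + 2 + (i - (r - k + 2)) = i := by omega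
        rwa [heq] at hc
    exact vts_inj (by rw [hcard e he, hcard e' he']) (by rw [hcard e he]; exact hall)
  have hcardS : H'.card ≤ S.card := Finset.card_le_card_of_injOn f hmaps hinj
  have hPcard : P.card ≤ r * r * (4 * m) := by
    calc P.card
        ≤ ∑ ab ∈ (Finset.range ℓ ×ˢ Finset.range ℓ).filter (fun ab => ab.1 < ab.2),
          ((I ab.1 ×ˢ I ab.2).filter
            (fun z : ℕ × ℕ => ∃ t : ℕ, z.2 - z.1 = 2 ^ t)).card := by
          rw [hPdef]
          exact Finset.card_biUnion_le
      _ ≤ ∑ _ab ∈ (Finset.range ℓ ×ˢ Finset.range ℓ).filter (fun ab => ab.1 < ab.2),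
          (4 * m) := by
          apply Finset.sum_le_sum
          intro ab hab
          rw [Finset.mem_filter, Finset.mem_product, Finset.mem_range, Finset.mem_range] at hab
          obtain ⟨⟨ha, hb⟩, hab'⟩ := hab
          obtain ⟨p, q, hIa⟩ := hInt ab.1 ha
          obtain ⟨p', q', hIb⟩ := hInt ab.2 hb
          rcases (I ab.1).eq_empty_or_nonempty with he1 | he1
          · rw [he1]
            simp
          rcases (I ab.2).eq_empty_or_nonempty with he2 | he2
          · rw [he2]
            simp
          have hpq : p ≤ q := by
            rw [hIa] at he1
            exact Finset.nonempty_Icc.1 he1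
          have hpq' : p' ≤ q' := by
            rw [hIb] at he2
            exact Finset.nonempty_Icc.1 he2
          have hgap : q < p' := by
            apply hPrec ab.1 ab.2 hab' hb q _ p' _
            · rw [hIa, Finset.mem_Icc]; omega
            · rw [hIb, Finset.mem_Icc]; omega
          have hpc := pair_count p q p' q' hgap
          rw [← hIa, ← hIb] at hpc
          have hma := hIm ab.1 ha
          have hmb := hIm ab.2 hb
          rw [hIa, hIb]
          have h10 : (I ab.1).card + (I ab.2).card ≤ 2 * m := by omega
          rw [← hIa, ← hIb]
          omega
      _ = ((Finset.range ℓ ×ˢ Finset.range ℓ).filter (fun ab => ab.1 < ab.2)).card * (4 * m) := by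
          rw [Finset.sum_const, smul_eq_mul]
      _ ≤ (ℓ * ℓ) * (4 * m) := by
          have h11 := Finset.card_filter_le (Finset.range ℓ ×ˢ Finset.range ℓ)
            (fun ab => ab.1 < ab.2)
          rw [Finset.card_product, Finset.card_range] at h11
          exact Nat.mul_le_mul_right _ h11
      _ ≤ r * r * (4 * m) := Nat.mul_le_mul_right _ (Nat.mul_le_mul hℓr hℓr)
  have hEcard : E.card = (Nat.log 2 n + 1) ^ (r - k) := by
    rw [hEdef, Fintype.card_piFinset]
    simp [Finset.card_range]
  have hFcard : F.card ≤ (r * m) ^ (k - 2) := by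
    rw [hFdef, Fintype.card_piFinset]
    have hb : ((Finset.range ℓ).biUnion I).card ≤ r * m := by
      calc ((Finset.range ℓ).biUnion I).card ≤ ∑ j ∈ Finset.range ℓ, (I j).card :=
            Finset.card_biUnion_le
        _ ≤ ∑ _j ∈ Finset.range ℓ, m :=
            Finset.sum_le_sum (fun j hj => hIm j (Finset.mem_range.1 hj))
        _ = ℓ * m := by rw [Finset.sum_const, smul_eq_mul, Finset.card_range]
        _ ≤ r * m := Nat.mul_le_mul_right m hℓr
    calc ∏ _j : Fin (k - 2), ((Finset.range ℓ).biUnion I).card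
        ≤ ∏ _j : Fin (k - 2), (r * m) := Finset.prod_le_prod' (fun j _ => hb)
      _ = (r * m) ^ (k - 2) := by
          rw [Finset.prod_const, Finset.card_univ, Fintype.card_fin]
  calc H'.card ≤ S.card := hcardS
    _ = (r - k + 1) * (P.card * (E.card * F.card)) := by
        rw [hSdef, Finset.card_product, Finset.card_product, Finset.card_product,
          Finset.card_range]
    _ ≤ (r - k + 1) * ((r * r * (4 * m)) * ((Nat.log 2 n + 1) ^ (r - k)
        * (r * m) ^ (k - 2))) := by
        apply Nat.mul_le_mul_left
        apply Nat.mul_le_mul hPcard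
        rw [hEcard]
        exact Nat.mul_le_mul_left _ hFcard
    _ = (r - k + 1) * (r * r * (4 * m)) * (Nat.log 2 n + 1) ^ (r - k) * (r * m) ^ (k - 2) := by
        ring

/-- Every interval k-partite subgraph of `pow2chain r k n` with parts of size
at most m has O(m^{k-1}·(log₂ n)^{r-k}) edges, the constant depending only on r, k. -/
theorem pow2chain_interval_partite_sparse (r k : ℕ) (hk : 2 ≤ k) (hkr : k ≤ r) :
    ∃ C : ℝ, 0 < C ∧ ∀ n m : ℕ, 2 ≤ n →
      ∀ H' ⊆ pow2chain r k n, IntervalKPartiteB k m H' →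
        ((H'.card : ℝ)) ≤ C * (m : ℝ) ^ (k - 1) * (Real.logb 2 n) ^ (r - k) := by

  classical
  set N₀ : ℕ := (r - k + 1) * (4 * r * r) * r ^ (k - 2) * 2 ^ (r - k) with hN₀def
  have hN₀pos : 0 < N₀ := by
    apply Nat.mul_pos
    apply Nat.mul_pos
    apply Nat.mul_pos
    · omega
    · have : 0 < r := by omega
      positivity
    · exact pow_pos (by omega) _
    · exact pow_pos (by norm_num) _
  refine ⟨(N₀ : ℝ), by exact_mod_cast hN₀pos, ?_⟩
  intro n m hn H' hsub hpart
  have hcore := pow2chain_core r k hk hkr n m H' hsub hpart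
  have hL1 : (1 : ℝ) ≤ Real.logb 2 n := by
    have h := Real.logb_le_logb_of_le (b := 2) (by norm_num) (by norm_num)
      (show (2 : ℝ) ≤ n by exact_mod_cast hn)
    rwa [Real.logb_self_eq_one (by norm_num)] at h
  set L := Real.logb 2 n with hLdef
  have hL0 : (0 : ℝ) ≤ L := by linarith
  have hlogn : ((Nat.log 2 n : ℕ) : ℝ) ≤ L := Real.natLog_le_logb n 2
  have ha : ((Nat.log 2 n : ℕ) : ℝ) + 1 ≤ 2 * L := by linarith
  have ha0 : (0 : ℝ) ≤ ((Nat.log 2 n : ℕ) : ℝ) + 1 := by positivity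
  have hkey : (((Nat.log 2 n : ℕ) : ℝ) + 1) ^ (r - k) ≤ (2 * L) ^ (r - k) :=
    pow_le_pow_left₀ ha0 ha _
  have h1 : (H'.card : ℝ) ≤ (((r - k + 1) : ℕ) : ℝ) * ((r : ℝ) * r * (4 * m))
      * (((Nat.log 2 n : ℕ) : ℝ) + 1) ^ (r - k) * ((r : ℝ) * m) ^ (k - 2) := by
    have := (Nat.cast_le (α := ℝ)).2 hcore
    push_cast at this
    convert this using 2 <;> push_cast <;> rfl
  have hk1 : k - 1 = (k - 2) + 1 := by omega
  calc (H'.card : ℝ)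
      ≤ (((r - k + 1) : ℕ) : ℝ) * ((r : ℝ) * r * (4 * m))
        * (((Nat.log 2 n : ℕ) : ℝ) + 1) ^ (r - k) * ((r : ℝ) * m) ^ (k - 2) := h1
    _ ≤ (((r - k + 1) : ℕ) : ℝ) * ((r : ℝ) * r * (4 * m))
        * (2 * L) ^ (r - k) * ((r : ℝ) * m) ^ (k - 2) := by
        apply mul_le_mul_of_nonneg_right _ (by positivity)
        apply mul_le_mul_of_nonneg_left hkey (by positivity)
    _ = (N₀ : ℝ) * (m : ℝ) ^ (k - 1) * L ^ (r - k) := by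
        rw [hN₀def, hk1, pow_succ]
        push_cast
        rw [mul_pow, mul_pow]
        ring
end

section
/- Let 2 ≤ k ≤ r and n ≥ 1. Define the ordered r-graph H on vertex set [rn] as follows: for 1 ≤ j ≤ n let I_j = {(r-k+2)j-(r-k+1), …, (r-k+2)j} (an interval of r-k+2 consecutive integers), and let the edges of H be all sets I_j ∪ {a_{r-k+3}, …, a_r} with (ℓ-1)n < a_ℓ ≤ ℓn for r-k+3 ≤ ℓ ≤ r. Then e(H) = n^{k-1}, and every interval k-partite subgraph H' of H has the property that there exists j such that every edge of H' contains I_j; consequently e(H') ≤ m^{k-2} whenever all parts of H' have size at most m ≥ 1. -/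
/-- The interval I_j = {(r-k+2)j-(r-k+1), …, (r-k+2)j} of Construction 2. -/
def constr2Interval (r k j : ℕ) : Finset ℕ :=
  Finset.Icc ((r - k + 2) * j - (r - k + 1)) ((r - k + 2) * j)

open Classical in
/-- The ordered r-graph of Construction 2 on [rn]: edges are the sets
I_j ∪ {a_{r-k+3},…,a_r} with 1 ≤ j ≤ n and (ℓ-1)n < a_ℓ ≤ ℓn for r-k+3 ≤ ℓ ≤ r. -/
noncomputable def constr2 (r k n : ℕ) : Finset (Finset ℕ) :=
  ((Finset.Icc 1 (r * n)).powersetCard r).filter (fun e =>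
    ∃ j, 1 ≤ j ∧ j ≤ n ∧ constr2Interval r k j ⊆ e ∧
      (∀ x ∈ e, x ∈ constr2Interval r k j ∨
        ∃ ℓ, r - k + 3 ≤ ℓ ∧ ℓ ≤ r ∧ (ℓ - 1) * n < x ∧ x ≤ ℓ * n) ∧
      (∀ ℓ, r - k + 3 ≤ ℓ → ℓ ≤ r →
        (e.filter (fun x => (ℓ - 1) * n < x ∧ x ≤ ℓ * n)).card = 1))

section AuxConstr2
open Finset


lemma mul_pred_add {q j : ℕ} (hj : 1 ≤ j) : q * j = q * (j-1) + q := by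
  cases j with
  | zero => omega
  | succ j' => simp [Nat.mul_succ]

lemma mul_le_smooth {a b m : ℕ} (ha : m ≤ a) (hb : b ≤ m) : a * b ≤ m * (a + b - m) := by
  obtain ⟨c, rfl⟩ := Nat.exists_eq_add_of_le ha
  have h1 : m + c + b - m = c + b := by omega
  rw [h1]
  calc (m + c) * b = m * b + c * b := by ring
    _ ≤ m * b + c * m := by
        have := Nat.mul_le_mul_left c hb
        omega
    _ = m * (c + b) := by ring

lemma amgm_list (m : ℕ) : ∀ d (l : List ℕ), l.length = d → l.sum ≤ d * m → l.prod ≤ m ^ d := by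
  intro d
  induction d with
  | zero => intro l hl _; rw [List.length_eq_zero_iff] at hl; subst hl; simp
  | succ d ih =>
    intro l hl hsum
    by_cases hall : ∀ x ∈ l, x ≤ m
    · calc l.prod ≤ m ^ l.length := List.prod_le_pow_card l m hall
        _ = m ^ (d+1) := by rw [hl]
    · push_neg at hall
      obtain ⟨a, ha, ham⟩ := hall
      have hb : ∃ b ∈ l, b ≤ m := by
        by_contra hc
        push_neg at hc
        have : ∀ x ∈ l, m + 1 ≤ x := fun x hx => hc x hx
        have hlow := List.card_nsmul_le_sum l (m+1) this
        simp only [smul_eq_mul, hl] at hlow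
        nlinarith
      obtain ⟨b, hbl, hbm⟩ := hb
      have hba : b ≠ a := by omega
      have p1 : l.Perm (a :: l.erase a) := List.perm_cons_erase ha
      have hbe : b ∈ l.erase a := (List.mem_erase_of_ne hba).mpr hbl
      have p2 : (l.erase a).Perm (b :: (l.erase a).erase b) := List.perm_cons_erase hbe
      set t := (l.erase a).erase b with ht
      have p3 : l.Perm (a :: b :: t) := p1.trans (p2.cons a)
      have hlen : l.length = t.length + 2 := by
        rw [p3.length_eq]; simp
      have hsum' : l.sum = a + b + t.sum := by rw [p3.sum_eq]; simp; ring
      have hprod : l.prod = a * b * t.prod := by rw [p3.prod_eq]; simp; ring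
      have hlt : t.length = d - 1 := by omega
      have hd1 : 1 ≤ d := by omega
      have key := ih ((a + b - m) :: t) (by simp [hlt]; omega)
        (by simp only [List.sum_cons]
            have h2 : (d+1)*m = d*m + m := by ring
            omega)
      simp only [List.prod_cons] at key
      calc l.prod = a * b * t.prod := hprod
        _ ≤ (m * (a + b - m)) * t.prod := Nat.mul_le_mul_right _ (mul_le_smooth (le_of_lt ham) hbm)
        _ = m * ((a + b - m) * t.prod) := by ring
        _ ≤ m * m ^ d := Nat.mul_le_mul_left m key
        _ = m ^ (d+1) := by ring

lemma amgm_finset {α : Type*} (s : Finset α) (f : α → ℕ) (m : ℕ)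
    (h : ∑ x ∈ s, f x ≤ s.card * m) : ∏ x ∈ s, f x ≤ m ^ s.card := by
  have hlen : (s.toList.map f).length = s.card := by simp
  have hsum : (s.toList.map f).sum = ∑ x ∈ s, f x := by
    rw [← Finset.sum_map_toList]
  have hprod : (s.toList.map f).prod = ∏ x ∈ s, f x := by
    rw [← Finset.prod_map_toList]
  rw [← hprod]
  exact amgm_list m s.card _ hlen (by rw [hsum]; exact h)

/-- the unique element of `e` in block ℓ₀ (as a sum of a singleton). -/
def aVal (n : ℕ) (e : Finset ℕ) (ℓ₀ : ℕ) : ℕ :=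
  (e.filter (fun x => (ℓ₀ - 1) * n < x ∧ x ≤ ℓ₀ * n)).sum id

def Witness (r k n j : ℕ) (e : Finset ℕ) : Prop :=
  1 ≤ j ∧ j ≤ n ∧ constr2Interval r k j ⊆ e ∧
    (∀ x ∈ e, x ∈ constr2Interval r k j ∨
      ∃ ℓ, r - k + 3 ≤ ℓ ∧ ℓ ≤ r ∧ (ℓ - 1) * n < x ∧ x ≤ ℓ * n) ∧
    (∀ ℓ, r - k + 3 ≤ ℓ → ℓ ≤ r →
      (e.filter (fun x => (ℓ - 1) * n < x ∧ x ≤ ℓ * n)).card = 1)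

lemma mem_constr2 {r k n : ℕ} {e : Finset ℕ} :
    e ∈ constr2 r k n ↔ e ⊆ Finset.Icc 1 (r*n) ∧ e.card = r ∧ ∃ j, Witness r k n j e := by
  simp only [constr2, Finset.mem_filter, Finset.mem_powersetCard, Witness]
  constructor
  · rintro ⟨⟨h1, h2⟩, j, hj⟩; exact ⟨h1, h2, j, hj⟩
  · rintro ⟨h1, h2, j, hj⟩; exact ⟨⟨h1, h2⟩, j, hj⟩

lemma interval_bounds {r k j x : ℕ} (hj : 1 ≤ j) (hx : x ∈ constr2Interval r k j) :
    (r-k+2)*(j-1) < x ∧ x ≤ (r-k+2)*j := by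
  rw [constr2Interval, Finset.mem_Icc] at hx
  have := mul_pred_add (q := r-k+2) hj
  omega

lemma interval_card {r k j : ℕ} (hj : 1 ≤ j) :
    (constr2Interval r k j).card = r - k + 2 := by
  rw [constr2Interval, Nat.card_Icc]
  have h1 : (r-k+2) * 1 ≤ (r-k+2) * j := Nat.mul_le_mul_left _ hj
  omega

lemma interval_le_n {r k j n x : ℕ} (hj1 : 1 ≤ j) (hj : j ≤ n) (hx : x ∈ constr2Interval r k j) :
    x ≤ (r-k+2)*n := by
  have h := (interval_bounds hj1 hx).2
  have h2 : (r-k+2)*j ≤ (r-k+2)*n := Nat.mul_le_mul_left _ hj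
  omega

lemma lt_interval {r k j j' x y : ℕ} (h : j < j') (hj : 1 ≤ j)
    (hx : x ∈ constr2Interval r k j) (hy : y ∈ constr2Interval r k j') : x < y := by
  have h1 := (interval_bounds hj hx).2
  have h2 := (interval_bounds (by omega) hy).1
  have h3 : (r-k+2)*j ≤ (r-k+2)*(j'-1) := Nat.mul_le_mul_left _ (by omega)
  omega

lemma blocks_eq {n ℓ₁ ℓ₂ x : ℕ} (h1 : (ℓ₁-1)*n < x) (h2 : x ≤ ℓ₁*n)
    (h3 : (ℓ₂-1)*n < x) (h4 : x ≤ ℓ₂*n) : ℓ₁ = ℓ₂ := by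
  rcases lt_trichotomy ℓ₁ ℓ₂ with h|h|h
  · have := Nat.mul_le_mul_right n (show ℓ₁ ≤ ℓ₂ - 1 by omega); omega
  · exact h
  · have := Nat.mul_le_mul_right n (show ℓ₂ ≤ ℓ₁ - 1 by omega); omega

lemma block_gt {r k n ℓ₀ x : ℕ} (hℓ₀ : r - k + 3 ≤ ℓ₀) (hx : (ℓ₀-1)*n < x) :
    (r-k+2)*n < x := by
  have : (r-k+2)*n ≤ (ℓ₀-1)*n := Nat.mul_le_mul_right n (by omega)
  omega

lemma aVal_spec {r k n j : ℕ} {e : Finset ℕ} (hw : Witness r k n j e)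
    {ℓ₀ : ℕ} (h1 : r - k + 3 ≤ ℓ₀) (h2 : ℓ₀ ≤ r) :
    e.filter (fun x => (ℓ₀ - 1) * n < x ∧ x ≤ ℓ₀ * n) = {aVal n e ℓ₀} := by
  obtain ⟨a, ha⟩ := Finset.card_eq_one.mp (hw.2.2.2.2 ℓ₀ h1 h2)
  rw [aVal, ha]; simp

lemma aVal_mem {r k n j : ℕ} {e : Finset ℕ} (hw : Witness r k n j e)
    {ℓ₀ : ℕ} (h1 : r - k + 3 ≤ ℓ₀) (h2 : ℓ₀ ≤ r) :
    aVal n e ℓ₀ ∈ e ∧ (ℓ₀-1)*n < aVal n e ℓ₀ ∧ aVal n e ℓ₀ ≤ ℓ₀*n := by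
  have h := aVal_spec hw h1 h2
  have : aVal n e ℓ₀ ∈ e.filter (fun x => (ℓ₀ - 1) * n < x ∧ x ≤ ℓ₀ * n) := by
    rw [h]; exact Finset.mem_singleton_self _
  rw [Finset.mem_filter] at this
  tauto

lemma interval_unique {ℓ : ℕ} {J : ℕ → Finset ℕ}
    (hPrec : ∀ i i', i < i' → i' < ℓ → Precedes (J i) (J i'))
    {x i i' : ℕ} (hi : i < ℓ) (hi' : i' < ℓ) (hx : x ∈ J i) (hx' : x ∈ J i') : i = i' := by
  rcases lt_trichotomy i i' with h|h|h
  · exact absurd (hPrec i i' h hi' x hx x hx') (lt_irrefl x)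
  · exact h
  · exact absurd (hPrec i' i h hi x hx' x hx) (lt_irrefl x)

lemma cross {r k n : ℕ} (hk : 2 ≤ k) (hkr : k ≤ r) {ℓ : ℕ} (hkℓ : k ≤ ℓ) {J : ℕ → Finset ℕ}
    (hPrec : ∀ i i', i < i' → i' < ℓ → Precedes (J i) (J i'))
    {e e' : Finset ℕ} (hecard : e.card = r)
    {j j' : ℕ} (hje : Witness r k n j e) (hje' : Witness r k n j' e')
    (hecov : ∀ x ∈ e, ∃ i, i < ℓ ∧ x ∈ J i)
    (heint : ∀ i, i < ℓ → (e ∩ J i).Nonempty)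
    (he'int : ∀ i, i < ℓ → (e' ∩ J i).Nonempty)
    (hlt : j < j') : False := by
  classical
  obtain ⟨hj1, hjn, hIsub, hcov, hfil⟩ := hje
  -- choose a representative of e in each J i
  have hc : ∀ i, ∃ x, i < ℓ → (x ∈ e ∧ x ∈ J i) := by
    intro i
    by_cases h : i < ℓ
    · obtain ⟨x, hx⟩ := heint i h
      rw [Finset.mem_inter] at hx
      exact ⟨x, fun _ => hx⟩
    · exact ⟨0, fun h' => absurd h' h⟩
  choose c hcP using hc
  -- the set of indices whose representative avoids I_j has size ≤ k-2
  set T := (Finset.range ℓ).filter (fun i => c i ∉ constr2Interval r k j) with hT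
  have hTcard : T.card ≤ k - 2 := by
    have h1 : T.card ≤ (e \ constr2Interval r k j).card := by
      apply Finset.card_le_card_of_injOn c
      · intro i hi
        rw [hT, Finset.mem_coe, Finset.mem_filter, Finset.mem_range] at hi
        rw [Finset.mem_coe, Finset.mem_sdiff]
        exact ⟨(hcP i hi.1).1, hi.2⟩
      · intro i hi i' hi' hcc
        rw [hT, Finset.coe_filter] at hi hi'
        simp only [Set.mem_setOf_eq, Finset.mem_range] at hi hi'
        exact interval_unique hPrec hi.1 hi'.1 (hcP i hi.1).2 (hcc ▸ (hcP i' hi'.1).2)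
    have h2 : (e \ constr2Interval r k j).card = k - 2 := by
      rw [Finset.card_sdiff_of_subset hIsub, hecard, interval_card hj1]
      omega
    omega
  -- so at least two indices have representatives inside I_j
  have hScard : 2 ≤ ((Finset.range ℓ) \ T).card := by
    have hsub : T ⊆ Finset.range ℓ := by rw [hT]; exact Finset.filter_subset _ _
    have := Finset.card_sdiff_add_card_eq_card hsub
    rw [Finset.card_range] at this
    omega
  obtain ⟨i₁, hi₁, i₂, hi₂, hne⟩ := Finset.one_lt_card.mp (by omega : 1 < ((Finset.range ℓ) \ T).card)
  have hmem : ∀ i ∈ (Finset.range ℓ) \ T, i < ℓ ∧ c i ∈ constr2Interval r k j := by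
    intro i hi
    rw [Finset.mem_sdiff, hT, Finset.mem_filter, Finset.mem_range] at hi
    exact ⟨hi.1, by tauto⟩
  -- wlog i₁ < i₂
  have main : ∀ a b, a ∈ (Finset.range ℓ) \ T → b ∈ (Finset.range ℓ) \ T → a < b → False := by
    clear hi₁ hi₂ hne i₁ i₂
    intro i₁ i₂ hi₁ hi₂ hlt12
    obtain ⟨hi₁ℓ, hx₁⟩ := hmem i₁ hi₁
    obtain ⟨hi₂ℓ, hx₂⟩ := hmem i₂ hi₂
    have hx12 : c i₁ < c i₂ := hPrec i₁ i₂ hlt12 hi₂ℓ _ (hcP i₁ hi₁ℓ).2 _ (hcP i₂ hi₂ℓ).2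
    -- index function for elements of e
    have hfex : ∀ y, ∃ i, y ∈ e → (i < ℓ ∧ y ∈ J i) := by
      intro y
      by_cases h : y ∈ e
      · obtain ⟨i, hi⟩ := hecov y h; exact ⟨i, fun _ => hi⟩
      · exact ⟨0, fun h' => absurd h' h⟩
    choose f hfP using hfex
    -- every integer in [c i₁, c i₂] is in I_j (interval!) hence in e
    have hIj : ∀ y, c i₁ ≤ y → y ≤ c i₂ → y ∈ constr2Interval r k j := by
      intro y h1 h2
      rw [constr2Interval, Finset.mem_Icc] at hx₁ hx₂ ⊢
      omega
    have hye : ∀ y, c i₁ ≤ y → y ≤ c i₂ → y ∈ e := fun y h1 h2 => hIsub (hIj y h1 h2)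
    -- find a crossing
    have hcrossing : ∃ y, c i₁ ≤ y ∧ y + 1 ≤ c i₂ ∧ f y ≠ f (y+1) := by
      by_contra hcon
      push_neg at hcon
      have hconst : ∀ d, c i₁ + d ≤ c i₂ → f (c i₁) = f (c i₁ + d) := by
        intro d
        induction d with
        | zero => intro _; rfl
        | succ d ih =>
          intro hd
          rw [ih (by omega), show c i₁ + (d+1) = (c i₁ + d) + 1 by omega]
          exact hcon (c i₁ + d) (by omega) (by omega)
      have h2 := hconst (c i₂ - c i₁) (by omega)
      rw [show c i₁ + (c i₂ - c i₁) = c i₂ by omega] at h2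
      have hf1 := hfP (c i₁) (hye _ le_rfl (le_of_lt hx12))
      have hf2 := hfP (c i₂) (hye _ (le_of_lt hx12) le_rfl)
      have e1 : f (c i₁) = i₁ := interval_unique hPrec hf1.1 hi₁ℓ hf1.2 (hcP i₁ hi₁ℓ).2
      have e2 : f (c i₂) = i₂ := interval_unique hPrec hf2.1 hi₂ℓ hf2.2 (hcP i₂ hi₂ℓ).2
      omega
    obtain ⟨y, hy1, hy2, hyne⟩ := hcrossing
    have hyI : y ∈ constr2Interval r k j := hIj y hy1 (by omega)
    have hfy := hfP y (hye y hy1 (by omega))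
    have hfy1 := hfP (y+1) (hye (y+1) (by omega) hy2)
    set p := f y with hp
    set q := f (y+1) with hq
    have hpq : p < q := by
      rcases lt_trichotomy p q with h|h|h
      · exact h
      · exact absurd h hyne
      · exact absurd (hPrec q p h hfy.1 _ hfy1.2 _ hfy.2) (by omega)
    -- e' must meet J p, but all its elements exceed y ≥ everything in J p
    obtain ⟨w, hw⟩ := he'int p hfy.1
    rw [Finset.mem_inter] at hw
    have hwy : w ≤ y := by
      have := hPrec p q hpq hfy1.1 w hw.2 (y+1) hfy1.2
      omega
    obtain ⟨hj'1, hj'n, hI'sub, hcov', hfil'⟩ := hje'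
    have hyqj : y ≤ (r-k+2)*j := (interval_bounds hj1 hyI).2
    rcases hcov' w hw.1 with hwI' | ⟨ℓ₀, hℓ₀1, hℓ₀2, hb1, hb2⟩
    · exact absurd (lt_interval hlt hj1 hyI hwI') (by omega)
    · have h1 := block_gt hℓ₀1 hb1
      have h2 : (r-k+2)*j ≤ (r-k+2)*n := Nat.mul_le_mul_left _ hjn
      omega
  rcases hne.lt_or_gt with h|h
  · exact main i₁ i₂ hi₁ hi₂ h
  · exact main i₂ i₁ hi₂ hi₁ h

lemma common_witness {r k n : ℕ} (hk : 2 ≤ k) (hkr : k ≤ r) (hn : 1 ≤ n)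
    {H' : Finset (Finset ℕ)} (hsub : H' ⊆ constr2 r k n)
    (hKP : IntervalKPartite k H') :
    ∃ j, 1 ≤ j ∧ j ≤ n ∧ ∀ e ∈ H', Witness r k n j e := by
  rcases H'.eq_empty_or_nonempty with hemp | ⟨e₀, he₀⟩
  · exact ⟨1, le_refl 1, hn, by simp [hemp]⟩
  · obtain ⟨ℓ, hkℓ, J, _, hPrec, hedge⟩ := hKP
    obtain ⟨_, hcard₀, j₀, hw₀⟩ := mem_constr2.mp (hsub he₀)
    refine ⟨j₀, hw₀.1, hw₀.2.1, ?_⟩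
    intro e he
    obtain ⟨_, hcarde, je, hwe⟩ := mem_constr2.mp (hsub he)
    have hj : je = j₀ := by
      rcases lt_trichotomy je j₀ with h|h|h
      · exact absurd (cross hk hkr hkℓ hPrec hcarde hwe hw₀
          (fun x hx => by obtain ⟨i, hi, hxi⟩ := (hedge e he).1 x hx; exact ⟨i, hi, hxi⟩)
          (fun i hi => (hedge e he).2 i hi) (fun i hi => (hedge e₀ he₀).2 i hi) h) id
      · exact h
      · exact absurd (cross hk hkr hkℓ hPrec hcard₀ hw₀ hwe
          (fun x hx => by obtain ⟨i, hi, hxi⟩ := (hedge e₀ he₀).1 x hx; exact ⟨i, hi, hxi⟩)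
          (fun i hi => (hedge e₀ he₀).2 i hi) (fun i hi => (hedge e he).2 i hi) h) id
    exact hj ▸ hwe

lemma edge_eq {r k n j : ℕ} {e : Finset ℕ} (hw : Witness r k n j e) :
    e = constr2Interval r k j ∪ (Finset.Icc (r-k+3) r).image (aVal n e) := by
  classical
  obtain ⟨hj1, hjn, hIsub, hcov, hfil⟩ := hw
  ext x
  constructor
  · intro hx
    rcases hcov x hx with h | ⟨ℓ₀, h1, h2, hb1, hb2⟩
    · exact Finset.mem_union_left _ h
    · apply Finset.mem_union_right
      rw [Finset.mem_image]
      refine ⟨ℓ₀, Finset.mem_Icc.mpr ⟨h1, h2⟩, ?_⟩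
      have hx' : x ∈ e.filter (fun y => (ℓ₀ - 1) * n < y ∧ y ≤ ℓ₀ * n) :=
        Finset.mem_filter.mpr ⟨hx, hb1, hb2⟩
      rw [aVal_spec ⟨hj1, hjn, hIsub, hcov, hfil⟩ h1 h2, Finset.mem_singleton] at hx'
      omega
  · intro hx
    rcases Finset.mem_union.mp hx with h | h
    · exact hIsub h
    · rw [Finset.mem_image] at h
      obtain ⟨ℓ₀, hℓ₀, rfl⟩ := h
      rw [Finset.mem_Icc] at hℓ₀
      exact (aVal_mem ⟨hj1, hjn, hIsub, hcov, hfil⟩ hℓ₀.1 hℓ₀.2).1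

lemma window {r k n : ℕ} (hk : 2 ≤ k) (hkr : k ≤ r) {ℓ : ℕ} {J : ℕ → Finset ℕ}
    (hPrec : ∀ i i', i < i' → i' < ℓ → Precedes (J i) (J i'))
    {e : Finset ℕ} {j : ℕ} (hw : Witness r k n j e)
    (hecov : ∀ x ∈ e, ∃ i, i < ℓ ∧ x ∈ J i)
    (heint : ∀ i, i < ℓ → (e ∩ J i).Nonempty)
    {ℓ₀ : ℕ} (hℓ₀1 : r - k + 3 ≤ ℓ₀) (hℓ₀2 : ℓ₀ ≤ r)
    {i : ℕ} (hi : i < ℓ) (hai : aVal n e ℓ₀ ∈ J i) : ℓ ≤ i + (k - 2) := by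
  classical
  obtain ⟨hxe, hxb1, hxb2⟩ := aVal_mem hw hℓ₀1 hℓ₀2
  set x := aVal n e ℓ₀ with hxdef
  obtain ⟨hj1, hjn, hIsub, hcov, hfil⟩ := hw
  -- for each i' with i < i' < ℓ, pick z ∈ e ∩ J i' and its block ℓz > ℓ₀
  have hz : ∀ i', ∃ z ℓz, (i < i' → i' < ℓ →
      (z ∈ e ∧ z ∈ J i' ∧ ℓ₀ + 1 ≤ ℓz ∧ ℓz ≤ r ∧ (ℓz-1)*n < z ∧ z ≤ ℓz*n)) := by
    intro i'
    by_cases h : i < i' ∧ i' < ℓ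
    · obtain ⟨z, hz⟩ := heint i' h.2
      rw [Finset.mem_inter] at hz
      have hzx : x < z := hPrec i i' h.1 h.2 x hai z hz.2
      rcases hcov z hz.1 with hzI | ⟨ℓz, h1, h2, hb1, hb2⟩
      · -- impossible: z ≤ (r-k+2)n < x
        have hle := interval_le_n hj1 hjn hzI
        have := block_gt hℓ₀1 hxb1
        omega
      · refine ⟨z, ℓz, fun _ _ => ⟨hz.1, hz.2, ?_, h2, hb1, hb2⟩⟩
        -- ℓz ≥ ℓ₀ + 1
        by_contra hcon
        push_neg at hcon
        rcases lt_or_eq_of_le (show ℓz ≤ ℓ₀ by omega) with hlt' | heq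
        · have : ℓz * n ≤ (ℓ₀ - 1) * n := Nat.mul_le_mul_right n (by omega)
          omega
        · subst heq
          have : z ∈ e.filter (fun y => (ℓz - 1) * n < y ∧ y ≤ ℓz * n) :=
            Finset.mem_filter.mpr ⟨hz.1, hb1, hb2⟩
          rw [aVal_spec ⟨hj1, hjn, hIsub, hcov, hfil⟩ h1 h2, Finset.mem_singleton] at this
          omega
    · exact ⟨0, 0, fun h1 h2 => absurd ⟨h1, h2⟩ h⟩
  choose z ℓz hprop using hz
  have hcardle : (Finset.Ico (i+1) ℓ).card ≤ (Finset.Icc (ℓ₀+1) r).card := by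
    apply Finset.card_le_card_of_injOn ℓz
    · intro i' hi'
      rw [Finset.mem_coe, Finset.mem_Ico] at hi'
      obtain ⟨_, _, h3, h4, _, _⟩ := hprop i' (by omega) hi'.2
      exact Finset.mem_Icc.mpr ⟨h3, h4⟩
    · intro a ha b hb hab
      simp only [Finset.coe_Ico, Set.mem_Ico] at ha hb
      obtain ⟨hza, hzJa, _, h4a, hba1, hba2⟩ := hprop a (by omega) ha.2
      obtain ⟨hzb, hzJb, h3b, h4b, hbb1, hbb2⟩ := hprop b (by omega) hb.2
      by_contra hne
      have hzz : z a ≠ z b := by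
        intro hzeq
        exact hne (interval_unique hPrec ha.2 hb.2 hzJa (hzeq ▸ hzJb))
      have h1 : z a ∈ e.filter (fun y => (ℓz a - 1) * n < y ∧ y ≤ ℓz a * n) :=
        Finset.mem_filter.mpr ⟨hza, hba1, hba2⟩
      have h2 : z b ∈ e.filter (fun y => (ℓz a - 1) * n < y ∧ y ≤ ℓz a * n) := by
        rw [hab]; exact Finset.mem_filter.mpr ⟨hzb, hbb1, hbb2⟩
      obtain ⟨w, hwone⟩ := Finset.card_eq_one.mp (hfil (ℓz a)
        (by rw [hab]; omega) (hab ▸ h4b))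
      rw [hwone, Finset.mem_singleton] at h1 h2
      exact hzz (h1.trans h2.symm)
  rw [Nat.card_Ico, Nat.card_Icc] at hcardle
  omega

lemma part3 {r k n m : ℕ} (hk : 2 ≤ k) (hkr : k ≤ r) (hn : 1 ≤ n)
    {H' : Finset (Finset ℕ)} (hsub : H' ⊆ constr2 r k n) (hm : 1 ≤ m)
    (hKPB : IntervalKPartiteB k m H') : H'.card ≤ m ^ (k-2) := by
  classical
  obtain ⟨ℓ, hkℓ, J, hInt, hJcard, hPrec, hedge⟩ := hKPB
  have hKP : IntervalKPartite k H' := ⟨ℓ, hkℓ, J, hInt, hPrec, hedge⟩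
  obtain ⟨j, hj1, hjn, hwit⟩ := common_witness hk hkr hn hsub hKP
  set s := Finset.Icc (r-k+3) r with hs
  have hscard : s.card = k - 2 := by rw [hs, Nat.card_Icc]; omega
  set V : ℕ → Finset ℕ := fun ℓ₀ => H'.image (fun e => aVal n e ℓ₀) with hV
  have hinj : H'.card ≤ ∏ ℓ₀ ∈ s, (V ℓ₀).card := by
    rw [← Finset.card_pi]
    apply Finset.card_le_card_of_injOn (fun e => fun ℓ₀ _ => aVal n e ℓ₀)
    · intro e he
      rw [Finset.mem_coe, Finset.mem_pi]
      intro ℓ₀ hℓ₀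
      exact Finset.mem_image_of_mem _ he
    · intro e he e' he' heq
      have hfun : ∀ ℓ₀ ∈ s, aVal n e ℓ₀ = aVal n e' ℓ₀ :=
        fun ℓ₀ h => congrFun (congrFun heq ℓ₀) h
      have him : s.image (aVal n e) = s.image (aVal n e') := Finset.image_congr hfun
      calc e = constr2Interval r k j ∪ s.image (aVal n e) :=
            edge_eq (hwit e (Finset.mem_coe.mp he))
        _ = constr2Interval r k j ∪ s.image (aVal n e') := by rw [him]
        _ = e' := (edge_eq (hwit e' (Finset.mem_coe.mp he'))).symm
  have hsum : ∑ ℓ₀ ∈ s, (V ℓ₀).card ≤ s.card * m := by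
    have hdisj : ∀ ℓ₀ ∈ s, ∀ ℓ₁ ∈ s, ℓ₀ ≠ ℓ₁ → Disjoint (V ℓ₀) (V ℓ₁) := by
      intro ℓ₀ h₀ ℓ₁ h₁ hne
      rw [hs, Finset.mem_Icc] at h₀ h₁
      rw [Finset.disjoint_left]
      intro v hv0 hv1
      rw [hV, Finset.mem_image] at hv0 hv1
      obtain ⟨e, he, rfl⟩ := hv0
      obtain ⟨e', he', heq'⟩ := hv1
      have hm0 := aVal_mem (hwit e he) h₀.1 h₀.2
      have hm1 := aVal_mem (hwit e' he') h₁.1 h₁.2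
      rw [heq'] at hm1
      exact hne (blocks_eq hm0.2.1 hm0.2.2 hm1.2.1 hm1.2.2)
    have hbU : ∑ ℓ₀ ∈ s, (V ℓ₀).card = (s.biUnion V).card := (Finset.card_biUnion hdisj).symm
    set U := (Finset.Ico (ℓ-(k-2)) ℓ).biUnion J with hU
    have hsubU : s.biUnion V ⊆ U := by
      intro v hv
      rw [Finset.mem_biUnion] at hv
      obtain ⟨ℓ₀, hℓ₀, hv⟩ := hv
      rw [hV, Finset.mem_image] at hv
      obtain ⟨e, he, rfl⟩ := hv
      rw [hs, Finset.mem_Icc] at hℓ₀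
      have hve := (aVal_mem (hwit e he) hℓ₀.1 hℓ₀.2).1
      obtain ⟨i, hi, hvi⟩ := (hedge e he).1 _ hve
      have hwin := window hk hkr hPrec (hwit e he)
        (fun x hx => by obtain ⟨i', hi', h⟩ := (hedge e he).1 x hx; exact ⟨i', hi', h⟩)
        (fun i' hi' => (hedge e he).2 i' hi') hℓ₀.1 hℓ₀.2 hi hvi
      rw [hU, Finset.mem_biUnion]
      exact ⟨i, Finset.mem_Ico.mpr ⟨by omega, hi⟩, hvi⟩
    have hUcard : U.card ≤ (k-2) * m := by
      calc U.card ≤ ∑ i ∈ Finset.Ico (ℓ-(k-2)) ℓ, (J i).card := Finset.card_biUnion_le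
        _ ≤ (Finset.Ico (ℓ-(k-2)) ℓ).card * m := by
            rw [← smul_eq_mul]
            exact Finset.sum_le_card_nsmul _ _ m
              (fun i hi => hJcard i (Finset.mem_Ico.mp hi).2)
        _ ≤ (k-2) * m := by
            apply Nat.mul_le_mul_right
            rw [Nat.card_Ico]; omega
    rw [hbU, hscard]
    exact le_trans (Finset.card_le_card hsubU) hUcard
  calc H'.card ≤ ∏ ℓ₀ ∈ s, (V ℓ₀).card := hinj
    _ ≤ m ^ s.card := amgm_finset s _ m hsum
    _ = m ^ (k-2) := by rw [hscard]

lemma card_constr2 {r k n : ℕ} (hk : 2 ≤ k) (hkr : k ≤ r) (hn : 1 ≤ n) :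
    (constr2 r k n).card = n ^ (k-1) := by
  classical
  set s := Finset.Icc (r-k+3) r with hs
  have hscard : s.card = k - 2 := by rw [hs, Nat.card_Icc]; omega
  have hsmem : ∀ ℓ₀ ∈ s, r - k + 3 ≤ ℓ₀ ∧ ℓ₀ ≤ r := by
    intro ℓ₀ h; rw [hs, Finset.mem_Icc] at h; exact h
  set T := (Finset.Icc 1 n) ×ˢ (s.pi (fun ℓ₀ => Finset.Ioc ((ℓ₀-1)*n) (ℓ₀*n))) with hT
  have hTcard : T.card = n ^ (k-1) := by
    rw [hT, Finset.card_product, Finset.card_pi]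
    have h1 : ∀ ℓ₀ ∈ s, (Finset.Ioc ((ℓ₀-1)*n) (ℓ₀*n)).card = n := by
      intro ℓ₀ hℓ₀
      obtain ⟨ha, hb⟩ := hsmem ℓ₀ hℓ₀
      rw [Nat.card_Ioc]
      have h := mul_pred_add (q := n) (j := ℓ₀) (by omega)
      have c1 : ℓ₀ * n = n * ℓ₀ := Nat.mul_comm _ _
      have c2 : (ℓ₀-1) * n = n * (ℓ₀-1) := Nat.mul_comm _ _
      omega
    rw [Finset.prod_congr rfl h1, Finset.prod_const, hscard, Nat.card_Icc]
    rw [show n+1-1 = n by omega, show k-1 = (k-2)+1 by omega, pow_succ]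
    ring
  have key : T.card = (constr2 r k n).card := by
    apply Finset.card_bij
      (fun p _ => constr2Interval r k p.1 ∪ s.attach.image (fun t => p.2 t.1 t.2))
    -- maps into constr2
    · intro p hp
      rw [hT, Finset.mem_product, Finset.mem_pi] at hp
      obtain ⟨hp1, hp2⟩ := hp
      rw [Finset.mem_Icc] at hp1
      have hpblock : ∀ (ℓ₀ : ℕ) (h : ℓ₀ ∈ s), (ℓ₀-1)*n < p.2 ℓ₀ h ∧ p.2 ℓ₀ h ≤ ℓ₀*n := by
        intro ℓ₀ h
        have := hp2 ℓ₀ h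
        rw [Finset.mem_Ioc] at this
        exact this
      rw [mem_constr2]
      refine ⟨?_, ?_, p.1, hp1.1, hp1.2, Finset.subset_union_left, ?_, ?_⟩
      · -- subset of Icc 1 (r*n)
        intro x hx
        rw [Finset.mem_Icc]
        rcases Finset.mem_union.mp hx with h | h
        · have hb := interval_bounds hp1.1 h
          have h2 : (r-k+2)*p.1 ≤ (r-k+2)*n := Nat.mul_le_mul_left _ hp1.2
          have h3 : (r-k+2)*n ≤ r*n := Nat.mul_le_mul_right n (by omega)
          omega
        · rw [Finset.mem_image] at h
          obtain ⟨t, _, rfl⟩ := h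
          have hb := hpblock t.1 t.2
          have ht := hsmem t.1 t.2
          have h3 : t.1*n ≤ r*n := Nat.mul_le_mul_right n ht.2
          omega
      · -- card = r
        have hdisj : Disjoint (constr2Interval r k p.1)
            (s.attach.image (fun t => p.2 t.1 t.2)) := by
          rw [Finset.disjoint_left]
          intro x hx hx'
          rw [Finset.mem_image] at hx'
          obtain ⟨t, _, heq⟩ := hx'
          have hb := hpblock t.1 t.2
          have ht := hsmem t.1 t.2
          have h1 := interval_le_n hp1.1 hp1.2 hx
          have h2 := block_gt ht.1 (heq ▸ hb.1)
          omega
        rw [Finset.card_union_of_disjoint hdisj, interval_card hp1.1,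
          Finset.card_image_of_injOn, Finset.card_attach, hscard]
        · omega
        · intro a _ b _ hab
          have hab' : p.2 a.1 a.2 = p.2 b.1 b.2 := hab
          have hba := hpblock a.1 a.2
          have hbb := hpblock b.1 b.2
          rw [hab'] at hba
          exact Subtype.ext (blocks_eq hba.1 hba.2 hbb.1 hbb.2)
      · -- cover
        intro x hx
        rcases Finset.mem_union.mp hx with h | h
        · exact Or.inl h
        · rw [Finset.mem_image] at h
          obtain ⟨t, _, rfl⟩ := h
          have hb := hpblock t.1 t.2
          have ht := hsmem t.1 t.2
          exact Or.inr ⟨t.1, ht.1, ht.2, hb.1, hb.2⟩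
      · -- filters
        intro ℓ' h1 h2
        have hℓ's : ℓ' ∈ s := by rw [hs, Finset.mem_Icc]; exact ⟨h1, h2⟩
        have hveq : (constr2Interval r k p.1 ∪
            s.attach.image (fun t => p.2 t.1 t.2)).filter
              (fun x => (ℓ'-1)*n < x ∧ x ≤ ℓ'*n) = {p.2 ℓ' hℓ's} := by
          ext x
          rw [Finset.mem_filter, Finset.mem_singleton]
          constructor
          · rintro ⟨hx, hb1, hb2⟩
            rcases Finset.mem_union.mp hx with h | h
            · exfalso
              have hle := interval_le_n hp1.1 hp1.2 h
              have := block_gt h1 hb1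
              omega
            · rw [Finset.mem_image] at h
              obtain ⟨t, _, rfl⟩ := h
              have hb := hpblock t.1 t.2
              have : t.1 = ℓ' := blocks_eq hb.1 hb.2 hb1 hb2
              cases t with
              | mk tv tp =>
                simp only at this ⊢
                subst this
                rfl
          · rintro rfl
            have hb := hpblock ℓ' hℓ's
            refine ⟨Finset.mem_union_right _ ?_, hb.1, hb.2⟩
            rw [Finset.mem_image]
            exact ⟨⟨ℓ', hℓ's⟩, Finset.mem_attach _ _, rfl⟩
        rw [hveq, Finset.card_singleton]
    -- injective
    · intro p hp p' hp' heq
      rw [hT, Finset.mem_product, Finset.mem_pi] at hp hp'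
      obtain ⟨hp1, hp2⟩ := hp
      obtain ⟨hp1', hp2'⟩ := hp'
      rw [Finset.mem_Icc] at hp1 hp1'
      have hpblock : ∀ (ℓ₀ : ℕ) (h : ℓ₀ ∈ s), (ℓ₀-1)*n < p.2 ℓ₀ h ∧ p.2 ℓ₀ h ≤ ℓ₀*n := by
        intro ℓ₀ h; have := hp2 ℓ₀ h; rw [Finset.mem_Ioc] at this; exact this
      have hpblock' : ∀ (ℓ₀ : ℕ) (h : ℓ₀ ∈ s), (ℓ₀-1)*n < p'.2 ℓ₀ h ∧ p'.2 ℓ₀ h ≤ ℓ₀*n := by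
        intro ℓ₀ h; have := hp2' ℓ₀ h; rw [Finset.mem_Ioc] at this; exact this
      -- a membership transfer
      have hmemeq : ∀ x, x ∈ constr2Interval r k p.1 ∪ s.attach.image (fun t => p.2 t.1 t.2) ↔
          x ∈ constr2Interval r k p'.1 ∪ s.attach.image (fun t => p'.2 t.1 t.2) := by
        intro x; rw [heq]
      -- first components equal
      have hfst : p.1 = p'.1 := by
        have hxI : (r-k+2)*p.1 ∈ constr2Interval r k p.1 := by
          rw [constr2Interval, Finset.mem_Icc]; omega
        have hx' := (hmemeq _).mp (Finset.mem_union_left _ hxI)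
        have hle : (r-k+2)*p.1 ≤ (r-k+2)*n := Nat.mul_le_mul_left _ hp1.2
        rcases Finset.mem_union.mp hx' with h | h
        · rcases lt_trichotomy p.1 p'.1 with hc|hc|hc
          · exact absurd (lt_interval hc hp1.1 hxI h) (lt_irrefl _)
          · exact hc
          · exact absurd (lt_interval hc hp1'.1 h hxI) (lt_irrefl _)
        · exfalso
          rw [Finset.mem_image] at h
          obtain ⟨t, _, heqt⟩ := h
          have hb := hpblock' t.1 t.2
          have ht := hsmem t.1 t.2
          have := block_gt ht.1 (heqt ▸ hb.1)
          have hIle := interval_le_n hp1.1 hp1.2 hxI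
          omega
      -- second components equal
      have hsnd : ∀ (ℓ₀ : ℕ) (h : ℓ₀ ∈ s), p.2 ℓ₀ h = p'.2 ℓ₀ h := by
        intro ℓ₀ h
        have hb := hpblock ℓ₀ h
        have hℓ₀ := hsmem ℓ₀ h
        have hx' : p.2 ℓ₀ h ∈ constr2Interval r k p'.1 ∪
            s.attach.image (fun t => p'.2 t.1 t.2) :=
          (hmemeq (p.2 ℓ₀ h)).mp (Finset.mem_union_right _
            (Finset.mem_image.mpr ⟨⟨ℓ₀, h⟩, Finset.mem_attach _ _, rfl⟩))
        rcases Finset.mem_union.mp hx' with hcase | hcase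
        · exfalso
          have hle := interval_le_n hp1'.1 hp1'.2 hcase
          have := block_gt hℓ₀.1 hb.1
          omega
        · rw [Finset.mem_image] at hcase
          obtain ⟨t, _, heqt⟩ := hcase
          have heqt' : p'.2 t.1 t.2 = p.2 ℓ₀ h := heqt
          have hb' := hpblock' t.1 t.2
          have : t.1 = ℓ₀ := blocks_eq (heqt' ▸ hb'.1) (heqt' ▸ hb'.2) hb.1 hb.2
          cases t with
          | mk tv tp =>
            simp only at this heqt'
            subst this
            exact heqt'.symm
      exact Prod.ext hfst (by funext ℓ₀ h; exact hsnd ℓ₀ h)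
    -- surjective
    · intro e he
      rw [mem_constr2] at he
      obtain ⟨hsub, hcard, j, hw⟩ := he
      refine ⟨(j, fun ℓ₀ h => aVal n e ℓ₀), ?_, ?_⟩
      · rw [hT, Finset.mem_product, Finset.mem_pi]
        constructor
        · rw [Finset.mem_Icc]; exact ⟨hw.1, hw.2.1⟩
        · intro ℓ₀ h
          have := aVal_mem hw (hsmem ℓ₀ h).1 (hsmem ℓ₀ h).2
          rw [Finset.mem_Ioc]
          exact ⟨this.2.1, this.2.2⟩
      · have himg : s.attach.image (fun t => aVal n e t.1) = s.image (aVal n e) := by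
          ext x
          simp [Finset.mem_image]
        simp only
        rw [himg]
        exact (edge_eq hw).symm
  rw [← key]
  exact hTcard

end AuxConstr2

/-- Construction 2: e(constr2 r k n) = n^{k-1}; every interval k-partite subgraph H'
has all its edges containing a common I_j, and hence e(H') ≤ m^{k-2} whenever all
parts of H' have size at most m ≥ 1. -/
theorem constr2_properties (r k n : ℕ) (hk : 2 ≤ k) (hkr : k ≤ r) (hn : 1 ≤ n) :
    (constr2 r k n).card = n ^ (k - 1) ∧
    ∀ H' ⊆ constr2 r k n,
      (IntervalKPartite k H' →
        ∃ j, 1 ≤ j ∧ j ≤ n ∧ ∀ e ∈ H', constr2Interval r k j ⊆ e) ∧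
      (∀ m : ℕ, 1 ≤ m → IntervalKPartiteB k m H' → H'.card ≤ m ^ (k - 2)) := by
  refine ⟨card_constr2 hk hkr hn, ?_⟩
  intro H' hsub
  constructor
  · intro hKP
    obtain ⟨j, h1, h2, hw⟩ := common_witness hk hkr hn hsub hKP
    exact ⟨j, h1, h2, fun e he => (hw e he).2.2.1⟩
  · intro m hm hKPB
    exact part3 hk hkr hn hsub hm hKPB
end
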